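/- arXiv:1210.0881 — 12 statements merged into one kernel-verified Lean document; each statement's English description precedes it below -/
import Mathlib

section
/- Let q be a prime power with q ≡ 1 (mod 4) and let f(x) = x^{q−2} + x^{q²−q−1}. Then f is a permutation polynomial of 𝔽_{q²}. -/
/-- Case (i): let `q` be a prime power with `q ≡ 1 (mod 4)` and
`f(x) = x^(q-2) + x^(q²-q-1)`. Then `f` is a permutation polynomial of `𝔽_{q²}`. -/
theorem stmt_1 (p m q : ℕ) (hp : p.Prime) (hq : q = p ^ m) (hq2 : 2 < q)
    (hq4 : q % 4 = 1)
    (K : Type) [Field K] [Fintype K] (hK : Fintype.card K = q ^ 2) :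
    Function.Bijective (fun x : K => x ^ (q - 2) + x ^ (q ^ 2 - q - 1)) := by
  -- basic numerics
  have hq1 : 1 ≤ q := by omega
  have hqq : q * q = q ^ 2 := by ring
  have hle1 : q + 2 ≤ q ^ 2 := by nlinarith
  have hle2 : 2 * q ≤ q ^ 2 := by nlinarith
  -- characteristic
  have hpodd : p ≠ 2 := by
    rintro rfl
    have hm : m ≠ 0 := by rintro rfl; simp at hq; omega
    have : 2 ∣ q := hq ▸ dvd_pow_self 2 hm
    omega
  have hcharK : CharP K p := by
    haveI := ringChar.charP K
    obtain ⟨n, hrp, hcard⟩ := FiniteField.card K (ringChar K)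
    have hdvd : ringChar K ∣ q ^ 2 := by
      rw [← hK, hcard]
      exact dvd_pow_self _ (by exact_mod_cast n.pos.ne')
    have hrKp : ringChar K = p := by
      have : ringChar K ∣ p := by
        rw [hq, ← pow_mul] at hdvd
        exact hrp.dvd_of_dvd_pow hdvd
      exact (Nat.prime_dvd_prime_iff_eq hrp hp).mp this
    rw [← hrKp]; exact ringChar.charP K
  haveI := hcharK
  haveI : Fact p.Prime := ⟨hp⟩
  have hpow1 : ∀ x : K, x ≠ 0 → x ^ (q ^ 2 - 1) = 1 := by
    intro x hx
    have := FiniteField.pow_card_sub_one_eq_one x hx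
    rwa [hK] at this
  -- key identity (1): f x * x^q = (x^(q-1))^2 + 1
  have key1 : ∀ x : K, x ≠ 0 →
      (x ^ (q - 2) + x ^ (q ^ 2 - q - 1)) * x ^ q = (x ^ (q - 1)) ^ 2 + 1 := by
    intro x hx
    have e1 : q - 2 + q = (q - 1) * 2 := by omega
    have e2 : q ^ 2 - q - 1 + q = q ^ 2 - 1 := by omega
    rw [add_mul, ← pow_add, ← pow_add, e1, e2, pow_mul, hpow1 x hx]
  -- nonzero values are nonzero (uses q ≡ 1 mod 4)
  have keyne : ∀ x : K, x ≠ 0 → x ^ (q - 2) + x ^ (q ^ 2 - q - 1) ≠ 0 := by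
    intro x hx hc
    have h1 := key1 x hx
    rw [hc, zero_mul] at h1
    set u : K := x ^ (q - 1) with hu
    have hu2 : u ^ 2 = -1 := by linear_combination -h1
    have huq : u ^ (q + 1) = 1 := by
      rw [hu, ← pow_mul]
      have e3 : (q - 1) * (q + 1) = q ^ 2 - 1 := by
        zify [hq1, show 1 ≤ q ^ 2 by omega]; ring
      rw [e3]; exact hpow1 x hx
    obtain ⟨k, hk⟩ : ∃ k, q + 1 = 4 * k + 2 := ⟨q / 4, by omega⟩
    rw [hk, pow_add, pow_mul] at huq
    have hu4 : u ^ 4 = 1 := by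
      have h4 : u ^ 4 = (u ^ 2) ^ 2 := by ring
      rw [h4, hu2]; ring
    rw [hu4, one_pow, one_mul, hu2] at huq
    have h2K : (2 : K) = 0 := by linear_combination -huq
    have h2 : (p : ℕ) ∣ 2 := (CharP.cast_eq_zero_iff K p 2).mp (by exact_mod_cast h2K)
    exact hpodd ((Nat.prime_dvd_prime_iff_eq hp Nat.prime_two).mp h2)
  -- freshman's dream for exponent q
  have frob_add : ∀ a b : K, (a + b) ^ q = a ^ q + b ^ q := by
    intro a b; rw [hq]; exact add_pow_char_pow a b p m
  have frob_inj : ∀ a b : K, a ^ q = b ^ q → a = b := by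
    intro a b h
    have h0 : (a - b) ^ q = 0 := by rw [hq, sub_pow_char_pow, ← hq, h, sub_self]
    have h1 : a - b = 0 := pow_eq_zero_iff (by omega : q ≠ 0) |>.mp h0
    exact sub_eq_zero.mp h1
  -- key identity (3): c^q * (x * (x^(q-1))^2) = c * x^q
  have key3 : ∀ x : K, x ≠ 0 →
      ((x ^ (q - 2) + x ^ (q ^ 2 - q - 1)) ^ q) * (x * (x ^ (q - 1)) ^ 2)
        = (x ^ (q - 2) + x ^ (q ^ 2 - q - 1)) * x ^ q := by
    intro x hx
    rw [key1 x hx, frob_add, ← pow_mul, ← pow_mul]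
    have e1 : (q - 2) * q + (1 + (q - 1) * 2) = q ^ 2 - 1 := by
      have h := Nat.sub_mul q 2 q
      omega
    have e2 : (q ^ 2 - q - 1) * q + (1 + (q - 1) * 2)
        = (q ^ 2 - 1) * (q - 1) + (q - 1) * 2 := by
      zify [hq1, show q ≤ q ^ 2 by omega, show 1 ≤ q ^ 2 - q by omega,
        show 1 ≤ q ^ 2 by omega]
      ring
    have hxe : x * (x ^ (q - 1)) ^ 2 = x ^ (1 + (q - 1) * 2) := by
      rw [pow_add, pow_one, pow_mul]
    rw [hxe, add_mul, ← pow_add, ← pow_add, e1, e2, hpow1 x hx, pow_add, pow_mul,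
      hpow1 x hx, one_pow, one_mul, pow_mul]
    ring
  -- injectivity
  have hinj : Function.Injective (fun x : K => x ^ (q - 2) + x ^ (q ^ 2 - q - 1)) := by
    intro a b hab
    have hab : a ^ (q - 2) + a ^ (q ^ 2 - q - 1)
        = b ^ (q - 2) + b ^ (q ^ 2 - q - 1) := hab
    have hzero : (0 : K) ^ (q - 2) + (0 : K) ^ (q ^ 2 - q - 1) = 0 := by
      rw [zero_pow (by omega : q - 2 ≠ 0), zero_pow (by omega : q ^ 2 - q - 1 ≠ 0), add_zero]
    by_cases ha : a = 0
    · by_cases hb : b = 0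
      · rw [ha, hb]
      · exfalso; exact keyne b hb (by rw [← hab, ha, hzero])
    · by_cases hb : b = 0
      · exfalso; exact keyne a ha (by rw [hab, hb, hzero])
      · set c : K := a ^ (q - 2) + a ^ (q ^ 2 - q - 1) with hc
        have hcb : c = b ^ (q - 2) + b ^ (q ^ 2 - q - 1) := hab
        have hcne : c ≠ 0 := keyne a ha
        have step : ∀ x : K, x ≠ 0 → c = x ^ (q - 2) + x ^ (q ^ 2 - q - 1) →
            c ^ (q - 1) * x ^ (q - 1) = 1 := by
          intro x hx hcx
          have h3 := key3 x hx
          rw [← hcx] at h3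
          have hxq : x ^ q = x ^ (q - 1) * x := by rw [← pow_succ]; congr 1; omega
          have hcq : c ^ q = c ^ (q - 1) * c := by rw [← pow_succ]; congr 1; omega
          rw [hxq, hcq] at h3
          have h4 : c ^ (q - 1) * (x * (x ^ (q - 1)) ^ 2) = x ^ (q - 1) * x :=
            mul_left_cancel₀ hcne (by linear_combination h3)
          have hxx : x * x ^ (q - 1) ≠ 0 := mul_ne_zero hx (pow_ne_zero _ hx)
          have h5 : (c ^ (q - 1) * x ^ (q - 1)) * (x * x ^ (q - 1))
              = 1 * (x * x ^ (q - 1)) := by linear_combination h4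
          exact mul_right_cancel₀ hxx h5
        have h1 := step a ha rfl
        have h2 := step b hb hcb
        have hcq1 : c ^ (q - 1) ≠ 0 := pow_ne_zero _ hcne
        have huv : a ^ (q - 1) = b ^ (q - 1) :=
          mul_left_cancel₀ hcq1 (h1.trans h2.symm)
        have hA := key1 a ha
        have hB := key1 b hb
        rw [← hc] at hA
        rw [← hcb] at hB
        rw [huv] at hA
        have hq' : a ^ q = b ^ q := mul_left_cancel₀ hcne (hA.trans hB.symm)
        exact frob_inj a b hq'
  exact Finite.injective_iff_bijective.mp hinj
end

section
/- Let q be a prime power with q ≡ 1 (mod 12) or q ≡ −1 (mod 12), and let f(x) = x^{q−2} − 3·x^{q²−q−1} (i.e., t = −3 in 𝔽_q). Then f is a permutation polynomial of 𝔽_{q²}. -/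
/-- Key injectivity lemma on the "unit circle" `u^q * u = 1`:
if `u,v` satisfy the quadric `u² + v² - 8uv - 3u²v² - 3 = 0` they are equal. -/
lemma stmt_2_aux (q : ℕ) (K : Type) [Field K]
    (h2K : (2:K) ≠ 0)
    (i : K) (hi : i^2 = -1)
    (frob : ∀ a b : K, (a+b)^q = a^q + b^q)
    (hq12 : q % 12 = 1 ∨ q % 12 = 11)
    (u v : K) (hu : u^q * u = 1) (hv : v^q * v = 1)
    (hQ : u^2 + v^2 - 8*u*v - 3*u^2*v^2 - 3 = 0) : u = v := by
  have h4K : (4:K) ≠ 0 := by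
    intro h
    apply h2K
    have : (2:K) * 2 = 0 := by linear_combination h
    rcases mul_eq_zero.mp this with h' | h' <;> exact h'
  have hi0 : i ≠ 0 := by
    intro h
    rw [h] at hi
    simp at hi
  -- corner cases u = ±i, v = ±i
  rcases eq_or_ne u i with h | hui
  · have hu2 : u^2 = -1 := by rw [h]; exact hi
    have h4 : (4:K) * (v - u)^2 = 0 := by linear_combination hQ + (3*(v^2+1))*hu2
    have := pow_eq_zero_iff (n := 2) (by norm_num) |>.mp ((mul_eq_zero.mp h4).resolve_left h4K)
    exact (sub_eq_zero.mp this).symm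
  rcases eq_or_ne u (-i) with h | hui'
  · have hu2 : u^2 = -1 := by rw [h]; linear_combination hi
    have h4 : (4:K) * (v - u)^2 = 0 := by linear_combination hQ + (3*(v^2+1))*hu2
    have := pow_eq_zero_iff (n := 2) (by norm_num) |>.mp ((mul_eq_zero.mp h4).resolve_left h4K)
    exact (sub_eq_zero.mp this).symm
  rcases eq_or_ne v i with h | hvi
  · have hv2 : v^2 = -1 := by rw [h]; exact hi
    have h4 : (4:K) * (u - v)^2 = 0 := by linear_combination hQ + (3*(u^2+1))*hv2
    have := pow_eq_zero_iff (n := 2) (by norm_num) |>.mp ((mul_eq_zero.mp h4).resolve_left h4K)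
    exact sub_eq_zero.mp this
  rcases eq_or_ne v (-i) with h | hvi'
  · have hv2 : v^2 = -1 := by rw [h]; linear_combination hi
    have h4 : (4:K) * (u - v)^2 = 0 := by linear_combination hQ + (3*(u^2+1))*hv2
    have := pow_eq_zero_iff (n := 2) (by norm_num) |>.mp ((mul_eq_zero.mp h4).resolve_left h4K)
    exact sub_eq_zero.mp this
  -- main case
  have haui : u - i ≠ 0 := sub_ne_zero.mpr hui
  have haui' : u + i ≠ 0 := fun h => hui' (eq_neg_of_add_eq_zero_left h)
  have hbvi : v - i ≠ 0 := sub_ne_zero.mpr hvi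
  have hbvi' : v + i ≠ 0 := fun h => hvi' (eq_neg_of_add_eq_zero_left h)
  set a : K := (u+i)/(u-i) with ha_def
  set b : K := (v+i)/(v-i) with hb_def
  have ha0 : a ≠ 0 := div_ne_zero haui' haui
  have hb0 : b ≠ 0 := div_ne_zero hbvi' hbvi
  have hab3 : a^3 = b^3 := by
    rw [ha_def, hb_def, div_pow, div_pow,
      div_eq_div_iff (pow_ne_zero _ haui) (pow_ne_zero _ hbvi)]
    linear_combination (-2*i*(v-u))*hQ +
      (-6*v*i + 6*v*i^3 + 2*v^3*i + 6*u*i - 6*u*i^3 - 18*u*v^2*i + 18*u^2*v*i - 2*u^3*i)*hi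
  have hsub : ∀ a b : K, (a-b)^q = a^q - b^q := by
    intro a b
    rw [eq_sub_iff_add_eq, ← frob, sub_add_cancel]
  have hi4 : i^4 = 1 := by
    rw [show (4:ℕ) = 2*2 from rfl, pow_mul, hi]
    norm_num
  have hdenp : u^q + i ≠ 0 := by
    intro h
    have h3 : u^q = -i := by rwa [← eq_neg_iff_add_eq_zero] at h
    rw [h3] at hu
    exact hui (by linear_combination i*hu + u*hi)
  have hdenm : u^q - i ≠ 0 := by
    intro h
    have h3 : u^q = i := by rwa [sub_eq_zero] at h
    rw [h3] at hu
    exact hui' (by linear_combination (-i)*hu + u*hi)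
  have hdenpv : v^q + i ≠ 0 := by
    intro h
    have h3 : v^q = -i := by rwa [← eq_neg_iff_add_eq_zero] at h
    rw [h3] at hv
    exact hvi (by linear_combination i*hv + v*hi)
  have hdenmv : v^q - i ≠ 0 := by
    intro h
    have h3 : v^q = i := by rwa [sub_eq_zero] at h
    rw [h3] at hv
    exact hvi' (by linear_combination (-i)*hv + v*hi)
  have hab : a = b := by
    rcases hq12 with h1 | h1
    · -- q ≡ 1 (mod 12): i^q = i, a^(q+1) = -1 = b^(q+1)
      obtain ⟨k, hk⟩ : ∃ k, q = 12*k+1 := ⟨q/12, by omega⟩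
      have hiq : i^q = i := by
        rw [hk, show 12*k+1 = 4*(3*k)+1 by ring, pow_succ, pow_mul, hi4, one_pow, one_mul]
      have hanorm : a^(q+1) = -1 := by
        have e : a^(q+1) = ((u^q+i)*(u+i))/((u^q-i)*(u-i)) := by
          rw [pow_succ, ha_def, div_pow, frob, hsub, hiq, div_mul_div_comm]
        rw [e, div_eq_iff (mul_ne_zero hdenm haui)]
        linear_combination 2*hu + 2*hi
      have hbnorm : b^(q+1) = -1 := by
        have e : b^(q+1) = ((v^q+i)*(v+i))/((v^q-i)*(v-i)) := by
          rw [pow_succ, hb_def, div_pow, frob, hsub, hiq, div_mul_div_comm]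
        rw [e, div_eq_iff (mul_ne_zero hdenmv hbvi)]
        linear_combination 2*hv + 2*hi
      set c : K := a/b with hc_def
      have hc0 : c ≠ 0 := div_ne_zero ha0 hb0
      have hc3 : c^3 = 1 := by
        rw [hc_def, div_pow, hab3, div_self (pow_ne_zero _ hb0)]
      have hcq : c^(q+1) = 1 := by
        rw [hc_def, div_pow, hanorm, hbnorm, neg_div_neg_eq, div_one]
      have h12 : c^(12*k+2) = 1 := by rw [show 12*k+2 = q+1 by omega]; exact hcq
      have hc2 : c^2 = 1 := by
        rw [show 12*k+2 = 3*(4*k)+2 by ring, pow_add, pow_mul, hc3, one_pow, one_mul] at h12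
        exact h12
      have hc1 : c = 1 := by
        have := hc3
        rw [show (3:ℕ) = 2+1 from rfl, pow_succ, hc2, one_mul] at this
        exact this
      rw [hc_def, div_eq_one_iff_eq hb0] at hc1
      exact hc1
    · -- q ≡ 11 (mod 12): i^q = -i, a^q = -a, b^q = -b
      obtain ⟨k, hk⟩ : ∃ k, q = 12*k+11 := ⟨q/12, by omega⟩
      have hiq : i^q = -i := by
        rw [hk, show 12*k+11 = 4*(3*k+2)+3 by ring, pow_add, pow_mul, hi4, one_pow, one_mul,
          show (3:ℕ) = 2+1 from rfl, pow_succ, hi, neg_one_mul]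
      have haqa : a^q = -a := by
        have e : a^q = (u^q - i)/(u^q + i) := by
          rw [ha_def, div_pow, frob, hsub, hiq, sub_neg_eq_add, ← sub_eq_add_neg]
        rw [e, ha_def, ← neg_div, div_eq_div_iff hdenp haui]
        linear_combination 2*hu + 2*hi
      have hbqb : b^q = -b := by
        have e : b^q = (v^q - i)/(v^q + i) := by
          rw [hb_def, div_pow, frob, hsub, hiq, sub_neg_eq_add, ← sub_eq_add_neg]
        rw [e, hb_def, ← neg_div, div_eq_div_iff hdenpv hbvi]
        linear_combination 2*hv + 2*hi
      set c : K := a/b with hc_def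
      have hc0 : c ≠ 0 := div_ne_zero ha0 hb0
      have hc3 : c^3 = 1 := by
        rw [hc_def, div_pow, hab3, div_self (pow_ne_zero _ hb0)]
      have hcq : c^q = c := by
        rw [hc_def, div_pow, haqa, hbqb, neg_div_neg_eq]
      have h10 : c^(12*k+10) = 1 := by
        have e : c^(12*k+10) * c = 1 * c := by
          rw [one_mul, ← pow_succ, show 12*k+10+1 = q by omega, hcq]
        exact mul_right_cancel₀ hc0 e
      have hc1 : c = 1 := by
        rw [show 12*k+10 = 3*(4*k+3)+1 by ring, pow_succ, pow_mul, hc3, one_pow, one_mul] at h10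
        exact h10
      rw [hc_def, div_eq_one_iff_eq hb0] at hc1
      exact hc1
  -- conclude u = v
  rw [ha_def, hb_def, div_eq_div_iff haui hbvi] at hab
  have h2iv : 2*i*(v-u) = 0 := by linear_combination hab
  rcases mul_eq_zero.mp h2iv with h | h
  · exact absurd h (mul_ne_zero h2K hi0)
  · exact (sub_eq_zero.mp h).symm

/-- Case (ii): let `q` be a prime power with `q ≡ ±1 (mod 12)` and
`f(x) = x^(q-2) - 3·x^(q²-q-1)` (i.e. `t = -3`). Then `f` is a permutation
polynomial of `𝔽_{q²}`. -/
theorem stmt_2 (p m q : ℕ) (hp : p.Prime) (hq : q = p ^ m) (hq2 : 2 < q)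
    (hq12 : q % 12 = 1 ∨ q % 12 = 11)
    (K : Type) [Field K] [Fintype K] (hK : Fintype.card K = q ^ 2) :
    Function.Bijective (fun x : K => x ^ (q - 2) + (-3 : K) * x ^ (q ^ 2 - q - 1)) := by
  have hq3 : 3 ≤ q := hq2
  have hqodd : q % 2 = 1 := by rcases hq12 with h | h <;> omega
  have hm : m ≠ 0 := by rintro rfl; rw [pow_zero] at hq; omega
  have hp2 : p ≠ 2 := by
    rintro rfl
    have : 2 ∣ q := hq ▸ dvd_pow_self 2 hm
    omega
  have hchar : CharP K p := by
    cases' CharP.exists K with r hr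
    haveI := hr
    have hrp : r.Prime := CharP.char_is_prime K r
    obtain ⟨n, -, hcard⟩ := FiniteField.card K r
    have hdvd : p ∣ r ^ (n : ℕ) := by
      rw [← hcard, hK, hq]
      exact dvd_pow (dvd_pow_self p hm) two_ne_zero
    have hpr : p = r :=
      (Nat.prime_dvd_prime_iff_eq hp hrp).mp (Nat.Prime.dvd_of_dvd_pow hp hdvd)
    rwa [hpr]
  haveI := Fact.mk hp
  haveI := hchar
  have frob : ∀ a b : K, (a + b) ^ q = a ^ q + b ^ q := by
    intro a b; rw [hq]; exact add_pow_char_pow a b p m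
  have hsubK : ∀ a b : K, (a - b) ^ q = a ^ q - b ^ q := by
    intro a b
    rw [eq_sub_iff_add_eq, ← frob, sub_add_cancel]
  have h2K : (2 : K) ≠ 0 := by
    intro h
    have hd : p ∣ 2 := (CharP.cast_eq_zero_iff K p 2).mp (by exact_mod_cast h)
    exact hp2 ((Nat.prime_dvd_prime_iff_eq hp Nat.prime_two).mp hd)
  have h8K : (8 : K) ≠ 0 := by
    intro h
    have hd : p ∣ 8 := (CharP.cast_eq_zero_iff K p 8).mp (by exact_mod_cast h)
    have : p ∣ 2 := hp.dvd_of_dvd_pow (show p ∣ 2 ^ 3 by norm_num at hd ⊢; exact hd)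
    exact hp2 ((Nat.prime_dvd_prime_iff_eq hp Nat.prime_two).mp this)
  have two_q : (2 : K) ^ q = 2 := by
    calc (2 : K) ^ q = ((1 : K) + 1) ^ q := by norm_num
      _ = 1 ^ q + 1 ^ q := frob 1 1
      _ = 2 := by norm_num
  have three_q : (3 : K) ^ q = 3 := by
    calc (3 : K) ^ q = ((2 : K) + 1) ^ q := by norm_num
      _ = 2 ^ q + 1 ^ q := frob 2 1
      _ = 3 := by rw [two_q]; norm_num
  obtain ⟨j, hj⟩ : IsSquare (-1 : K) := by
    rw [FiniteField.isSquare_neg_one_iff, hK]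
    have h4 : q % 4 = 1 ∨ q % 4 = 3 := by omega
    have : q ^ 2 % 4 = 1 := by
      rw [Nat.pow_mod]; rcases h4 with h | h <;> rw [h]
    omega
  have hi : j ^ 2 = -1 := by rw [sq]; exact hj.symm
  have hq2le : q + 2 ≤ q ^ 2 := by nlinarith
  have hq1 : 1 ≤ q := by omega
  have hqsq : q ≤ q ^ 2 := by omega
  have hqsq1 : 1 ≤ q ^ 2 - q := by omega
  rw [← Finite.injective_iff_bijective]
  intro x y hxy
  simp only at hxy
  have e1 : ∀ z : K, z * z ^ (q - 2) = z ^ (q - 1) := by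
    intro z; rw [← pow_succ']; congr 1; omega
  have e2 : ∀ z : K, z * z ^ (q ^ 2 - q - 1) = (z ^ (q - 1)) ^ q := by
    intro z; rw [← pow_succ', ← pow_mul]
    congr 1
    zify [hq1, hqsq, hqsq1]
    ring
  have circ : ∀ z : K, z ≠ 0 → (z ^ (q - 1)) ^ q * z ^ (q - 1) = 1 := by
    intro z hz
    have hcard := FiniteField.pow_card_sub_one_eq_one z hz
    rw [hK] at hcard
    rw [← pow_mul, ← pow_add,
      show (q - 1) * q + (q - 1) = q ^ 2 - 1 by zify [hq1, show (1:ℕ) ≤ q ^ 2 by omega]; ring]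
    exact hcard
  have hmain : ∀ z : K, z * z ^ (q - 1) * (z ^ (q - 2) + (-3 : K) * z ^ (q ^ 2 - q - 1))
      = (z ^ (q - 1)) ^ 2 - 3 * ((z ^ (q - 1)) ^ q * z ^ (q - 1)) := by
    intro z
    linear_combination (z ^ (q - 1)) * (e1 z) + (-3 * z ^ (q - 1)) * (e2 z)
  have hnz : ∀ z : K, z ≠ 0 → z ^ (q - 2) + (-3 : K) * z ^ (q ^ 2 - q - 1) ≠ 0 := by
    intro z hz h0
    have h1 := hmain z
    rw [h0, mul_zero, circ z hz, mul_one] at h1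
    have hu3 : (z ^ (q - 1)) ^ 2 = 3 := by linear_combination -h1
    have h9 : (3 : K) ^ q * 3 = 1 := by
      rw [← hu3]
      calc ((z ^ (q - 1)) ^ 2) ^ q * (z ^ (q - 1)) ^ 2
          = ((z ^ (q - 1)) ^ q * z ^ (q - 1)) ^ 2 := by ring
        _ = 1 := by rw [circ z hz]; norm_num
    rw [three_q] at h9
    exact h8K (by linear_combination h9)
  have hzero : (0 : K) ^ (q - 2) + (-3 : K) * (0 : K) ^ (q ^ 2 - q - 1) = 0 := by
    rw [zero_pow (by omega : q - 2 ≠ 0), zero_pow (by omega : q ^ 2 - q - 1 ≠ 0)]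
    ring
  by_cases hx : x = 0
  · by_cases hy : y = 0
    · rw [hx, hy]
    · exfalso
      apply hnz y hy
      rw [← hxy, hx, hzero]
  · by_cases hy : y = 0
    · exfalso
      apply hnz x hx
      rw [hxy, hy, hzero]
    · -- both nonzero
      have hu := circ x hx
      have hv := circ y hy
      have h1x : x * x ^ (q - 1) * (x ^ (q - 2) + (-3 : K) * x ^ (q ^ 2 - q - 1))
          = (x ^ (q - 1)) ^ 2 - 3 := by
        have h := hmain x; rw [hu, mul_one] at h; exact h
      have h1y : y * y ^ (q - 1) * (x ^ (q - 2) + (-3 : K) * x ^ (q ^ 2 - q - 1))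
          = (y ^ (q - 1)) ^ 2 - 3 := by
        have h := hmain y; rw [hv, mul_one, ← hxy] at h; exact h
      have hxq : x ^ q = x * x ^ (q - 1) := by
        rw [← pow_succ']; congr 1; omega
      have hyq : y ^ q = y * y ^ (q - 1) := by
        rw [← pow_succ']; congr 1; omega
      have h2x : x * (x ^ (q - 1)) ^ 2 * ((x ^ (q - 2) + (-3 : K) * x ^ (q ^ 2 - q - 1)) ^ q)
          = 1 - 3 * (x ^ (q - 1)) ^ 2 := by
        have h := congrArg (· ^ q) h1x
        simp only [mul_pow] at h
        rw [hxq, hsubK, three_q] at h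
        linear_combination (x ^ (q - 1)) ^ 2 * h +
          (-(x * (x ^ (q - 1)) ^ 2 *
            ((x ^ (q - 2) + (-3 : K) * x ^ (q ^ 2 - q - 1)) ^ q)) +
            ((x ^ (q - 1)) ^ q * x ^ (q - 1) + 1)) * hu
      have h2y : y * (y ^ (q - 1)) ^ 2 * ((x ^ (q - 2) + (-3 : K) * x ^ (q ^ 2 - q - 1)) ^ q)
          = 1 - 3 * (y ^ (q - 1)) ^ 2 := by
        have h := congrArg (· ^ q) h1y
        simp only [mul_pow] at h
        rw [hyq, hsubK, three_q] at h
        linear_combination (y ^ (q - 1)) ^ 2 * h +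
          (-(y * (y ^ (q - 1)) ^ 2 *
            ((x ^ (q - 2) + (-3 : K) * x ^ (q ^ 2 - q - 1)) ^ q)) +
            ((y ^ (q - 1)) ^ q * y ^ (q - 1) + 1)) * hv
      -- derive the quadric equation
      have hVU : (y ^ (q - 1) - x ^ (q - 1)) *
          ((x ^ (q - 1)) ^ 2 + (y ^ (q - 1)) ^ 2 - 8 * (x ^ (q - 1)) * (y ^ (q - 1))
            - 3 * (x ^ (q - 1)) ^ 2 * (y ^ (q - 1)) ^ 2 - 3) = 0 := by
        linear_combination (-(y * y ^ (q - 1) *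
            (x ^ (q - 2) + (-3 : K) * x ^ (q ^ 2 - q - 1)) * y ^ (q - 1))) * h2x -
          ((1 - 3 * (x ^ (q - 1)) ^ 2) * y ^ (q - 1)) * h1y +
          (x * x ^ (q - 1) *
            (x ^ (q - 2) + (-3 : K) * x ^ (q ^ 2 - q - 1)) * x ^ (q - 1)) * h2y +
          ((1 - 3 * (y ^ (q - 1)) ^ 2) * x ^ (q - 1)) * h1x
      have huv : x ^ (q - 1) = y ^ (q - 1) := by
        rcases mul_eq_zero.mp hVU with h | h
        · exact (sub_eq_zero.mp h).symm
        · exact stmt_2_aux q K h2K j hi frob hq12 _ _ hu hv h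
      -- conclude x = y
      have hfin : (x - y) * (x ^ (q - 1) *
          (x ^ (q - 2) + (-3 : K) * x ^ (q ^ 2 - q - 1))) = 0 := by
        rw [← huv] at h1y
        linear_combination h1x - h1y
      have hu0 : x ^ (q - 1) ≠ 0 := pow_ne_zero _ hx
      rcases mul_eq_zero.mp hfin with h | h
      · exact sub_eq_zero.mp h
      · rcases mul_eq_zero.mp h with h' | h'
        · exact absurd h' hu0
        · exact absurd h' (hnz x hx)
end

section
/- Let q be a prime power with q ≡ −1 (mod 6) and let f(x) = x^{q−2} + 3·x^{q²−q−1} (i.e., t = 3 in 𝔽_q). Then f is a permutation polynomial of 𝔽_{q²}. -/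
/-!
Let `σ x = x ^ q`, an involution of `𝔽_{q²}`. For every `z` (using `0⁻¹ = 0` at `z = 0`),
`f z = σ z / z² + 3 / σ z`. For `z ≠ 0` put `u = σ z / z`, so that `u σ u = 1`; then
`f z · σ z = u² + 3`, which never vanishes when `q` is odd, and
`f z / σ (f z) = u (u² + 3) / (1 + 3 u²)`. In the Cayley coordinate `(u + 1) / (u - 1)`, which
`σ` negates, this map is cubing; it is injective because `𝔽_q` has no cube root of unity
other than `1` when `q ≡ 2 (mod 3)`. Hence `f x = f y` forces `σ x / x = σ y / y`, and then
`σ x = σ y`.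
-/

section Involution

variable {K : Type*} [Field K] {σ : K →+* K}

theorem sq_add_three_ne_zero (h2 : (2 : K) ≠ 0) {u : K} (hu : u * σ u = 1) : u ^ 2 + 3 ≠ 0 := by
  intro h
  have hσu : σ u ^ 2 + 3 = 0 := by
    simpa only [map_add, map_pow, map_ofNat, map_zero] using congrArg σ h
  have h8 : (2 : K) ^ 3 = 0 := by linear_combination 3 * h - u ^ 2 * hσu + (u * σ u + 1) * hu
  exact h2 (pow_eq_zero_iff three_ne_zero |>.mp h8)

theorem eq_of_pow_three_eq_of_map_mul_eq_mul_map
    (hcube : ∀ w : K, σ w = w → w ^ 3 = 1 → w = 1) {a b : K} (h3 : a ^ 3 = b ^ 3)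
    (hab : σ a * b = a * σ b) : a = b := by
  rcases eq_or_ne b 0 with rfl | hb
  · simpa using h3
  have hσb : σ b ≠ 0 := (map_ne_zero σ).mpr hb
  have hfix : σ (a / b) = a / b := by
    rw [map_div₀, div_eq_div_iff hσb hb, hab]
  have hunit : (a / b) ^ 3 = 1 := by rw [div_pow, h3, div_self (pow_ne_zero 3 hb)]
  exact (div_eq_one_iff_eq hb).mp (hcube _ hfix hunit)

-- With `A = (u + 1)(v - 1)` and `B = (u - 1)(v + 1)` the hypothesis reads `A³ = B³`.
theorem eq_of_mul_sq_add_three_eq (h2 : (2 : K) ≠ 0)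
    (hcube : ∀ w : K, σ w = w → w ^ 3 = 1 → w = 1) {u v : K} (hu : u * σ u = 1)
    (hv : v * σ v = 1)
    (h : u * (u ^ 2 + 3) * (1 + 3 * v ^ 2) = v * (v ^ 2 + 3) * (1 + 3 * u ^ 2)) : u = v := by
  have hAB : (u + 1) * (v - 1) = (u - 1) * (v + 1) := by
    refine eq_of_pow_three_eq_of_map_mul_eq_mul_map hcube (by linear_combination -2 * h) ?_
    simp only [map_mul, map_add, map_sub, map_one, eq_inv_of_mul_eq_one_right hu,
      eq_inv_of_mul_eq_one_right hv]
    have hu0 : u ≠ 0 := left_ne_zero_of_mul_eq_one hu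
    have hv0 : v ≠ 0 := left_ne_zero_of_mul_eq_one hv
    field_simp
    ring
  have : 2 * (v - u) = 0 := by linear_combination hAB
  linear_combination -(mul_eq_zero.mp this).resolve_left h2

theorem div_sq_add_three_div_mul_map {z : K} (hz : z ≠ 0) :
    (σ z / z ^ 2 + 3 / σ z) * σ z = (σ z / z) ^ 2 + 3 := by
  have : σ z ≠ 0 := (map_ne_zero σ).mpr hz
  field_simp

variable (hσ : Function.Involutive σ)
include hσ

theorem map_div_sq_add_three_div_mul {z : K} (hz : z ≠ 0) :
    σ (σ z / z ^ 2 + 3 / σ z) * z = σ ((σ z / z) ^ 2 + 3) := by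
  rw [← div_sq_add_three_div_mul_map hz, map_mul, hσ]

theorem div_mul_map_div_eq_one {z : K} (hz : z ≠ 0) : σ z / z * σ (σ z / z) = 1 := by
  have : σ z ≠ 0 := (map_ne_zero σ).mpr hz
  rw [map_div₀, hσ]
  field_simp

theorem div_sq_add_three_div_mul_one_add_three_mul_sq {z : K} (hz : z ≠ 0) :
    (σ z / z ^ 2 + 3 / σ z) * (1 + 3 * (σ z / z) ^ 2) =
      σ (σ z / z ^ 2 + 3 / σ z) * (σ z / z * ((σ z / z) ^ 2 + 3)) := by
  set c := σ z / z ^ 2 + 3 / σ z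
  set u := σ z / z
  have E1 : c * σ z = u ^ 2 + 3 := div_sq_add_three_div_mul_map hz
  have E2 : σ c * z = σ u ^ 2 + 3 := by
    rw [map_div_sq_add_three_div_mul hσ hz, map_add, map_pow, map_ofNat]
  have hu : u * σ u = 1 := div_mul_map_div_eq_one hσ hz
  have hσz : u * z = σ z := div_mul_cancel₀ _ hz
  linear_combination (-c * u ^ 2) * E2 - c * (u * σ u + 1) * hu + σ c * u * E1 + c * σ c * u * hσz

theorem injective_div_sq_add_three_div (h2 : (2 : K) ≠ 0)
    (hcube : ∀ w : K, σ w = w → w ^ 3 = 1 → w = 1) :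
    Function.Injective fun z => σ z / z ^ 2 + 3 / σ z := by
  have hf0 : ∀ z, σ z / z ^ 2 + 3 / σ z = 0 ↔ z = 0 := by
    refine fun z => ⟨fun h => ?_, fun h => by simp [h]⟩
    by_contra hz
    apply sq_add_three_ne_zero h2 (div_mul_map_div_eq_one hσ hz)
    rw [← div_sq_add_three_div_mul_map hz, h, zero_mul]
  intro x y hxy
  simp only at hxy
  rcases eq_or_ne x 0 with rfl | hx
  · exact ((hf0 y).1 (hxy ▸ (hf0 0).2 rfl)).symm
  rcases eq_or_ne y 0 with rfl | hy
  · exact (hf0 x).1 (hxy.trans ((hf0 0).2 rfl))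
  have hc : σ x / x ^ 2 + 3 / σ x ≠ 0 := mt (hf0 x).1 hx
  have huv : σ x / x = σ y / y := by
    refine eq_of_mul_sq_add_three_eq h2 hcube (div_mul_map_div_eq_one hσ hx)
      (div_mul_map_div_eq_one hσ hy) (mul_left_cancel₀ ((map_ne_zero σ).mpr hc) ?_)
    have Rx := div_sq_add_three_div_mul_one_add_three_mul_sq hσ hx
    have Ry := div_sq_add_three_div_mul_one_add_three_mul_sq hσ hy
    rw [← hxy] at Ry
    linear_combination (1 + 3 * (σ x / x) ^ 2) * Ry - (1 + 3 * (σ y / y) ^ 2) * Rx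
  have hσxy : σ x = σ y := by
    refine mul_left_cancel₀ hc ?_
    rw [div_sq_add_three_div_mul_map hx, hxy, div_sq_add_three_div_mul_map hy, huv]
  exact hσ.injective hσxy

end Involution

theorem pow_sub_two_eq_div {K : Type*} [DivisionRing K] {q : ℕ} (hq : 2 < q) (x : K) :
    x ^ (q - 2) = x ^ q / x ^ 2 := by
  rcases eq_or_ne x 0 with rfl | hx
  · simp [zero_pow (by omega : q - 2 ≠ 0), zero_pow (by omega : q ≠ 0)]
  · rw [pow_sub₀ x hx hq.le, div_eq_mul_inv]

theorem FiniteField.pow_card_sub_sub_one {K : Type*} [Field K] [Fintype K] {k : ℕ} (hk0 : k ≠ 0)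
    (hk : k + 1 < Fintype.card K) (x : K) : x ^ (Fintype.card K - k - 1) = (x ^ k)⁻¹ := by
  rcases eq_or_ne x 0 with rfl | hx
  · simp [zero_pow (by omega : Fintype.card K - k - 1 ≠ 0), zero_pow hk0]
  refine eq_inv_of_mul_eq_one_left ?_
  rw [← pow_add, show Fintype.card K - k - 1 + k = Fintype.card K - 1 by omega,
    FiniteField.pow_card_sub_one_eq_one x hx]

theorem eq_one_of_pow_three_eq_one_of_pow_eq_self {M : Type*} [Monoid M] {w : M} {q : ℕ}
    (hq : q % 3 = 2) (hwq : w ^ q = w) (hw : w ^ 3 = 1) : w = 1 := by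
  have hw2 : w ^ 2 = w := by rw [← hq, ← pow_eq_pow_mod q hw, hwq]
  rw [← hw, pow_succ, hw2, ← sq, hw2]

theorem stmt_3_general (p m q : ℕ) (hp : p.Prime) (hq : q = p ^ m)
    (hq6 : q % 6 = 5)
    (K : Type) [Field K] [Fintype K] (hK : Fintype.card K = q ^ 2) :
    Function.Bijective (fun x : K => x ^ (q - 2) + (3 : K) * x ^ (q ^ 2 - q - 1)) := by
  have := Fact.mk hp
  have : CharP K p := charP_of_card_eq_prime_pow (f := m * 2) (by rw [hK, hq, pow_mul])
  have hσ (x : K) : iterateFrobenius K p m x = x ^ q := by rw [iterateFrobenius_def, hq]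
  have hinv : Function.Involutive (iterateFrobenius K p m) := fun x => by
    rw [hσ, hσ, ← pow_mul, ← sq, ← hK, FiniteField.pow_card]
  have h2 : (2 : K) ≠ 0 := by
    refine Ring.two_ne_zero fun h => ?_
    have hodd : Odd (q ^ 2) := (Nat.odd_iff.mpr (by omega)).pow
    rw [FiniteField.even_card_iff_char_two, hK] at h
    exact Nat.not_even_iff_odd.mpr hodd (Nat.even_iff.mpr h)
  have hcube (w : K) (hw : iterateFrobenius K p m w = w) : w ^ 3 = 1 → w = 1 :=
    eq_one_of_pow_three_eq_one_of_pow_eq_self (by omega) (hσ w ▸ hw)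
  rw [← Finite.injective_iff_bijective]
  convert injective_div_sq_add_three_div hinv h2 hcube using 2
  rw [hσ, pow_sub_two_eq_div (by omega), ← hK, FiniteField.pow_card_sub_sub_one (by omega)
    (by rw [hK]; nlinarith [(by omega : 3 ≤ q)]), ← div_eq_mul_inv]

/-- Case (iii): let `q` be a prime power with `q ≡ -1 (mod 6)` and
`f(x) = x^(q-2) + 3·x^(q²-q-1)` (i.e. `t = 3`). Then `f` is a permutation
polynomial of `𝔽_{q²}`. -/
theorem stmt_3 (p m q : ℕ) (hp : p.Prime) (hq : q = p ^ m) (hq2 : 2 < q)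
    (hq6 : q % 6 = 5)
    (K : Type) [Field K] [Fintype K] (hK : Fintype.card K = q ^ 2) :
    Function.Bijective (fun x : K => x ^ (q - 2) + (3 : K) * x ^ (q ^ 2 - q - 1)) :=
  stmt_3_general p m q hp hq hq6 K hK
end

section
/- Let q > 2 be a prime power, let t ∈ 𝔽_q^*, and let f(x) = x^{q−2} + t·x^{q²−q−1}. If f is a permutation polynomial of 𝔽_{q²}, then one of the following holds: (i) t = 1 and q ≡ 1 (mod 4); (ii) t = −3 and q ≡ ±1 (mod 12); (iii) t = 3 and q ≡ −1 (mod 6). -/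
/-!
If `f` permutes `𝔽_{q²}`, then `∑ₓ f(x)^(2q-2) = ∑ₓ x^(2q-2) = 0`. Expanding `f(x)^(2q-2)` by the
binomial theorem, only the monomials whose exponent is divisible by `q² - 1` survive; these are the
`k` with `q + 1 ∣ 2(k + 1)`, and their coefficients `C(2q-2, k)` are read off mod `p` from
`(X + 1)^(q-1) = ∑_{i<q} (-X)^i`. For even `q` the only surviving term is a nonzero multiple of a
power of `t`. For `q = 2r + 1` the terms `k = r, q, 3r + 2` give `ζ t² + 2t - 3ζ = 0` with
`ζ = (-t)^r = ±1`, which leaves `t ∈ {1, -3, 3}`. The congruences on `q` then come from the sign of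
`(-1)^r` and of `(-3)^r`, the latter computed via the square root `1 + 2ω` of `-3`, `ω` a primitive
cube root of unity, on which the Frobenius `x ↦ x^q` acts according to `q mod 3`.
-/

open Finset Polynomial

theorem FiniteField.sum_pow_eq_ite {K : Type*} [Field K] [Fintype K] {N : ℕ} (hN : N ≠ 0) :
    ∑ x : K, x ^ N = if Fintype.card K - 1 ∣ N then -1 else 0 := by
  classical
  rw [← FiniteField.sum_pow_units, ← Finset.sum_erase univ (zero_pow hN)]
  exact (Finset.sum_subtype _ (by simp) _).trans
    (Fintype.sum_equiv unitsEquivNeZero.symm _ _ fun _ ↦ rfl)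

theorem FiniteField.sum_choose_mul_pow_eq_zero_of_bijective {K : Type*} [Field K] [Fintype K]
    {a b n : ℕ} (ha : a ≠ 0) (hb : b ≠ 0) (hn : n ≠ 0) (hnK : n < Fintype.card K - 1) {t : K}
    (hf : Function.Bijective fun x : K ↦ x ^ a + t * x ^ b) :
    ∑ k ∈ range (n + 1) with Fintype.card K - 1 ∣ a * k + b * (n - k),
      (n.choose k : K) * t ^ (n - k) = 0 := by
  have hexp {k : ℕ} (hk : k ∈ range (n + 1)) : a * k + b * (n - k) ≠ 0 := by
    rw [mem_range] at hk
    rcases Nat.eq_zero_or_pos k with rfl | hk0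
    · simp [hb, hn]
    · exact (Nat.mul_pos (Nat.pos_of_ne_zero ha) hk0).ne' ∘ Nat.eq_zero_of_add_eq_zero_right
  have hsum : (0 : K) = -∑ k ∈ range (n + 1) with Fintype.card K - 1 ∣ a * k + b * (n - k),
      (n.choose k : K) * t ^ (n - k) := calc
    (0 : K) = ∑ y : K, y ^ n := (FiniteField.sum_pow_lt_card_sub_one K n hnK).symm
    _ = ∑ x : K, (x ^ a + t * x ^ b) ^ n := (Fintype.sum_bijective _ hf _ _ fun _ ↦ rfl).symm
    _ = ∑ x : K, ∑ k ∈ range (n + 1),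
          (n.choose k : K) * t ^ (n - k) * x ^ (a * k + b * (n - k)) := by
      refine sum_congr rfl fun x _ ↦ ?_
      rw [add_pow]
      refine sum_congr rfl fun k _ ↦ ?_
      rw [pow_add, pow_mul, pow_mul, mul_pow]
      ring
    _ = ∑ k ∈ range (n + 1),
          (n.choose k : K) * t ^ (n - k) * ∑ x : K, x ^ (a * k + b * (n - k)) := by
      rw [sum_comm]
      simp_rw [mul_sum]
    _ = _ := by
      rw [sum_filter, ← sum_neg_distrib]
      refine sum_congr rfl fun k hk ↦ ?_
      rw [FiniteField.sum_pow_eq_ite (hexp hk)]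
      split_ifs <;> ring
  exact neg_eq_zero.mp hsum.symm

theorem pow_eq_one_of_pow_succ_eq_self {M₀ : Type*} [MonoidWithZero M₀] [IsRightCancelMulZero M₀]
    {a : M₀} {n : ℕ} (ha : a ≠ 0) (h : a ^ (n + 1) = a) : a ^ n = 1 :=
  mul_right_cancel₀ ha (by rw [← pow_succ, h, one_mul])

theorem neg_one_ne_one_of_char_pow_eq_odd {K : Type*} [Ring K] {p m r : ℕ} [Fact p.Prime]
    [CharP K p] (hr : r ≠ 0) (hqr : p ^ m = 2 * r + 1) : (-1 : K) ≠ 1 := by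
  have hm : m ≠ 0 := by rintro rfl; rw [pow_zero] at hqr; omega
  have hp2 : p ≠ 2 := by
    rintro rfl
    obtain ⟨j, hj⟩ := (Nat.even_pow.mpr ⟨even_two, hm⟩ : Even (2 ^ m))
    omega
  have : Fact (2 < p) := ⟨(Fact.out : p.Prime).two_le.lt_of_ne' hp2⟩
  exact CharP.neg_one_ne_one K p

theorem eq_of_mul_sq_add_two_mul_sub_three_mul_eq_zero {R : Type*} [CommRing R] [NoZeroDivisors R]
    {t ζ : R} (hζ : ζ ^ 2 = 1) (h : ζ * t ^ 2 + 2 * t - 3 * ζ = 0) :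
    t = 1 ∧ ζ = 1 ∨ t = -3 ∧ ζ = 1 ∨ t = 3 ∧ ζ = -1 ∨ t = -1 ∧ ζ = -1 := by
  have hζ' : (ζ - 1) * (ζ + 1) = 0 := by linear_combination hζ
  have ht : (t + ζ - 2) * (t + ζ + 2) = 0 := by linear_combination ζ * h + (4 - t ^ 2) * hζ
  rcases mul_eq_zero.mp hζ' with hζ' | hζ' <;> rcases mul_eq_zero.mp ht with ht | ht
  · exact .inl ⟨by linear_combination ht - hζ', by linear_combination hζ'⟩
  · exact .inr <| .inl ⟨by linear_combination ht - hζ', by linear_combination hζ'⟩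
  · exact .inr <| .inr <| .inl ⟨by linear_combination ht - hζ', by linear_combination hζ'⟩
  · exact .inr <| .inr <| .inr ⟨by linear_combination ht - hζ', by linear_combination hζ'⟩

theorem Nat.sq_sub_one_dvd_mul_add_mul_iff {q k : ℕ} (hq : 2 ≤ q) (hk : k ≤ 2 * q - 2) :
    q ^ 2 - 1 ∣ (q - 2) * k + (q ^ 2 - q - 1) * (2 * q - 2 - k) ↔ q + 1 ∣ 2 * (k + 1) := by
  have hq2 : q + 1 ≤ q ^ 2 := by nlinarith
  rw [← Int.natCast_dvd_natCast, ← Int.natCast_dvd_natCast]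
  push_cast [Nat.cast_sub (by omega : 1 ≤ q ^ 2), Nat.cast_sub hq, Nat.cast_sub hk,
    Nat.cast_sub (by omega : q ≤ q ^ 2), Nat.cast_sub (by omega : 1 ≤ q ^ 2 - q),
    Nat.cast_sub (by omega : 2 ≤ 2 * q)]
  rw [show ((q : ℤ) - 2) * k + ((q : ℤ) ^ 2 - q - 1) * (2 * q - 2 - k)
      = (q - 1) * (2 * (k + 1)) + (q - 1) * (q + 1) * (2 * (q - 2) - k) by ring,
    show (q : ℤ) ^ 2 - 1 = (q - 1) * (q + 1) by ring, dvd_add_left (dvd_mul_right _ _),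
    mul_dvd_mul_iff_left (by omega)]

theorem Nat.succ_dvd_two_mul_succ_iff_of_even {q k : ℕ} (hq : Even q) (hk : k ≤ 2 * q - 2) :
    q + 1 ∣ 2 * (k + 1) ↔ k = q := by
  rw [Nat.Coprime.dvd_mul_left (Nat.coprime_two_right.mpr hq.add_one)]
  refine ⟨fun h ↦ ?_, fun h ↦ h ▸ dvd_rfl⟩
  have := Nat.eq_of_dvd_of_lt_two_mul k.succ_ne_zero h (by omega)
  omega

theorem Nat.two_mul_add_two_dvd_iff {r k : ℕ} (hk : k ≤ 4 * r) :
    2 * r + 2 ∣ 2 * (k + 1) ↔ k = r ∨ k = 2 * r + 1 ∨ k = 3 * r + 2 := by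
  rw [show 2 * r + 2 = 2 * (r + 1) by ring, Nat.mul_dvd_mul_iff_left two_pos]
  constructor
  · rintro ⟨c, hc⟩
    have hc4 : c < 4 := by
      by_contra! h
      nlinarith
    interval_cases c <;> omega
  · rintro (rfl | rfl | rfl)
    exacts [⟨1, by ring⟩, ⟨2, by ring⟩, ⟨3, by ring⟩]

section Binomial

variable {R : Type*} [CommRing R] [IsDomain R] {p : ℕ} [Fact p.Prime] [CharP R p] {m : ℕ}

theorem X_add_one_pow_char_pow_sub_one :
    (X + 1 : R[X]) ^ (p ^ m - 1) = ∑ i ∈ range (p ^ m), (-X) ^ i := by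
  refine mul_left_cancel₀ (X_add_C_ne_zero (1 : R)) ?_
  calc (X + C 1) * (X + 1 : R[X]) ^ (p ^ m - 1) = (X + 1) ^ p ^ m := by
        rw [map_one, ← pow_succ', Nat.sub_add_cancel (Nat.one_le_pow _ _ (Fact.out : p.Prime).pos)]
    _ = -((-X) - 1) * ∑ i ∈ range (p ^ m), (-X) ^ i := by
        rw [neg_mul, mul_geom_sum, neg_pow (X : R[X]), neg_one_pow_char_pow, add_pow_char_pow,
          one_pow]
        ring
    _ = _ := by rw [map_one, neg_sub, sub_neg_eq_add, add_comm 1]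

theorem cast_choose_char_pow_sub_one {i : ℕ} (hi : i < p ^ m) :
    ((p ^ m - 1).choose i : R) = (-1) ^ i := by
  have hcoeff (j : ℕ) : ((-X : R[X]) ^ j).coeff i = if i = j then (-1) ^ j else 0 := by
    rw [neg_pow, ← C_1, ← C_neg, ← C_pow, coeff_C_mul_X_pow]
  rw [← coeff_X_add_one_pow, X_add_one_pow_char_pow_sub_one, finsetSum_coeff]
  simp [hcoeff, hi]

theorem cast_choose_two_mul_char_pow_sub_two (k : ℕ) :
    ((2 * p ^ m - 2).choose k : R) =
      (-1) ^ k * #{i ∈ range (k + 1) | i < p ^ m ∧ k - i < p ^ m} := by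
  have hterm (i : ℕ) (hi : i ∈ range (k + 1)) :
      ((p ^ m - 1).choose i * (p ^ m - 1).choose (k - i) : ℕ) =
        if i < p ^ m ∧ k - i < p ^ m then ((-1) ^ k : R) else 0 := by
    rw [mem_range] at hi
    split_ifs with h
    · rw [Nat.cast_mul, cast_choose_char_pow_sub_one h.1, cast_choose_char_pow_sub_one h.2,
        ← pow_add, Nat.add_sub_cancel' (by omega)]
    · have hq : 0 < p ^ m := pow_pos (Fact.out : p.Prime).pos m
      have hzero : (p ^ m - 1).choose i * (p ^ m - 1).choose (k - i) = 0 := by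
        rcases not_and_or.mp h with h | h
        · rw [Nat.choose_eq_zero_of_lt (by omega), zero_mul]
        · rw [Nat.choose_eq_zero_of_lt (by omega : p ^ m - 1 < k - i), mul_zero]
      rw [hzero, Nat.cast_zero]
  rw [show 2 * p ^ m - 2 = (p ^ m - 1) + (p ^ m - 1) by omega, Nat.add_choose_eq,
    Nat.sum_antidiagonal_eq_sum_range_succ_mk, Nat.cast_sum, sum_congr rfl hterm, ← sum_filter,
    sum_const, nsmul_eq_mul, mul_comm]

theorem cast_choose_two_mul_char_pow_sub_two_of_lt {k : ℕ} (hk : k < p ^ m) :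
    ((2 * p ^ m - 2).choose k : R) = (-1) ^ k * (k + 1) := by
  rw [cast_choose_two_mul_char_pow_sub_two, filter_true_of_mem fun i hi ↦ by
    rw [mem_range] at hi; omega, card_range]
  push_cast; ring

theorem cast_choose_two_mul_char_pow_sub_two_of_le {k : ℕ} (hk : p ^ m ≤ k)
    (hk' : k ≤ 2 * p ^ m - 2) :
    ((2 * p ^ m - 2).choose k : R) = -((-1) ^ k * (k + 1)) := by
  have hm : m ≠ 0 := by rintro rfl; rw [pow_zero] at hk hk'; omega
  have hq : 0 < p ^ m := pow_pos (Fact.out : p.Prime).pos m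
  have hcard : #{i ∈ range (k + 1) | i < p ^ m ∧ k - i < p ^ m} + (k + 1) = 2 * p ^ m := by
    rw [show {i ∈ range (k + 1) | i < p ^ m ∧ k - i < p ^ m} = Ico (k + 1 - p ^ m) (p ^ m) by
      ext i; simp only [mem_filter, mem_range, mem_Ico]; omega, Nat.card_Ico]
    omega
  have hcast := congrArg (Nat.cast : ℕ → R) hcard
  push_cast [CharP.cast_eq_zero, zero_pow hm, mul_zero] at hcast
  rw [cast_choose_two_mul_char_pow_sub_two, eq_neg_of_add_eq_zero_left hcast]
  ring

end Binomial

section CubeRoots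

variable {K : Type*} [Field K] {p m r : ℕ} [Fact p.Prime] [CharP K p]

theorem char_pow_mod_three_ne_zero (h3 : (3 : K) ≠ 0) : p ^ m % 3 ≠ 0 := by
  intro h
  have hp3 : 3 = p :=
    (Nat.prime_dvd_prime_iff_eq Nat.prime_three Fact.out).mp
      (Nat.prime_three.dvd_of_dvd_pow (Nat.dvd_of_mod_eq_zero h))
  exact h3 (by exact_mod_cast hp3 ▸ CharP.cast_eq_zero K p)

theorem neg_three_pow_eq_of_isPrimitiveRoot {ω : K} (hω : IsPrimitiveRoot ω 3)
    (hqr : p ^ m = 2 * r + 1) : (-3 : K) ^ r = if p ^ m % 3 = 1 then 1 else -1 := by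
  have h3 : (3 : K) ≠ 0 := by exact_mod_cast hω.neZero'.out
  have hquad : ω ^ 2 + ω + 1 = 0 := by
    have h := hω.geom_sum_eq_zero (by norm_num)
    simp only [sum_range_succ, sum_range_zero] at h
    linear_combination h
  set s : K := 1 + 2 * ω
  have hs2 : s ^ 2 = -3 := by linear_combination 4 * hquad
  have hs0 : s ≠ 0 := fun h ↦ h3 (by linear_combination hs2 - s * h)
  have hsq : s ^ p ^ m = 1 + 2 * ω ^ (p ^ m % 3) := by
    rw [← iterateFrobenius_def, map_add, map_one, map_mul, map_ofNat, iterateFrobenius_def,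
      ← Nat.mod_add_div (p ^ m) 3, pow_add, pow_mul, hω.pow_eq_one, one_pow, mul_one,
      Nat.mod_add_div]
  have hpow : (-3 : K) ^ r * s = s ^ p ^ m := by rw [← hs2, ← pow_mul, ← pow_succ, hqr]
  have hmod := char_pow_mod_three_ne_zero (m := m) h3
  split_ifs with h1
  · rw [h1, pow_one] at hsq
    exact mul_right_cancel₀ hs0 (by rw [hpow, hsq, one_mul])
  · rw [show p ^ m % 3 = 2 by omega] at hsq
    exact mul_right_cancel₀ hs0 (by rw [hpow, hsq]; linear_combination 2 * hquad)

theorem exists_isPrimitiveRoot_three {F : Type*} [Field F] [Fintype F]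
    (h : 3 ∣ Fintype.card F - 1) : ∃ ω : F, IsPrimitiveRoot ω 3 := by
  classical
  obtain ⟨g, hg⟩ := exists_prime_orderOf_dvd_card (G := Fˣ) 3 (by rwa [Fintype.card_units])
  exact ⟨g, IsPrimitiveRoot.coe_units_iff.mpr (hg ▸ IsPrimitiveRoot.orderOf g)⟩

theorem neg_three_pow_eq_of_card [Fintype K] (hK : Fintype.card K = (p ^ m) ^ 2)
    (h3 : (3 : K) ≠ 0) (hqr : p ^ m = 2 * r + 1) :
    p ^ m % 3 = 1 ∧ (-3 : K) ^ r = 1 ∨ p ^ m % 3 = 2 ∧ (-3 : K) ^ r = -1 := by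
  have hmod := char_pow_mod_three_ne_zero (m := m) h3
  have hsq : (p ^ m) ^ 2 % 3 = 1 := by
    rw [Nat.pow_mod]; rcases (by omega : p ^ m % 3 = 1 ∨ p ^ m % 3 = 2) with h | h <;> rw [h]
  obtain ⟨ω, hω⟩ := exists_isPrimitiveRoot_three (F := K) (by rw [hK]; omega)
  rw [neg_three_pow_eq_of_isPrimitiveRoot hω hqr]
  split_ifs with h
  · exact .inl ⟨h, rfl⟩
  · exact .inr ⟨by omega, rfl⟩

theorem pow_mod_twelve_of_three_pow_eq_one [Fintype K] (hK : Fintype.card K = (p ^ m) ^ 2)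
    (h3 : (3 : K) ≠ 0) (hneg : (-1 : K) ≠ 1) (hqr : p ^ m = 2 * r + 1) (h : (3 : K) ^ r = 1) :
    p ^ m % 12 = 1 ∨ p ^ m % 12 = 11 := by
  have hsplit : (-1 : K) ^ r * (-3) ^ r = 1 := by rw [← mul_pow]; norm_num [h]
  rcases neg_three_pow_eq_of_card hK h3 hqr with ⟨hmod, h'⟩ | ⟨hmod, h'⟩
  · rw [h', mul_one, neg_one_pow_eq_one_iff_even hneg] at hsplit
    obtain ⟨s, hs⟩ := hsplit
    omega
  · rw [h', mul_neg_one, neg_eq_iff_eq_neg, neg_one_pow_eq_neg_one_iff_odd hneg] at hsplit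
    obtain ⟨s, hs⟩ := hsplit
    omega

end CubeRoots

section PowerSum

variable {K : Type*} [Field K] {p m : ℕ} [Fact p.Prime] [CharP K p] {t : K}

theorem sum_choose_mul_pow_ne_zero_of_even (ht0 : t ≠ 0) (heven : Even (p ^ m)) :
    ∑ k ∈ range (2 * p ^ m - 2 + 1) with p ^ m + 1 ∣ 2 * (k + 1),
      ((2 * p ^ m - 2).choose k : K) * t ^ (2 * p ^ m - 2 - k) ≠ 0 := by
  have hq : 2 ≤ p ^ m := by
    obtain ⟨j, hj⟩ := heven
    have := pow_pos (Fact.out : p.Prime).pos m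
    omega
  have hm : m ≠ 0 := by rintro rfl; rw [pow_zero] at hq; omega
  have hmem : p ^ m ∈ {k ∈ range (2 * p ^ m - 2 + 1) | p ^ m + 1 ∣ 2 * (k + 1)} := by
    rw [mem_filter, mem_range, Nat.succ_dvd_two_mul_succ_iff_of_even heven (by omega)]
    omega
  rw [sum_eq_single_of_mem _ hmem fun k hk hkq ↦ by
      rw [mem_filter, mem_range, Nat.succ_dvd_two_mul_succ_iff_of_even heven (by omega)] at hk
      exact absurd hk.2 hkq,
    cast_choose_two_mul_char_pow_sub_two_of_le le_rfl (by omega), neg_one_pow_char_pow]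
  simp [CharP.cast_eq_zero, hm, ht0]

theorem two_mul_sq_mul_sum_choose_mul_pow_of_odd {r : ℕ} (hr : r ≠ 0) (hqr : p ^ m = 2 * r + 1)
    (ht0 : t ≠ 0) (htq : t ^ p ^ m = t) :
    2 * t ^ 2 * ∑ k ∈ range (2 * p ^ m - 2 + 1) with p ^ m + 1 ∣ 2 * (k + 1),
      ((2 * p ^ m - 2).choose k : K) * t ^ (2 * p ^ m - 2 - k) =
      (-t) ^ r * t ^ 2 + 2 * t - 3 * (-t) ^ r := by
  have hm : m ≠ 0 := by rintro rfl; rw [pow_zero] at hqr; omega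
  have hq0 : ((p ^ m : ℕ) : K) = 0 := (CharP.cast_eq_zero_iff K p _).mpr (dvd_pow_self p hm)
  have hr0 : (2 * r + 1 : K) = 0 := by exact_mod_cast hqr ▸ hq0
  have ht2r : t ^ (2 * r) = 1 := pow_eq_one_of_pow_succ_eq_self ht0 (hqr ▸ htq)
  have hiff {k : ℕ} (hk : k ≤ 4 * r) :
      p ^ m + 1 ∣ 2 * (k + 1) ↔ k = r ∨ k = p ^ m ∨ k = 3 * r + 2 := by
    rw [hqr, add_assoc]
    exact Nat.two_mul_add_two_dvd_iff hk
  have hsub :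
      {k ∈ range (2 * p ^ m - 2 + 1) | p ^ m + 1 ∣ 2 * (k + 1)} ⊆ {r, p ^ m, 3 * r + 2} := by
    intro k hk
    rw [mem_filter, mem_range] at hk
    simpa using (hiff (by omega)).mp hk.2
  have hzero (k : ℕ) (hkT : k ∈ ({r, p ^ m, 3 * r + 2} : Finset ℕ))
      (hkS : k ∉ {k ∈ range (2 * p ^ m - 2 + 1) | p ^ m + 1 ∣ 2 * (k + 1)}) :
      ((2 * p ^ m - 2).choose k : K) * t ^ (2 * p ^ m - 2 - k) = 0 := by
    have hk : 4 * r < k := by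
      by_contra! hk
      exact hkS (mem_filter.mpr ⟨mem_range.mpr (by omega), (hiff hk).mpr (by simpa using hkT)⟩)
    rw [Nat.choose_eq_zero_of_lt (by omega), Nat.cast_zero, zero_mul]
  have e1 : 2 * t ^ 2 * (((2 * p ^ m - 2).choose r : K) * t ^ (2 * p ^ m - 2 - r)) =
      (-t) ^ r * t ^ 2 := by
    rw [cast_choose_two_mul_char_pow_sub_two_of_lt (by omega), show 2 * p ^ m - 2 - r = 2 * r + r by
      omega, pow_add, ht2r, neg_pow]
    linear_combination (-1) ^ r * t ^ r * t ^ 2 * hr0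
  have e2 : 2 * t ^ 2 * (((2 * p ^ m - 2).choose (p ^ m) : K) * t ^ (2 * p ^ m - 2 - p ^ m)) =
      2 * t := by
    have h : t ^ (2 * p ^ m - 2 - p ^ m) * t = 1 := by
      rw [← pow_succ, show 2 * p ^ m - 2 - p ^ m + 1 = 2 * r by omega, ht2r]
    rw [cast_choose_two_mul_char_pow_sub_two_of_le le_rfl (by omega), neg_one_pow_char_pow, hq0]
    linear_combination 2 * t * h
  have e3 : 2 * t ^ 2 * (((2 * p ^ m - 2).choose (3 * r + 2) : K) *
      t ^ (2 * p ^ m - 2 - (3 * r + 2))) = -3 * (-t) ^ r := by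
    rcases eq_or_lt_of_le (Nat.one_le_iff_ne_zero.mpr hr) with rfl | hr2
    -- `q = 3`: the index `3r + 2` lies beyond `2q - 2`, and `3 = 0` in `K`.
    · rw [Nat.choose_eq_zero_of_lt (by omega), Nat.cast_zero]
      linear_combination -t * hr0
    · have h : t ^ (2 * p ^ m - 2 - (3 * r + 2)) * t ^ 2 = t ^ r := by
        rw [← pow_add, show 2 * p ^ m - 2 - (3 * r + 2) + 2 = r by omega]
      have hsign : (-1 : K) ^ (3 * r + 2) = (-1) ^ r := by
        rw [show 3 * r + 2 = r + 2 * (r + 1) by ring, pow_add, pow_mul]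
        norm_num
      rw [cast_choose_two_mul_char_pow_sub_two_of_le (by omega) (by omega), hsign, neg_pow]
      push_cast
      linear_combination (-2 * (-1) ^ r * (3 * r + 3)) * h - 3 * (-1) ^ r * t ^ r * hr0
  rw [sum_subset hsub hzero, sum_insert (by simp; omega), sum_insert (by simp; omega),
    sum_singleton, mul_add, mul_add, e1, e2, e3]
  ring

theorem eq_one_or_neg_three_or_three_of_odd [Fintype K] (hK : Fintype.card K = (p ^ m) ^ 2)
    {r : ℕ} (hr : r ≠ 0) (hqr : p ^ m = 2 * r + 1) (ht0 : t ≠ 0) (htq : t ^ p ^ m = t)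
    (h : (-t) ^ r * t ^ 2 + 2 * t - 3 * (-t) ^ r = 0) :
    (t = 1 ∧ p ^ m % 4 = 1) ∨ (t = -3 ∧ (p ^ m % 12 = 1 ∨ p ^ m % 12 = 11)) ∨
      (t = 3 ∧ p ^ m % 6 = 5) := by
  have hneg := neg_one_ne_one_of_char_pow_eq_odd (K := K) hr hqr
  have hζ : ((-t) ^ r) ^ 2 = 1 := by
    rw [← pow_mul, mul_comm, pow_mul, neg_sq, ← pow_mul,
      pow_eq_one_of_pow_succ_eq_self ht0 (hqr ▸ htq)]
  rcases eq_of_mul_sq_add_two_mul_sub_three_mul_eq_zero hζ h with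
    ⟨rfl, h⟩ | ⟨rfl, h⟩ | ⟨rfl, h⟩ | ⟨rfl, h⟩
  · obtain ⟨s, hs⟩ := (neg_one_pow_eq_one_iff_even hneg).mp h
    exact .inl ⟨rfl, by omega⟩
  · rw [neg_neg] at h
    exact .inr <| .inl ⟨rfl, pow_mod_twelve_of_three_pow_eq_one hK (by simpa using ht0) hneg hqr h⟩
  · rcases neg_three_pow_eq_of_card hK ht0 hqr with ⟨_, h'⟩ | ⟨hmod, -⟩
    · exact absurd (h'.symm.trans h) hneg.symm
    · exact .inr <| .inr ⟨rfl, by omega⟩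
  · rw [neg_neg, one_pow] at h
    exact absurd h.symm hneg

end PowerSum

/-- Necessity: let `q > 2` be a prime power, `t ∈ 𝔽_q^*`, and
`f(x) = x^(q-2) + t·x^(q²-q-1)`. If `f` is a permutation polynomial of `𝔽_{q²}`,
then (i) `t = 1`, `q ≡ 1 (mod 4)`, or (ii) `t = -3`, `q ≡ ±1 (mod 12)`, or
(iii) `t = 3`, `q ≡ -1 (mod 6)`. -/
theorem stmt_4 (p m q : ℕ) (hp : p.Prime) (hq : q = p ^ m) (hq2 : 2 < q)
    (K : Type) [Field K] [Fintype K] (hK : Fintype.card K = q ^ 2)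
    (t : K) (ht0 : t ≠ 0) (htq : t ^ q = t)
    (hbij : Function.Bijective (fun x : K => x ^ (q - 2) + t * x ^ (q ^ 2 - q - 1))) :
    (t = 1 ∧ q % 4 = 1) ∨
    (t = -3 ∧ (q % 12 = 1 ∨ q % 12 = 11)) ∨
    (t = 3 ∧ q % 6 = 5) := by
  have : Fact p.Prime := ⟨hp⟩
  subst hq
  have : CharP K p := charP_of_card_eq_prime_pow (f := m * 2) (by rw [hK, pow_mul])
  have hq3 : 3 * p ^ m ≤ (p ^ m) ^ 2 := by nlinarith
  have hsum := FiniteField.sum_choose_mul_pow_eq_zero_of_bijective (n := 2 * p ^ m - 2)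
    (by omega) (by omega) (by omega) (by omega) hbij
  rw [hK, filter_congr fun k hk ↦ Nat.sq_sub_one_dvd_mul_add_mul_iff (by omega) (by
    rw [mem_range] at hk; omega)] at hsum
  rcases Nat.even_or_odd' (p ^ m) with ⟨r, hr | hr⟩
  · exact absurd hsum (sum_choose_mul_pow_ne_zero_of_even ht0 ⟨r, by omega⟩)
  · refine eq_one_or_neg_three_or_three_of_odd hK (by omega) hr ht0 htq ?_
    rw [← two_mul_sq_mul_sum_choose_mul_pow_of_odd (by omega) hr ht0 htq, hsum, mul_zero]
end

section
/- For every integer n ≥ 0, S₁(n+2) + 24·(36n² + 126n + 113)·S₁(n+1) + 46656·(n+1)²·(2n+3)²·S₁(n) = 0. -/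
open Finset

/-- `S₁(n) = Σ_{k=0}^{2n+1} C(2n+1,k)·(∏_{j=1}^{2n+1}(6n-2k+4-2j))·(-1)^k·3^(2k+1)`. -/
def S₁ (n : ℕ) : ℤ :=
  ∑ k ∈ range (2 * n + 2), ((2 * n + 1).choose k : ℤ) *
    (∏ j ∈ Icc 1 (2 * n + 1), (6 * (n : ℤ) - 2 * (k : ℤ) + 4 - 2 * (j : ℤ))) *
    (-1) ^ k * 3 ^ (2 * k + 1)

/-! ### Auxiliary machinery for a Zeilberger-style telescoping proof -/

/-- `Qp m x = ∏_{j=1}^m (x - 2j)`. -/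
def Qp (m : ℕ) (x : ℤ) : ℤ := ∏ j ∈ Icc 1 m, (x - 2 * (j : ℤ))

lemma Qp_top (a : ℕ) (x : ℤ) : Qp (a + 1) x = Qp a x * (x - 2 * (a : ℤ) - 2) := by
  simp only [Qp]
  rw [Finset.prod_Icc_succ_top (by omega : 1 ≤ a + 1)]
  push_cast
  ring

lemma Qp_bot (a : ℕ) (x : ℤ) : Qp (a + 1) x = (x - 2) * Qp a (x - 2) := by
  induction a generalizing x with
  | zero => simp [Qp]
  | succ b ih =>
      rw [Qp_top (b + 1) x, ih x, Qp_top b (x - 2)]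
      push_cast
      ring

/-- The numerator polynomial of the telescoping certificate. -/
def Mp (x y : ℤ) : ℤ :=
  (-16911360 - 117192576*x - 352860288*x^2 - 606701088*x^3 - 657184224*x^4
      - 465508896*x^5 - 215790048*x^6 - 63167040*x^7 - 10601280*x^8 - 777600*x^9)
  + (29006592 + 176553856*x + 462070336*x^2 + 679259072*x^3 + 613546400*x^4
      + 348753024*x^5 + 121846752*x^6 + 23925888*x^7 + 2021760*x^8) * y
  + (-19378944 - 102736992*x - 230352288*x^2 - 283043904*x^3 - 205770336*x^4
      - 88479840*x^5 - 20829312*x^6 - 2070144*x^7) * y^2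
  + (6294336 + 28770496*x + 54214432*x^2 + 53893952*x^3 + 29800352*x^4
      + 8687232*x^5 + 1042560*x^6) * y^3
  + (-993024 - 3863712*x - 5954496*x^2 - 4545120*x^3 - 1719360*x^4 - 258048*x^5) * y^4
  + (60864 + 198208*x + 239488*x^2 + 127232*x^3 + 25088*x^4) * y^5

lemma Mp_def (x y : ℤ) : Mp x y =
  (-16911360 - 117192576*x - 352860288*x^2 - 606701088*x^3 - 657184224*x^4
      - 465508896*x^5 - 215790048*x^6 - 63167040*x^7 - 10601280*x^8 - 777600*x^9)
  + (29006592 + 176553856*x + 462070336*x^2 + 679259072*x^3 + 613546400*x^4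
      + 348753024*x^5 + 121846752*x^6 + 23925888*x^7 + 2021760*x^8) * y
  + (-19378944 - 102736992*x - 230352288*x^2 - 283043904*x^3 - 205770336*x^4
      - 88479840*x^5 - 20829312*x^6 - 2070144*x^7) * y^2
  + (6294336 + 28770496*x + 54214432*x^2 + 53893952*x^3 + 29800352*x^4
      + 8687232*x^5 + 1042560*x^6) * y^3
  + (-993024 - 3863712*x - 5954496*x^2 - 4545120*x^3 - 1719360*x^4 - 258048*x^5) * y^4
  + (60864 + 198208*x + 239488*x^2 + 127232*x^3 + 25088*x^4) * y^5 := rfl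

/-- The summand of `S₁`. -/
def Tm (n k : ℕ) : ℤ :=
  ((2 * n + 1).choose k : ℤ) * Qp (2 * n + 1) (6 * (n : ℤ) - 2 * (k : ℤ) + 4) *
    (-1) ^ k * 3 ^ (2 * k + 1)

lemma S₁_eq_Tm (n : ℕ) : S₁ n = ∑ k ∈ range (2 * n + 2), Tm n k := rfl

lemma S₁_eq_Tm_ext (n N : ℕ) (hN : 2 * n + 2 ≤ N) :
    S₁ n = ∑ k ∈ range N, Tm n k := by
  rw [S₁_eq_Tm]
  apply Finset.sum_subset (Finset.range_subset_range.mpr hN)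
  intro k hk hnk
  simp only [Finset.mem_range, not_lt] at hnk
  simp [Tm, Nat.choose_eq_zero_of_lt (show 2 * n + 1 < k by omega)]

/-- The telescoping certificate term `G̃`. -/
def Gt (m k : ℕ) : ℤ :=
  12 * (-9) ^ k * Mp ((m : ℤ) + 1) (k : ℤ) * (k : ℤ) * (2 * (m : ℤ) + 8 - (k : ℤ)) *
    ((2 * m + 8).choose k : ℤ) * Qp (2 * m + 1) (6 * (m : ℤ) + 10 - 2 * (k : ℤ))

lemma chooseL (a k : ℕ) :
    ((a : ℤ) + 1 - k) * ((a + 1).choose k : ℤ) = ((a : ℤ) + 1) * (a.choose k : ℤ) := by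
  rcases le_or_gt k (a + 1) with h | h
  · have h2 := Nat.choose_mul_succ_eq a k
    zify [h] at h2
    linear_combination -h2
  · rw [Nat.choose_eq_zero_of_lt h, Nat.choose_eq_zero_of_lt (by omega)]
    simp

lemma chooseR (a k : ℕ) (h : k < a) :
    ((k : ℤ) + 1) * (a.choose (k + 1) : ℤ) = ((a : ℤ) - k) * (a.choose k : ℤ) := by
  have h2 := Nat.choose_succ_right_eq a k
  zify [h.le] at h2
  linear_combination h2

lemma pow_merge (k : ℕ) : (-1 : ℤ) ^ k * 3 ^ (2 * k + 1) = 3 * (-9 : ℤ) ^ k := by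
  rw [pow_succ, pow_mul, show (-9 : ℤ) = (-1) * 3 ^ 2 by norm_num, mul_pow]
  ring

set_option maxRecDepth 8000 in
set_option maxHeartbeats 1600000 in
/-- The key pointwise telescoping identity. -/
lemma key (m k : ℕ) (hk : k < 2 * m + 8) :
    Gt m (k + 1) - Gt m k
      = (2*(m:ℤ)+4) * (2*(m:ℤ)+5) * (2*(m:ℤ)+6) * (2*(m:ℤ)+7) * (2*(m:ℤ)+8) *
        (Tm (m + 3) k
          + (24 * (36*((m:ℤ)+1)^2 + 126*((m:ℤ)+1) + 113)) * Tm (m + 2) k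
          + (46656 * ((m:ℤ)+2)^2 * (2*(m:ℤ)+5)^2) * Tm (m + 1) k) := by
  -- product decomposition lemmas
  have p3 : Qp (2 * (m + 3) + 1) (6 * ((m:ℤ) + 3) - 2 * (k:ℤ) + 4)
      = (6*(m:ℤ)-2*(k:ℤ)+20) * (6*(m:ℤ)-2*(k:ℤ)+18) * (6*(m:ℤ)-2*(k:ℤ)+16)
        * (6*(m:ℤ)-2*(k:ℤ)+14) * (6*(m:ℤ)-2*(k:ℤ)+12) * (6*(m:ℤ)-2*(k:ℤ)+10)
        * (6*(m:ℤ)-2*(k:ℤ)+8) * Qp (2 * m) (6*(m:ℤ) + 8 - 2*(k:ℤ)) := by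
    rw [show 2 * (m + 3) + 1 = (2*m+6) + 1 by omega, Qp_bot,
        show 2*m+6 = (2*m+5) + 1 by omega, Qp_bot,
        show 2*m+5 = (2*m+4) + 1 by omega, Qp_bot,
        show 2*m+4 = (2*m+3) + 1 by omega, Qp_bot,
        show 2*m+3 = (2*m+2) + 1 by omega, Qp_bot,
        show 2*m+2 = (2*m+1) + 1 by omega, Qp_bot, Qp_bot,
        show 6 * ((m:ℤ) + 3) - 2 * (k:ℤ) + 4 - 2 - 2 - 2 - 2 - 2 - 2 - 2
          = 6*(m:ℤ) + 8 - 2*(k:ℤ) by ring]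
    ring
  have p2 : Qp (2 * (m + 2) + 1) (6 * ((m:ℤ) + 2) - 2 * (k:ℤ) + 4)
      = (6*(m:ℤ)-2*(k:ℤ)+14) * (6*(m:ℤ)-2*(k:ℤ)+12) * (6*(m:ℤ)-2*(k:ℤ)+10)
        * (6*(m:ℤ)-2*(k:ℤ)+8) * (2*(m:ℤ)+6-2*(k:ℤ))
        * Qp (2 * m) (6*(m:ℤ) + 8 - 2*(k:ℤ)) := by
    rw [show 2 * (m + 2) + 1 = (2*m+4) + 1 by omega, Qp_bot,
        show 2*m+4 = (2*m+3) + 1 by omega, Qp_bot,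
        show 2*m+3 = (2*m+2) + 1 by omega, Qp_bot,
        show 2*m+2 = (2*m+1) + 1 by omega, Qp_bot, Qp_top,
        show 6 * ((m:ℤ) + 2) - 2 * (k:ℤ) + 4 - 2 - 2 - 2 - 2
          = 6*(m:ℤ) + 8 - 2*(k:ℤ) by ring]
    push_cast
    ring
  have p1 : Qp (2 * (m + 1) + 1) (6 * ((m:ℤ) + 1) - 2 * (k:ℤ) + 4)
      = (6*(m:ℤ)-2*(k:ℤ)+8) * (2*(m:ℤ)+6-2*(k:ℤ)) * (2*(m:ℤ)+4-2*(k:ℤ))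
        * Qp (2 * m) (6*(m:ℤ) + 8 - 2*(k:ℤ)) := by
    rw [show 2 * (m + 1) + 1 = (2*m+2) + 1 by omega, Qp_bot,
        show 2*m+2 = (2*m+1) + 1 by omega, Qp_top, Qp_top,
        show 6 * ((m:ℤ) + 1) - 2 * (k:ℤ) + 4 - 2 = 6*(m:ℤ) + 8 - 2*(k:ℤ) by ring]
    push_cast
    ring
  have p4 : Qp (2 * m + 1) (6 * (m:ℤ) + 10 - 2 * (k:ℤ))
      = (6*(m:ℤ)-2*(k:ℤ)+8) * Qp (2 * m) (6*(m:ℤ) + 8 - 2*(k:ℤ)) := by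
    rw [Qp_bot, show 6 * (m:ℤ) + 10 - 2 * (k:ℤ) - 2 = 6*(m:ℤ) + 8 - 2*(k:ℤ) by ring]
    ring
  have p5 : Qp (2 * m + 1) (6 * (m:ℤ) + 10 - 2 * ((k:ℤ) + 1))
      = (2*(m:ℤ)+6-2*(k:ℤ)) * Qp (2 * m) (6*(m:ℤ) + 8 - 2*(k:ℤ)) := by
    rw [Qp_top, show 6 * (m:ℤ) + 10 - 2 * ((k:ℤ) + 1) = 6*(m:ℤ) + 8 - 2*(k:ℤ) by ring]
    push_cast
    ring
  -- binomial coefficient relations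
  have s7 := chooseL (2*m+7) k
  rw [show 2*m+7+1 = 2*m+8 by omega] at s7
  push_cast at s7
  have s6 := chooseL (2*m+6) k
  rw [show 2*m+6+1 = 2*m+7 by omega] at s6
  push_cast at s6
  have s5 := chooseL (2*m+5) k
  rw [show 2*m+5+1 = 2*m+6 by omega] at s5
  push_cast at s5
  have s4 := chooseL (2*m+4) k
  rw [show 2*m+4+1 = 2*m+5 by omega] at s4
  push_cast at s4
  have s3 := chooseL (2*m+3) k
  rw [show 2*m+3+1 = 2*m+4 by omega] at s3
  push_cast at s3
  have hA : (2*(m:ℤ)+4-k)*(2*(m:ℤ)+5-k)*(2*(m:ℤ)+6-k)*(2*(m:ℤ)+7-k)*(2*(m:ℤ)+8-k)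
        * ((2*m+8).choose k : ℤ)
      = (2*(m:ℤ)+4)*(2*(m:ℤ)+5)*(2*(m:ℤ)+6)*(2*(m:ℤ)+7)*(2*(m:ℤ)+8)
        * ((2*m+3).choose k : ℤ) := by
    linear_combination (norm := ring_nf)
      ((2*(m:ℤ)+4-k)*(2*(m:ℤ)+5-k)*(2*(m:ℤ)+6-k)*(2*(m:ℤ)+7-k)) * s7
      + ((2*(m:ℤ)+4-k)*(2*(m:ℤ)+5-k)*(2*(m:ℤ)+6-k)*(2*(m:ℤ)+8)) * s6
      + ((2*(m:ℤ)+4-k)*(2*(m:ℤ)+5-k)*(2*(m:ℤ)+7)*(2*(m:ℤ)+8)) * s5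
      + ((2*(m:ℤ)+4-k)*(2*(m:ℤ)+6)*(2*(m:ℤ)+7)*(2*(m:ℤ)+8)) * s4
      + ((2*(m:ℤ)+5)*(2*(m:ℤ)+6)*(2*(m:ℤ)+7)*(2*(m:ℤ)+8)) * s3
  have hB : (2*(m:ℤ)+6-k)*(2*(m:ℤ)+7-k)*(2*(m:ℤ)+8-k) * ((2*m+8).choose k : ℤ)
      = (2*(m:ℤ)+6)*(2*(m:ℤ)+7)*(2*(m:ℤ)+8) * ((2*m+5).choose k : ℤ) := by
    linear_combination (norm := ring_nf)
      ((2*(m:ℤ)+6-k)*(2*(m:ℤ)+7-k)) * s7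
      + ((2*(m:ℤ)+6-k)*(2*(m:ℤ)+8)) * s6
      + ((2*(m:ℤ)+7)*(2*(m:ℤ)+8)) * s5
  have hC : (2*(m:ℤ)+8-k) * ((2*m+8).choose k : ℤ)
      = (2*(m:ℤ)+8) * ((2*m+7).choose k : ℤ) := by
    linear_combination s7
  have hD := chooseR (2*m+8) k hk
  push_cast at hD
  have hp := pow_merge k
  have hM1 := Mp_def ((m:ℤ)+1) (k:ℤ)
  have hM2 := Mp_def ((m:ℤ)+1) ((k:ℤ)+1)
  simp only [Gt, Tm]
  rw [show ((m+3:ℕ):ℤ) = (m:ℤ)+3 from by push_cast; ring,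
      show ((m+2:ℕ):ℤ) = (m:ℤ)+2 from by push_cast; ring,
      show ((m+1:ℕ):ℤ) = (m:ℤ)+1 from by push_cast; ring,
      show ((k+1:ℕ):ℤ) = (k:ℤ)+1 from by push_cast; ring]
  rw [p3, p2, p1, p4, p5, pow_succ]
  linear_combination (norm := ring_nf)
    (-108 * (-9:ℤ)^k * Mp ((m:ℤ)+1) ((k:ℤ)+1) * (2*(m:ℤ)+7-k)
      * ((2*(m:ℤ)+6-2*k) * Qp (2*m) (6*(m:ℤ)+8-2*(k:ℤ)))) * hD
    + (3 * (-9:ℤ)^k * Qp (2*m) (6*(m:ℤ)+8-2*(k:ℤ))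
        * ((6*(m:ℤ)-2*(k:ℤ)+20)*(6*(m:ℤ)-2*(k:ℤ)+18)*(6*(m:ℤ)-2*(k:ℤ)+16)
          *(6*(m:ℤ)-2*(k:ℤ)+14)*(6*(m:ℤ)-2*(k:ℤ)+12)*(6*(m:ℤ)-2*(k:ℤ)+10)
          *(6*(m:ℤ)-2*(k:ℤ)+8))
        * ((2*(m:ℤ)+4)*(2*(m:ℤ)+5)*(2*(m:ℤ)+6)*(2*(m:ℤ)+7))) * hC
    + (3 * (24 * (36*((m:ℤ)+1)^2 + 126*((m:ℤ)+1) + 113)) * (-9:ℤ)^k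
        * Qp (2*m) (6*(m:ℤ)+8-2*(k:ℤ))
        * ((6*(m:ℤ)-2*(k:ℤ)+14)*(6*(m:ℤ)-2*(k:ℤ)+12)*(6*(m:ℤ)-2*(k:ℤ)+10)
          *(6*(m:ℤ)-2*(k:ℤ)+8)*(2*(m:ℤ)+6-2*(k:ℤ)))
        * ((2*(m:ℤ)+4)*(2*(m:ℤ)+5))) * hB
    + (3 * (46656 * ((m:ℤ)+2)^2 * (2*(m:ℤ)+5)^2) * (-9:ℤ)^k
        * Qp (2*m) (6*(m:ℤ)+8-2*(k:ℤ))
        * ((6*(m:ℤ)-2*(k:ℤ)+8)*(2*(m:ℤ)+6-2*(k:ℤ))*(2*(m:ℤ)+4-2*(k:ℤ)))) * hA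
    + (-(2*(m:ℤ)+4)*(2*(m:ℤ)+5)*(2*(m:ℤ)+6)*(2*(m:ℤ)+7)*(2*(m:ℤ)+8)
        * (((2*m+7).choose k : ℤ)
            * ((6*(m:ℤ)-2*(k:ℤ)+20)*(6*(m:ℤ)-2*(k:ℤ)+18)*(6*(m:ℤ)-2*(k:ℤ)+16)
              *(6*(m:ℤ)-2*(k:ℤ)+14)*(6*(m:ℤ)-2*(k:ℤ)+12)*(6*(m:ℤ)-2*(k:ℤ)+10)
              *(6*(m:ℤ)-2*(k:ℤ)+8)) * Qp (2*m) (6*(m:ℤ)+8-2*(k:ℤ))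
          + (24 * (36*((m:ℤ)+1)^2 + 126*((m:ℤ)+1) + 113)) * ((2*m+5).choose k : ℤ)
            * ((6*(m:ℤ)-2*(k:ℤ)+14)*(6*(m:ℤ)-2*(k:ℤ)+12)*(6*(m:ℤ)-2*(k:ℤ)+10)
              *(6*(m:ℤ)-2*(k:ℤ)+8)*(2*(m:ℤ)+6-2*(k:ℤ))) * Qp (2*m) (6*(m:ℤ)+8-2*(k:ℤ))
          + (46656 * ((m:ℤ)+2)^2 * (2*(m:ℤ)+5)^2) * ((2*m+3).choose k : ℤ)
            * ((6*(m:ℤ)-2*(k:ℤ)+8)*(2*(m:ℤ)+6-2*(k:ℤ))*(2*(m:ℤ)+4-2*(k:ℤ)))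
            * Qp (2*m) (6*(m:ℤ)+8-2*(k:ℤ)))) * hp
    + (-12 * (-9:ℤ)^k * Qp (2*m) (6*(m:ℤ)+8-2*(k:ℤ)) * ((2*m+8).choose k : ℤ)
        * (k:ℤ) * (2*(m:ℤ)+8-k) * (6*(m:ℤ)-2*(k:ℤ)+8)) * hM1
    + (-108 * (-9:ℤ)^k * Qp (2*m) (6*(m:ℤ)+8-2*(k:ℤ)) * ((2*m+8).choose k : ℤ)
        * (2*(m:ℤ)+7-k) * (2*(m:ℤ)+8-k) * (2*(m:ℤ)+6-2*(k:ℤ))) * hM2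

set_option maxRecDepth 4000 in
lemma Gt_zero (m : ℕ) : Gt m 0 = 0 := by simp [Gt]

set_option maxRecDepth 4000 in
lemma Gt_top (m : ℕ) : Gt m (2 * m + 8) = 0 := by
  simp only [Gt]
  push_cast
  ring

/-- The second-order recurrence satisfied by `S₁`:
`S₁(n+2) + 24(36n²+126n+113)·S₁(n+1) + 46656(n+1)²(2n+3)²·S₁(n) = 0`. -/
theorem stmt_6 (n : ℕ) :
    S₁ (n + 2) + 24 * (36 * (n : ℤ) ^ 2 + 126 * (n : ℤ) + 113) * S₁ (n + 1)
      + 46656 * ((n : ℤ) + 1) ^ 2 * (2 * (n : ℤ) + 3) ^ 2 * S₁ n = 0 := by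
  cases n with
  | zero =>
      norm_num [S₁, Finset.sum_range_succ, Nat.choose,
        show (Icc 1 1 : Finset ℕ) = {1} from rfl,
        show (Icc 1 3 : Finset ℕ) = {1, 2, 3} from rfl,
        show (Icc 1 5 : Finset ℕ) = {1, 2, 3, 4, 5} from rfl]
  | succ m =>
      have hsum :
          (2*(m:ℤ)+4) * (2*(m:ℤ)+5) * (2*(m:ℤ)+6) * (2*(m:ℤ)+7) * (2*(m:ℤ)+8) *
            (S₁ (m + 3)
              + (24 * (36*((m:ℤ)+1)^2 + 126*((m:ℤ)+1) + 113)) * S₁ (m + 2)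
              + (46656 * ((m:ℤ)+2)^2 * (2*(m:ℤ)+5)^2) * S₁ (m + 1)) = 0 := by
        rw [S₁_eq_Tm_ext (m + 3) (2*m+8) (by omega),
            S₁_eq_Tm_ext (m + 2) (2*m+8) (by omega),
            S₁_eq_Tm_ext (m + 1) (2*m+8) (by omega)]
        have step : ∀ k ∈ range (2*m+8),
            (2*(m:ℤ)+4) * (2*(m:ℤ)+5) * (2*(m:ℤ)+6) * (2*(m:ℤ)+7) * (2*(m:ℤ)+8) *
              (Tm (m + 3) k
                + (24 * (36*((m:ℤ)+1)^2 + 126*((m:ℤ)+1) + 113)) * Tm (m + 2) k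
                + (46656 * ((m:ℤ)+2)^2 * (2*(m:ℤ)+5)^2) * Tm (m + 1) k)
            = Gt m (k + 1) - Gt m k := by
          intro k hk
          exact (key m k (Finset.mem_range.mp hk)).symm
        calc (2*(m:ℤ)+4) * (2*(m:ℤ)+5) * (2*(m:ℤ)+6) * (2*(m:ℤ)+7) * (2*(m:ℤ)+8) *
              ((∑ k ∈ range (2*m+8), Tm (m + 3) k)
                + (24 * (36*((m:ℤ)+1)^2 + 126*((m:ℤ)+1) + 113)) *
                    (∑ k ∈ range (2*m+8), Tm (m + 2) k)
                + (46656 * ((m:ℤ)+2)^2 * (2*(m:ℤ)+5)^2) *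
                    (∑ k ∈ range (2*m+8), Tm (m + 1) k))
            = ∑ k ∈ range (2*m+8),
                (2*(m:ℤ)+4) * (2*(m:ℤ)+5) * (2*(m:ℤ)+6) * (2*(m:ℤ)+7) * (2*(m:ℤ)+8) *
                  (Tm (m + 3) k
                    + (24 * (36*((m:ℤ)+1)^2 + 126*((m:ℤ)+1) + 113)) * Tm (m + 2) k
                    + (46656 * ((m:ℤ)+2)^2 * (2*(m:ℤ)+5)^2) * Tm (m + 1) k) := by
              rw [Finset.mul_sum, Finset.mul_sum,
                  ← Finset.sum_add_distrib, ← Finset.sum_add_distrib, Finset.mul_sum]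
          _ = ∑ k ∈ range (2*m+8), (Gt m (k + 1) - Gt m k) :=
              Finset.sum_congr rfl step
          _ = Gt m (2*m+8) - Gt m 0 := Finset.sum_range_sub (Gt m) (2*m+8)
          _ = 0 := by rw [Gt_top, Gt_zero]; ring
      have hD : ((2*(m:ℤ)+4) * (2*(m:ℤ)+5) * (2*(m:ℤ)+6) * (2*(m:ℤ)+7) * (2*(m:ℤ)+8)) ≠ 0 := by
        positivity
      have h2 : S₁ (m + 3)
          + (24 * (36*((m:ℤ)+1)^2 + 126*((m:ℤ)+1) + 113)) * S₁ (m + 2)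
          + (46656 * ((m:ℤ)+2)^2 * (2*(m:ℤ)+5)^2) * S₁ (m + 1) = 0 :=
        by
          rcases mul_eq_zero.mp hsum with h | h
          · exact absurd h hD
          · exact h
      rw [show m + 1 + 2 = m + 3 by omega, show m + 1 + 1 = m + 2 by omega]
      push_cast
      linear_combination h2
end

section
/- For every integer n ≥ 0, S₂(n+2) + 24·(36n² + 126n + 113)·S₂(n+1) + 46656·(n+1)²·(2n+3)²·S₂(n) = 0. -/
open Finset

/-- `S₂(n) = Σ_{k=0}^{2n+1} C(2n+1,k)·(∏_{j=1}^{2n+1}(6n-2k+5-2j))·(-1)^k·3^(2k)`. -/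
def S₂ (n : ℕ) : ℤ :=
  ∑ k ∈ range (2 * n + 2), ((2 * n + 1).choose k : ℤ) *
    (∏ j ∈ Icc 1 (2 * n + 1), (6 * (n : ℤ) - 2 * (k : ℤ) + 5 - 2 * (j : ℤ))) *
    (-1) ^ k * 3 ^ (2 * k)

/-- falling-type product `∏_{j=1}^{L} (C - 2j)` -/
def Wp (L : ℕ) (C : ℤ) : ℤ := ∏ j ∈ Icc 1 L, (C - 2 * (j : ℤ))

lemma Wp_zero (C : ℤ) : Wp 0 C = 1 := by simp [Wp]

lemma Wp_top (L : ℕ) (C : ℤ) : Wp (L+1) C = Wp L C * (C - 2*((L:ℤ)+1)) := by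
  unfold Wp
  rw [Finset.prod_Icc_succ_top (by omega : 1 ≤ L + 1)]
  push_cast
  ring

lemma Wp_bot (L : ℕ) (C : ℤ) : Wp (L+1) C = (C - 2) * Wp L (C - 2) := by
  induction L generalizing C with
  | zero => simp [Wp]
  | succ L ih =>
    rw [Wp_top (L+1) C, ih C, Wp_top L (C-2)]
    push_cast
    ring

/-- certificate polynomial -/
def Yp (m k : ℕ) : ℤ := (-3110400:ℤ)*(m:ℤ)^9*(k:ℤ) + (8087040:ℤ)*(m:ℤ)^8*(k:ℤ)^2 + (-72472320:ℤ)*(m:ℤ)^8*(k:ℤ) + (-8280576:ℤ)*(m:ℤ)^7*(k:ℤ)^3 + (164305152:ℤ)*(m:ℤ)^7*(k:ℤ)^2 + (-745891200:ℤ)*(m:ℤ)^7*(k:ℤ) + (4170240:ℤ)*(m:ℤ)^6*(k:ℤ)^4 + (-144069120:ℤ)*(m:ℤ)^6*(k:ℤ)^3 + (1452011904:ℤ)*(m:ℤ)^6*(k:ℤ)^2 + (-4450836672:ℤ)*(m:ℤ)^6*(k:ℤ) + (-1032192:ℤ)*(m:ℤ)^5*(k:ℤ)^5 + (60662016:ℤ)*(m:ℤ)^5*(k:ℤ)^4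 + (-1068684672:ℤ)*(m:ℤ)^5*(k:ℤ)^3 + (7290950976:ℤ)*(m:ℤ)^5*(k:ℤ)^2 + (-16970246304:ℤ)*(m:ℤ)^5*(k:ℤ) + (100352:ℤ)*(m:ℤ)^4*(k:ℤ)^6 + (-12145920:ℤ)*(m:ℤ)^4*(k:ℤ)^5 + (366120704:ℤ)*(m:ℤ)^4*(k:ℤ)^4 + (-4382093568:ℤ)*(m:ℤ)^4*(k:ℤ)^3 + (22754344352:ℤ)*(m:ℤ)^4*(k:ℤ)^2 + (-42877713744:ℤ)*(m:ℤ)^4*(k:ℤ) + (910336:ℤ)*(m:ℤ)^3*(k:ℤ)^6 + (-56994432:ℤ)*(m:ℤ)^3*(k:ℤ)^5 + (1173713536:ℤ)*(m:ℤ)^3*(k:ℤ)^4 + (-10729134816:ℤ)*(m:ℤ)^3*(k:ℤ)^3 + (45202522288:ℤ)*(m:ℤ)^3*(k:ℤ)^2 + (-71795358024:ℤ)*(m:ℤ)^3*(k:ℤ) + (3086848:ℤ)*(m:ℤ)^2*(k:ℤ)^6 + (-133302720:ℤ)*(m:ℤ)^2*(k:ℤ)^5 + (2108193184:ℤ)*(m:ℤ)^2*(k:ℤ)^4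 + (-15687977568:ℤ)*(m:ℤ)^2*(k:ℤ)^3 + (55825218952:ℤ)*(m:ℤ)^2*(k:ℤ)^2 + (-76826982852:ℤ)*(m:ℤ)^2*(k:ℤ) + (4636928:ℤ)*(m:ℤ)*(k:ℤ)^6 + (-155388000:ℤ)*(m:ℤ)*(k:ℤ)^5 + (2011833680:ℤ)*(m:ℤ)*(k:ℤ)^4 + (-12686108040:ℤ)*(m:ℤ)*(k:ℤ)^3 + (39192246812:ℤ)*(m:ℤ)*(k:ℤ)^2 + (-47677441560:ℤ)*(m:ℤ)*(k:ℤ) + (2603520:ℤ)*(k:ℤ)^6 + (-72216000:ℤ)*(k:ℤ)^5 + (796960800:ℤ)*(k:ℤ)^4 + (-4377286800:ℤ)*(k:ℤ)^3 + (11976733080:ℤ)*(k:ℤ)^2 + (-13074415200:ℤ)*(k:ℤ)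

lemma chooseZ_right (N k : ℕ) :
    (N.choose (k+1) : ℤ) * ((k:ℤ)+1) = (N.choose k : ℤ) * ((N:ℤ)-(k:ℤ)) := by
  rcases le_or_gt k N with h | h
  · have h2 := Nat.choose_succ_right_eq N k
    zify [h] at h2
    linear_combination h2
  · have h1 : N.choose (k+1) = 0 := Nat.choose_eq_zero_of_lt (by omega)
    have h2 : N.choose k = 0 := Nat.choose_eq_zero_of_lt h
    rw [h1, h2]
    simp

lemma chooseZ_left (N k : ℕ) :
    ((N+1).choose k : ℤ) * ((N:ℤ)+1-(k:ℤ)) = (N.choose k : ℤ) * ((N:ℤ)+1) := by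
  rcases le_or_gt k (N+1) with h | h
  · have h2 := Nat.choose_mul_succ_eq N k
    zify [h] at h2
    linear_combination - h2
  · have h1 : (N+1).choose k = 0 := Nat.choose_eq_zero_of_lt h
    have h2 : N.choose k = 0 := Nat.choose_eq_zero_of_lt (by omega)
    rw [h1, h2]
    simp

set_option maxHeartbeats 4000000 in
lemma step (m k : ℕ) :
    (2*(m:ℤ)+4)*(2*(m:ℤ)+5)*(2*(m:ℤ)+6)*(2*(m:ℤ)+7) *
      ( ((2*m+7).choose k : ℤ) * Wp (2*m+7) (6*(m:ℤ)+23-2*(k:ℤ)) * (-1)^k * 3^(2*k)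
      + 24*(36*((m:ℤ)+1)^2+126*((m:ℤ)+1)+113) *
          (((2*m+5).choose k : ℤ) * Wp (2*m+5) (6*(m:ℤ)+17-2*(k:ℤ)) * (-1)^k * 3^(2*k))
      + 46656*((m:ℤ)+2)^2*(2*(m:ℤ)+5)^2 *
          (((2*m+3).choose k : ℤ) * Wp (2*m+3) (6*(m:ℤ)+11-2*(k:ℤ)) * (-1)^k * 3^(2*k)) )
    = ((2*m+7).choose (k+1) : ℤ) * (-1)^(k+1) * 3^(2*(k+1)) * Yp m (k+1) *
        Wp (2*m+1) (6*(m:ℤ)+9-2*(k:ℤ))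
      - ((2*m+7).choose k : ℤ) * (-1)^k * 3^(2*k) * Yp m k *
        Wp (2*m+1) (6*(m:ℤ)+11-2*(k:ℤ)) := by
  have hP3 : Wp (2*m+7) (6*(m:ℤ)+23-2*(k:ℤ))
      = (6*(m:ℤ)+21-2*(k:ℤ))*(6*(m:ℤ)+19-2*(k:ℤ))*(6*(m:ℤ)+17-2*(k:ℤ))*
        (6*(m:ℤ)+15-2*(k:ℤ))*(6*(m:ℤ)+13-2*(k:ℤ))*(6*(m:ℤ)+11-2*(k:ℤ)) *
        Wp (2*m+1) (6*(m:ℤ)+11-2*(k:ℤ)) := by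
    rw [show 2*m+7 = 2*m+6+1 by omega, Wp_bot,
        show 2*m+6 = 2*m+5+1 by omega, Wp_bot,
        show 2*m+5 = 2*m+4+1 by omega, Wp_bot,
        show 2*m+4 = 2*m+3+1 by omega, Wp_bot,
        show 2*m+3 = 2*m+2+1 by omega, Wp_bot,
        show 2*m+2 = 2*m+1+1 by omega, Wp_bot,
        show 6*(m:ℤ)+23-2*(k:ℤ)-2-2-2-2-2-2 = 6*(m:ℤ)+11-2*(k:ℤ) by ring]
    ring
  have hP2 : Wp (2*m+5) (6*(m:ℤ)+17-2*(k:ℤ))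
      = (6*(m:ℤ)+15-2*(k:ℤ))*(6*(m:ℤ)+13-2*(k:ℤ))*(6*(m:ℤ)+11-2*(k:ℤ))*
        (2*(m:ℤ)+7-2*(k:ℤ)) * Wp (2*m+1) (6*(m:ℤ)+11-2*(k:ℤ)) := by
    rw [show 2*m+5 = 2*m+4+1 by omega, Wp_bot,
        show 2*m+4 = 2*m+3+1 by omega, Wp_bot,
        show 2*m+3 = 2*m+2+1 by omega, Wp_bot,
        show 6*(m:ℤ)+17-2*(k:ℤ)-2-2-2 = 6*(m:ℤ)+11-2*(k:ℤ) by ring,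
        show 2*m+2 = 2*m+1+1 by omega, Wp_top]
    push_cast
    ring
  have hP1 : Wp (2*m+3) (6*(m:ℤ)+11-2*(k:ℤ))
      = (2*(m:ℤ)+7-2*(k:ℤ))*(2*(m:ℤ)+5-2*(k:ℤ)) * Wp (2*m+1) (6*(m:ℤ)+11-2*(k:ℤ)) := by
    rw [show 2*m+3 = 2*m+2+1 by omega, Wp_top,
        show 2*m+2 = 2*m+1+1 by omega, Wp_top]
    push_cast
    ring
  have hWs : Wp (2*m+1) (6*(m:ℤ)+11-2*(k:ℤ)) * (2*(m:ℤ)+7-2*(k:ℤ))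
      = (6*(m:ℤ)+9-2*(k:ℤ)) * Wp (2*m+1) (6*(m:ℤ)+9-2*(k:ℤ)) := by
    have t := Wp_top (2*m+1) (6*(m:ℤ)+11-2*(k:ℤ))
    have b := Wp_bot (2*m+1) (6*(m:ℤ)+11-2*(k:ℤ))
    rw [show 6*(m:ℤ)+11-2*(k:ℤ)-2 = 6*(m:ℤ)+9-2*(k:ℤ) by ring] at b
    push_cast at t
    linear_combination b - t
  have hc7 := chooseZ_right (2*m+7) k
  have e7 := chooseZ_left (2*m+6) k
  have e6 := chooseZ_left (2*m+5) k
  have e5 := chooseZ_left (2*m+4) k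
  have e4 := chooseZ_left (2*m+3) k
  push_cast at hc7 e7 e6 e5 e4
  rw [show (2*m+6)+1 = 2*m+7 by omega] at e7
  rw [show (2*m+5)+1 = 2*m+6 by omega] at e6
  rw [show (2*m+4)+1 = 2*m+5 by omega] at e5
  rw [show (2*m+3)+1 = 2*m+4 by omega] at e4
  have hc5 : ((2*m+5).choose k : ℤ) * ((2*(m:ℤ)+6)*(2*(m:ℤ)+7))
      = ((2*m+7).choose k : ℤ) * ((2*(m:ℤ)+6-(k:ℤ))*(2*(m:ℤ)+7-(k:ℤ))) := by
    linear_combination (-(2*(m:ℤ)+7))*e6 - (2*(m:ℤ)+6-(k:ℤ))*e7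
  have hc3 : ((2*m+3).choose k : ℤ) * ((2*(m:ℤ)+4)*(2*(m:ℤ)+5)*(2*(m:ℤ)+6)*(2*(m:ℤ)+7))
      = ((2*m+7).choose k : ℤ) *
        ((2*(m:ℤ)+4-(k:ℤ))*(2*(m:ℤ)+5-(k:ℤ))*(2*(m:ℤ)+6-(k:ℤ))*(2*(m:ℤ)+7-(k:ℤ))) := by
    linear_combination (-(2*(m:ℤ)+5)*(2*(m:ℤ)+6)*(2*(m:ℤ)+7))*e4
      - ((2*(m:ℤ)+4-(k:ℤ))*(2*(m:ℤ)+6)*(2*(m:ℤ)+7))*e5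
      - ((2*(m:ℤ)+4-(k:ℤ))*(2*(m:ℤ)+5-(k:ℤ))*(2*(m:ℤ)+7))*e6
      - ((2*(m:ℤ)+4-(k:ℤ))*(2*(m:ℤ)+5-(k:ℤ))*(2*(m:ℤ)+6-(k:ℤ)))*e7
  have hq : (-1:ℤ)^(k+1)*3^(2*(k+1)) = -9*((-1:ℤ)^k*3^(2*k)) := by
    rw [pow_succ, show 2*(k+1) = 2*k+2 by omega, pow_add]
    ring
  have hne : ((k:ℤ)+1)*(6*(m:ℤ)+9-2*(k:ℤ)) ≠ 0 := by
    intro h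
    rcases mul_eq_zero.mp h with h | h <;> omega
  apply mul_left_cancel₀ hne
  rw [hP3, hP2, hP1]
  unfold Yp
  push_cast
  linear_combination ((18662400:ℤ)*(m:ℤ)^10*(k:ℤ)^2*(((2*m+7).choose (k+1) : ℤ))*(Wp (2*m+1) (6*(m:ℤ)+9-2*(k:ℤ))) + (37324800:ℤ)*(m:ℤ)^10*(k:ℤ)*(((2*m+7).choose (k+1) : ℤ))*(Wp (2*m+1) (6*(m:ℤ)+9-2*(k:ℤ))) + (18662400:ℤ)*(m:ℤ)^10*(((2*m+7).choose (k+1) : ℤ))*(Wp (2*m+1) (6*(m:ℤ)+9-2*(k:ℤ))) + (-54743040:ℤ)*(m:ℤ)^9*(k:ℤ)^3*(((2*m+7).choose (k+1) : ℤ))*(Wp (2*m+1) (6*(m:ℤ)+9-2*(k:ℤ))) + (304819200:ℤ)*(m:ℤ)^9*(k:ℤ)^2*(((2*m+7).choose (k+1) : ℤ))*(Wp (2*m+1) (6*(m:ℤ)+9-2*(k:ℤ))) + (773867520:ℤ)*(m:ℤ)^9*(k:ℤ)*(((2*m+7).choose (k+1) : ℤ))*(Wp (2*m+1) (6*(m:ℤ)+9-2*(k:ℤ)))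 + (414305280:ℤ)*(m:ℤ)^9*(((2*m+7).choose (k+1) : ℤ))*(Wp (2*m+1) (6*(m:ℤ)+9-2*(k:ℤ))) + (65857536:ℤ)*(m:ℤ)^8*(k:ℤ)^4*(((2*m+7).choose (k+1) : ℤ))*(Wp (2*m+1) (6*(m:ℤ)+9-2*(k:ℤ))) + (-956302848:ℤ)*(m:ℤ)^8*(k:ℤ)^3*(((2*m+7).choose (k+1) : ℤ))*(Wp (2*m+1) (6*(m:ℤ)+9-2*(k:ℤ))) + (2008488960:ℤ)*(m:ℤ)^8*(k:ℤ)^2*(((2*m+7).choose (k+1) : ℤ))*(Wp (2*m+1) (6*(m:ℤ)+9-2*(k:ℤ))) + (7149316608:ℤ)*(m:ℤ)^8*(k:ℤ)*(((2*m+7).choose (k+1) : ℤ))*(Wp (2*m+1) (6*(m:ℤ)+9-2*(k:ℤ))) + (4118667264:ℤ)*(m:ℤ)^8*(((2*m+7).choose (k+1) : ℤ))*(Wp (2*m+1) (6*(m:ℤ)+9-2*(k:ℤ))) + (-41582592:ℤ)*(m:ℤ)^7*(k:ℤ)^5*(((2*m+7).choose (k+1) : ℤ))*(Wp (2*m+1)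 (6*(m:ℤ)+9-2*(k:ℤ))) + (1076198400:ℤ)*(m:ℤ)^7*(k:ℤ)^4*(((2*m+7).choose (k+1) : ℤ))*(Wp (2*m+1) (6*(m:ℤ)+9-2*(k:ℤ))) + (-7290590976:ℤ)*(m:ℤ)^7*(k:ℤ)^3*(((2*m+7).choose (k+1) : ℤ))*(Wp (2*m+1) (6*(m:ℤ)+9-2*(k:ℤ))) + (6165033984:ℤ)*(m:ℤ)^7*(k:ℤ)^2*(((2*m+7).choose (k+1) : ℤ))*(Wp (2*m+1) (6*(m:ℤ)+9-2*(k:ℤ))) + (38714547456:ℤ)*(m:ℤ)^7*(k:ℤ)*(((2*m+7).choose (k+1) : ℤ))*(Wp (2*m+1) (6*(m:ℤ)+9-2*(k:ℤ))) + (24141141504:ℤ)*(m:ℤ)^7*(((2*m+7).choose (k+1) : ℤ))*(Wp (2*m+1) (6*(m:ℤ)+9-2*(k:ℤ))) + (14533632:ℤ)*(m:ℤ)^6*(k:ℤ)^6*(((2*m+7).choose (k+1) : ℤ))*(Wp (2*m+1) (6*(m:ℤ)+9-2*(k:ℤ))) + (-610781184:ℤ)*(m:ℤ)^6*(k:ℤ)^5*(((2*m+7).choose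 (k+1) : ℤ))*(Wp (2*m+1) (6*(m:ℤ)+9-2*(k:ℤ))) + (7628981760:ℤ)*(m:ℤ)^6*(k:ℤ)^4*(((2*m+7).choose (k+1) : ℤ))*(Wp (2*m+1) (6*(m:ℤ)+9-2*(k:ℤ))) + (-31705098624:ℤ)*(m:ℤ)^6*(k:ℤ)^3*(((2*m+7).choose (k+1) : ℤ))*(Wp (2*m+1) (6*(m:ℤ)+9-2*(k:ℤ))) + (3565678464:ℤ)*(m:ℤ)^6*(k:ℤ)^2*(((2*m+7).choose (k+1) : ℤ))*(Wp (2*m+1) (6*(m:ℤ)+9-2*(k:ℤ))) + (135903687552:ℤ)*(m:ℤ)^6*(k:ℤ)*(((2*m+7).choose (k+1) : ℤ))*(Wp (2*m+1) (6*(m:ℤ)+9-2*(k:ℤ))) + (92378613888:ℤ)*(m:ℤ)^6*(((2*m+7).choose (k+1) : ℤ))*(Wp (2*m+1) (6*(m:ℤ)+9-2*(k:ℤ))) + (-2666496:ℤ)*(m:ℤ)^5*(k:ℤ)^7*(((2*m+7).choose (k+1) : ℤ))*(Wp (2*m+1) (6*(m:ℤ)+9-2*(k:ℤ))) + (186888192:ℤ)*(m:ℤ)^5*(k:ℤ)^6*(((2*m+7).choose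 (k+1) : ℤ))*(Wp (2*m+1) (6*(m:ℤ)+9-2*(k:ℤ))) + (-3824050176:ℤ)*(m:ℤ)^5*(k:ℤ)^5*(((2*m+7).choose (k+1) : ℤ))*(Wp (2*m+1) (6*(m:ℤ)+9-2*(k:ℤ))) + (30613093632:ℤ)*(m:ℤ)^5*(k:ℤ)^4*(((2*m+7).choose (k+1) : ℤ))*(Wp (2*m+1) (6*(m:ℤ)+9-2*(k:ℤ))) + (-86143051968:ℤ)*(m:ℤ)^5*(k:ℤ)^3*(((2*m+7).choose (k+1) : ℤ))*(Wp (2*m+1) (6*(m:ℤ)+9-2*(k:ℤ))) + (-39268546944:ℤ)*(m:ℤ)^5*(k:ℤ)^2*(((2*m+7).choose (k+1) : ℤ))*(Wp (2*m+1) (6*(m:ℤ)+9-2*(k:ℤ))) + (322604682048:ℤ)*(m:ℤ)^5*(k:ℤ)*(((2*m+7).choose (k+1) : ℤ))*(Wp (2*m+1) (6*(m:ℤ)+9-2*(k:ℤ))) + (241103478528:ℤ)*(m:ℤ)^5*(((2*m+7).choose (k+1) : ℤ))*(Wp (2*m+1) (6*(m:ℤ)+9-2*(k:ℤ))) + (200704:ℤ)*(m:ℤ)^4*(k:ℤ)^8*(((2*m+7).choose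 (k+1) : ℤ))*(Wp (2*m+1) (6*(m:ℤ)+9-2*(k:ℤ))) + (-29252096:ℤ)*(m:ℤ)^4*(k:ℤ)^7*(((2*m+7).choose (k+1) : ℤ))*(Wp (2*m+1) (6*(m:ℤ)+9-2*(k:ℤ))) + (997428736:ℤ)*(m:ℤ)^4*(k:ℤ)^6*(((2*m+7).choose (k+1) : ℤ))*(Wp (2*m+1) (6*(m:ℤ)+9-2*(k:ℤ))) + (-13223690240:ℤ)*(m:ℤ)^4*(k:ℤ)^5*(((2*m+7).choose (k+1) : ℤ))*(Wp (2*m+1) (6*(m:ℤ)+9-2*(k:ℤ))) + (75968771968:ℤ)*(m:ℤ)^4*(k:ℤ)^4*(((2*m+7).choose (k+1) : ℤ))*(Wp (2*m+1) (6*(m:ℤ)+9-2*(k:ℤ))) + (-150172721312:ℤ)*(m:ℤ)^4*(k:ℤ)^3*(((2*m+7).choose (k+1) : ℤ))*(Wp (2*m+1) (6*(m:ℤ)+9-2*(k:ℤ))) + (-151722043584:ℤ)*(m:ℤ)^4*(k:ℤ)^2*(((2*m+7).choose (k+1) : ℤ))*(Wp (2*m+1) (6*(m:ℤ)+9-2*(k:ℤ)))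 + (523258558560:ℤ)*(m:ℤ)^4*(k:ℤ)*(((2*m+7).choose (k+1) : ℤ))*(Wp (2*m+1) (6*(m:ℤ)+9-2*(k:ℤ))) + (434588537088:ℤ)*(m:ℤ)^4*(((2*m+7).choose (k+1) : ℤ))*(Wp (2*m+1) (6*(m:ℤ)+9-2*(k:ℤ))) + (1820672:ℤ)*(m:ℤ)^3*(k:ℤ)^8*(((2*m+7).choose (k+1) : ℤ))*(Wp (2*m+1) (6*(m:ℤ)+9-2*(k:ℤ))) + (-127958272:ℤ)*(m:ℤ)^3*(k:ℤ)^7*(((2*m+7).choose (k+1) : ℤ))*(Wp (2*m+1) (6*(m:ℤ)+9-2*(k:ℤ))) + (2827495424:ℤ)*(m:ℤ)^3*(k:ℤ)^6*(((2*m+7).choose (k+1) : ℤ))*(Wp (2*m+1) (6*(m:ℤ)+9-2*(k:ℤ))) + (-27264223744:ℤ)*(m:ℤ)^3*(k:ℤ)^5*(((2*m+7).choose (k+1) : ℤ))*(Wp (2*m+1) (6*(m:ℤ)+9-2*(k:ℤ))) + (119213856320:ℤ)*(m:ℤ)^3*(k:ℤ)^4*(((2*m+7).choose (k+1) : ℤ))*(Wp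 (2*m+1) (6*(m:ℤ)+9-2*(k:ℤ))) + (-165141706576:ℤ)*(m:ℤ)^3*(k:ℤ)^3*(((2*m+7).choose (k+1) : ℤ))*(Wp (2*m+1) (6*(m:ℤ)+9-2*(k:ℤ))) + (-277790193600:ℤ)*(m:ℤ)^3*(k:ℤ)^2*(((2*m+7).choose (k+1) : ℤ))*(Wp (2*m+1) (6*(m:ℤ)+9-2*(k:ℤ))) + (570896522352:ℤ)*(m:ℤ)^3*(k:ℤ)*(((2*m+7).choose (k+1) : ℤ))*(Wp (2*m+1) (6*(m:ℤ)+9-2*(k:ℤ))) + (534109654944:ℤ)*(m:ℤ)^3*(((2*m+7).choose (k+1) : ℤ))*(Wp (2*m+1) (6*(m:ℤ)+9-2*(k:ℤ))) + (6173696:ℤ)*(m:ℤ)^2*(k:ℤ)^8*(((2*m+7).choose (k+1) : ℤ))*(Wp (2*m+1) (6*(m:ℤ)+9-2*(k:ℤ))) + (-278992768:ℤ)*(m:ℤ)^2*(k:ℤ)^7*(((2*m+7).choose (k+1) : ℤ))*(Wp (2*m+1) (6*(m:ℤ)+9-2*(k:ℤ))) + (4489231424:ℤ)*(m:ℤ)^2*(k:ℤ)^6*(((2*m+7).choose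 (k+1) : ℤ))*(Wp (2*m+1) (6*(m:ℤ)+9-2*(k:ℤ))) + (-33497118592:ℤ)*(m:ℤ)^2*(k:ℤ)^5*(((2*m+7).choose (k+1) : ℤ))*(Wp (2*m+1) (6*(m:ℤ)+9-2*(k:ℤ))) + (115313869472:ℤ)*(m:ℤ)^2*(k:ℤ)^4*(((2*m+7).choose (k+1) : ℤ))*(Wp (2*m+1) (6*(m:ℤ)+9-2*(k:ℤ))) + (-106763088904:ℤ)*(m:ℤ)^2*(k:ℤ)^3*(((2*m+7).choose (k+1) : ℤ))*(Wp (2*m+1) (6*(m:ℤ)+9-2*(k:ℤ))) + (-289352391708:ℤ)*(m:ℤ)^2*(k:ℤ)^2*(((2*m+7).choose (k+1) : ℤ))*(Wp (2*m+1) (6*(m:ℤ)+9-2*(k:ℤ))) + (399263281632:ℤ)*(m:ℤ)^2*(k:ℤ)*(((2*m+7).choose (k+1) : ℤ))*(Wp (2*m+1) (6*(m:ℤ)+9-2*(k:ℤ))) + (428267198484:ℤ)*(m:ℤ)^2*(((2*m+7).choose (k+1) : ℤ))*(Wp (2*m+1) (6*(m:ℤ)+9-2*(k:ℤ))) + (9273856:ℤ)*(m:ℤ)*(k:ℤ)^8*(((2*m+7).choose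 (k+1) : ℤ))*(Wp (2*m+1) (6*(m:ℤ)+9-2*(k:ℤ))) + (-303212480:ℤ)*(m:ℤ)*(k:ℤ)^7*(((2*m+7).choose (k+1) : ℤ))*(Wp (2*m+1) (6*(m:ℤ)+9-2*(k:ℤ))) + (3784076032:ℤ)*(m:ℤ)*(k:ℤ)^6*(((2*m+7).choose (k+1) : ℤ))*(Wp (2*m+1) (6*(m:ℤ)+9-2*(k:ℤ))) + (-22692897152:ℤ)*(m:ℤ)*(k:ℤ)^5*(((2*m+7).choose (k+1) : ℤ))*(Wp (2*m+1) (6*(m:ℤ)+9-2*(k:ℤ))) + (62708169904:ℤ)*(m:ℤ)*(k:ℤ)^4*(((2*m+7).choose (k+1) : ℤ))*(Wp (2*m+1) (6*(m:ℤ)+9-2*(k:ℤ))) + (-33755052020:ℤ)*(m:ℤ)*(k:ℤ)^3*(((2*m+7).choose (k+1) : ℤ))*(Wp (2*m+1) (6*(m:ℤ)+9-2*(k:ℤ))) + (-164933069172:ℤ)*(m:ℤ)*(k:ℤ)^2*(((2*m+7).choose (k+1) : ℤ))*(Wp (2*m+1) (6*(m:ℤ)+9-2*(k:ℤ))) + (160597317492:ℤ)*(m:ℤ)*(k:ℤ)*(((2*m+7).choose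 (k+1) : ℤ))*(Wp (2*m+1) (6*(m:ℤ)+9-2*(k:ℤ))) + (202277705220:ℤ)*(m:ℤ)*(((2*m+7).choose (k+1) : ℤ))*(Wp (2*m+1) (6*(m:ℤ)+9-2*(k:ℤ))) + (5207040:ℤ)*(k:ℤ)^8*(((2*m+7).choose (k+1) : ℤ))*(Wp (2*m+1) (6*(m:ℤ)+9-2*(k:ℤ))) + (-131414400:ℤ)*(k:ℤ)^7*(((2*m+7).choose (k+1) : ℤ))*(Wp (2*m+1) (6*(m:ℤ)+9-2*(k:ℤ))) + (1322599680:ℤ)*(k:ℤ)^6*(((2*m+7).choose (k+1) : ℤ))*(Wp (2*m+1) (6*(m:ℤ)+9-2*(k:ℤ))) + (-6534247680:ℤ)*(k:ℤ)^5*(((2*m+7).choose (k+1) : ℤ))*(Wp (2*m+1) (6*(m:ℤ)+9-2*(k:ℤ))) + (14629390560:ℤ)*(k:ℤ)^4*(((2*m+7).choose (k+1) : ℤ))*(Wp (2*m+1) (6*(m:ℤ)+9-2*(k:ℤ))) + (-2689763400:ℤ)*(k:ℤ)^3*(((2*m+7).choose (k+1) : ℤ))*(Wp (2*m+1) (6*(m:ℤ)+9-2*(k:ℤ)))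 + (-40114037880:ℤ)*(k:ℤ)^2*(((2*m+7).choose (k+1) : ℤ))*(Wp (2*m+1) (6*(m:ℤ)+9-2*(k:ℤ))) + (27927170280:ℤ)*(k:ℤ)*(((2*m+7).choose (k+1) : ℤ))*(Wp (2*m+1) (6*(m:ℤ)+9-2*(k:ℤ))) + (42728585400:ℤ)*(((2*m+7).choose (k+1) : ℤ))*(Wp (2*m+1) (6*(m:ℤ)+9-2*(k:ℤ)))) * hq + ((-167961600:ℤ)*(m:ℤ)^10*(k:ℤ)*(Wp (2*m+1) (6*(m:ℤ)+9-2*(k:ℤ)))*((-1:ℤ)^k*3^(2*k)) + (-167961600:ℤ)*(m:ℤ)^10*(Wp (2*m+1) (6*(m:ℤ)+9-2*(k:ℤ)))*((-1:ℤ)^k*3^(2*k)) + (492687360:ℤ)*(m:ℤ)^9*(k:ℤ)^2*(Wp (2*m+1) (6*(m:ℤ)+9-2*(k:ℤ)))*((-1:ℤ)^k*3^(2*k)) + (-3236060160:ℤ)*(m:ℤ)^9*(k:ℤ)*(Wp (2*m+1) (6*(m:ℤ)+9-2*(k:ℤ)))*((-1:ℤ)^k*3^(2*k)) + (-3728747520:ℤ)*(m:ℤ)^9*(Wp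 (2*m+1) (6*(m:ℤ)+9-2*(k:ℤ)))*((-1:ℤ)^k*3^(2*k)) + (-592717824:ℤ)*(m:ℤ)^8*(k:ℤ)^3*(Wp (2*m+1) (6*(m:ℤ)+9-2*(k:ℤ)))*((-1:ℤ)^k*3^(2*k)) + (9199443456:ℤ)*(m:ℤ)^8*(k:ℤ)^2*(Wp (2*m+1) (6*(m:ℤ)+9-2*(k:ℤ)))*((-1:ℤ)^k*3^(2*k)) + (-27275844096:ℤ)*(m:ℤ)^8*(k:ℤ)*(Wp (2*m+1) (6*(m:ℤ)+9-2*(k:ℤ)))*((-1:ℤ)^k*3^(2*k)) + (-37068005376:ℤ)*(m:ℤ)^8*(Wp (2*m+1) (6*(m:ℤ)+9-2*(k:ℤ)))*((-1:ℤ)^k*3^(2*k)) + (374243328:ℤ)*(m:ℤ)^7*(k:ℤ)^4*(Wp (2*m+1) (6*(m:ℤ)+9-2*(k:ℤ)))*((-1:ℤ)^k*3^(2*k)) + (-10060028928:ℤ)*(m:ℤ)^7*(k:ℤ)^3*(Wp (2*m+1) (6*(m:ℤ)+9-2*(k:ℤ)))*((-1:ℤ)^k*3^(2*k)) + (75675347712:ℤ)*(m:ℤ)^7*(k:ℤ)^2*(Wp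 (2*m+1) (6*(m:ℤ)+9-2*(k:ℤ)))*((-1:ℤ)^k*3^(2*k)) + (-131160653568:ℤ)*(m:ℤ)^7*(k:ℤ)*(Wp (2*m+1) (6*(m:ℤ)+9-2*(k:ℤ)))*((-1:ℤ)^k*3^(2*k)) + (-217270273536:ℤ)*(m:ℤ)^7*(Wp (2*m+1) (6*(m:ℤ)+9-2*(k:ℤ)))*((-1:ℤ)^k*3^(2*k)) + (-130802688:ℤ)*(m:ℤ)^6*(k:ℤ)^5*(Wp (2*m+1) (6*(m:ℤ)+9-2*(k:ℤ)))*((-1:ℤ)^k*3^(2*k)) + (5627833344:ℤ)*(m:ℤ)^6*(k:ℤ)^4*(Wp (2*m+1) (6*(m:ℤ)+9-2*(k:ℤ)))*((-1:ℤ)^k*3^(2*k)) + (-74288669184:ℤ)*(m:ℤ)^6*(k:ℤ)^3*(Wp (2*m+1) (6*(m:ℤ)+9-2*(k:ℤ)))*((-1:ℤ)^k*3^(2*k)) + (359634556800:ℤ)*(m:ℤ)^6*(k:ℤ)^2*(Wp (2*m+1) (6*(m:ℤ)+9-2*(k:ℤ)))*((-1:ℤ)^k*3^(2*k)) + (-391725662976:ℤ)*(m:ℤ)^6*(k:ℤ)*(Wp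 (2*m+1) (6*(m:ℤ)+9-2*(k:ℤ)))*((-1:ℤ)^k*3^(2*k)) + (-831407524992:ℤ)*(m:ℤ)^6*(Wp (2*m+1) (6*(m:ℤ)+9-2*(k:ℤ)))*((-1:ℤ)^k*3^(2*k)) + (23998464:ℤ)*(m:ℤ)^5*(k:ℤ)^6*(Wp (2*m+1) (6*(m:ℤ)+9-2*(k:ℤ)))*((-1:ℤ)^k*3^(2*k)) + (-1705992192:ℤ)*(m:ℤ)^5*(k:ℤ)^5*(Wp (2*m+1) (6*(m:ℤ)+9-2*(k:ℤ)))*((-1:ℤ)^k*3^(2*k)) + (36122443776:ℤ)*(m:ℤ)^5*(k:ℤ)^4*(Wp (2*m+1) (6*(m:ℤ)+9-2*(k:ℤ)))*((-1:ℤ)^k*3^(2*k)) + (-311640286464:ℤ)*(m:ℤ)^5*(k:ℤ)^3*(Wp (2*m+1) (6*(m:ℤ)+9-2*(k:ℤ)))*((-1:ℤ)^k*3^(2*k)) + (1086927754176:ℤ)*(m:ℤ)^5*(k:ℤ)^2*(Wp (2*m+1) (6*(m:ℤ)+9-2*(k:ℤ)))*((-1:ℤ)^k*3^(2*k)) + (-733510831680:ℤ)*(m:ℤ)^5*(k:ℤ)*(Wp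 (2*m+1) (6*(m:ℤ)+9-2*(k:ℤ)))*((-1:ℤ)^k*3^(2*k)) + (-2169931306752:ℤ)*(m:ℤ)^5*(Wp (2*m+1) (6*(m:ℤ)+9-2*(k:ℤ)))*((-1:ℤ)^k*3^(2*k)) + (-1806336:ℤ)*(m:ℤ)^4*(k:ℤ)^7*(Wp (2*m+1) (6*(m:ℤ)+9-2*(k:ℤ)))*((-1:ℤ)^k*3^(2*k)) + (265075200:ℤ)*(m:ℤ)^4*(k:ℤ)^6*(Wp (2*m+1) (6*(m:ℤ)+9-2*(k:ℤ)))*((-1:ℤ)^k*3^(2*k)) + (-9241933824:ℤ)*(m:ℤ)^4*(k:ℤ)^5*(Wp (2*m+1) (6*(m:ℤ)+9-2*(k:ℤ)))*((-1:ℤ)^k*3^(2*k)) + (128255145984:ℤ)*(m:ℤ)^4*(k:ℤ)^4*(Wp (2*m+1) (6*(m:ℤ)+9-2*(k:ℤ)))*((-1:ℤ)^k*3^(2*k)) + (-811974093696:ℤ)*(m:ℤ)^4*(k:ℤ)^3*(Wp (2*m+1) (6*(m:ℤ)+9-2*(k:ℤ)))*((-1:ℤ)^k*3^(2*k)) + (2163528585504:ℤ)*(m:ℤ)^4*(k:ℤ)^2*(Wp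 (2*m+1) (6*(m:ℤ)+9-2*(k:ℤ)))*((-1:ℤ)^k*3^(2*k)) + (-798030193248:ℤ)*(m:ℤ)^4*(k:ℤ)*(Wp (2*m+1) (6*(m:ℤ)+9-2*(k:ℤ)))*((-1:ℤ)^k*3^(2*k)) + (-3911296833792:ℤ)*(m:ℤ)^4*(Wp (2*m+1) (6*(m:ℤ)+9-2*(k:ℤ)))*((-1:ℤ)^k*3^(2*k)) + (-16386048:ℤ)*(m:ℤ)^3*(k:ℤ)^7*(Wp (2*m+1) (6*(m:ℤ)+9-2*(k:ℤ)))*((-1:ℤ)^k*3^(2*k)) + (1168010496:ℤ)*(m:ℤ)^3*(k:ℤ)^6*(Wp (2*m+1) (6*(m:ℤ)+9-2*(k:ℤ)))*((-1:ℤ)^k*3^(2*k)) + (-26615469312:ℤ)*(m:ℤ)^3*(k:ℤ)^5*(Wp (2*m+1) (6*(m:ℤ)+9-2*(k:ℤ)))*((-1:ℤ)^k*3^(2*k)) + (271993483008:ℤ)*(m:ℤ)^3*(k:ℤ)^4*(Wp (2*m+1) (6*(m:ℤ)+9-2*(k:ℤ)))*((-1:ℤ)^k*3^(2*k)) + (-1344918189888:ℤ)*(m:ℤ)^3*(k:ℤ)^3*(Wp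 (2*m+1) (6*(m:ℤ)+9-2*(k:ℤ)))*((-1:ℤ)^k*3^(2*k)) + (2831193549072:ℤ)*(m:ℤ)^3*(k:ℤ)^2*(Wp (2*m+1) (6*(m:ℤ)+9-2*(k:ℤ)))*((-1:ℤ)^k*3^(2*k)) + (-331081806672:ℤ)*(m:ℤ)^3*(k:ℤ)*(Wp (2*m+1) (6*(m:ℤ)+9-2*(k:ℤ)))*((-1:ℤ)^k*3^(2*k)) + (-4806986894496:ℤ)*(m:ℤ)^3*(Wp (2*m+1) (6*(m:ℤ)+9-2*(k:ℤ)))*((-1:ℤ)^k*3^(2*k)) + (-55563264:ℤ)*(m:ℤ)^2*(k:ℤ)^7*(Wp (2*m+1) (6*(m:ℤ)+9-2*(k:ℤ)))*((-1:ℤ)^k*3^(2*k)) + (2566498176:ℤ)*(m:ℤ)^2*(k:ℤ)^6*(Wp (2*m+1) (6*(m:ℤ)+9-2*(k:ℤ)))*((-1:ℤ)^k*3^(2*k)) + (-42969580992:ℤ)*(m:ℤ)^2*(k:ℤ)^5*(Wp (2*m+1) (6*(m:ℤ)+9-2*(k:ℤ)))*((-1:ℤ)^k*3^(2*k)) + (344443648320:ℤ)*(m:ℤ)^2*(k:ℤ)^4*(Wp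 (2*m+1) (6*(m:ℤ)+9-2*(k:ℤ)))*((-1:ℤ)^k*3^(2*k)) + (-1382268473568:ℤ)*(m:ℤ)^2*(k:ℤ)^3*(Wp (2*m+1) (6*(m:ℤ)+9-2*(k:ℤ)))*((-1:ℤ)^k*3^(2*k)) + (2343136273704:ℤ)*(m:ℤ)^2*(k:ℤ)^2*(Wp (2*m+1) (6*(m:ℤ)+9-2*(k:ℤ)))*((-1:ℤ)^k*3^(2*k)) + (261035251668:ℤ)*(m:ℤ)^2*(k:ℤ)*(Wp (2*m+1) (6*(m:ℤ)+9-2*(k:ℤ)))*((-1:ℤ)^k*3^(2*k)) + (-3854404786356:ℤ)*(m:ℤ)^2*(Wp (2*m+1) (6*(m:ℤ)+9-2*(k:ℤ)))*((-1:ℤ)^k*3^(2*k)) + (-83464704:ℤ)*(m:ℤ)*(k:ℤ)^7*(Wp (2*m+1) (6*(m:ℤ)+9-2*(k:ℤ)))*((-1:ℤ)^k*3^(2*k)) + (2812377024:ℤ)*(m:ℤ)*(k:ℤ)^6*(Wp (2*m+1) (6*(m:ℤ)+9-2*(k:ℤ)))*((-1:ℤ)^k*3^(2*k)) + (-36869061312:ℤ)*(m:ℤ)*(k:ℤ)^5*(Wp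 (2*m+1) (6*(m:ℤ)+9-2*(k:ℤ)))*((-1:ℤ)^k*3^(2*k)) + (241105135680:ℤ)*(m:ℤ)*(k:ℤ)^4*(Wp (2*m+1) (6*(m:ℤ)+9-2*(k:ℤ)))*((-1:ℤ)^k*3^(2*k)) + (-805478664816:ℤ)*(m:ℤ)*(k:ℤ)^3*(Wp (2*m+1) (6*(m:ℤ)+9-2*(k:ℤ)))*((-1:ℤ)^k*3^(2*k)) + (1109274132996:ℤ)*(m:ℤ)*(k:ℤ)^2*(Wp (2*m+1) (6*(m:ℤ)+9-2*(k:ℤ)))*((-1:ℤ)^k*3^(2*k)) + (375123489552:ℤ)*(m:ℤ)*(k:ℤ)*(Wp (2*m+1) (6*(m:ℤ)+9-2*(k:ℤ)))*((-1:ℤ)^k*3^(2*k)) + (-1820499346980:ℤ)*(m:ℤ)*(Wp (2*m+1) (6*(m:ℤ)+9-2*(k:ℤ)))*((-1:ℤ)^k*3^(2*k)) + (-46863360:ℤ)*(k:ℤ)^7*(Wp (2*m+1) (6*(m:ℤ)+9-2*(k:ℤ)))*((-1:ℤ)^k*3^(2*k)) + (1229592960:ℤ)*(k:ℤ)^6*(Wp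 (2*m+1) (6*(m:ℤ)+9-2*(k:ℤ)))*((-1:ℤ)^k*3^(2*k)) + (-13132990080:ℤ)*(k:ℤ)^5*(Wp (2*m+1) (6*(m:ℤ)+9-2*(k:ℤ)))*((-1:ℤ)^k*3^(2*k)) + (71941219200:ℤ)*(k:ℤ)^4*(Wp (2*m+1) (6*(m:ℤ)+9-2*(k:ℤ)))*((-1:ℤ)^k*3^(2*k)) + (-203605734240:ℤ)*(k:ℤ)^3*(Wp (2*m+1) (6*(m:ℤ)+9-2*(k:ℤ)))*((-1:ℤ)^k*3^(2*k)) + (227813604840:ℤ)*(k:ℤ)^2*(Wp (2*m+1) (6*(m:ℤ)+9-2*(k:ℤ)))*((-1:ℤ)^k*3^(2*k)) + (133212736080:ℤ)*(k:ℤ)*(Wp (2*m+1) (6*(m:ℤ)+9-2*(k:ℤ)))*((-1:ℤ)^k*3^(2*k)) + (-384557268600:ℤ)*(Wp (2*m+1) (6*(m:ℤ)+9-2*(k:ℤ)))*((-1:ℤ)^k*3^(2*k))) * hc7 + ((55987200:ℤ)*(m:ℤ)^10*(k:ℤ)*(((2*m+7).choose k : ℤ))*((-1:ℤ)^k*3^(2*k))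 + (55987200:ℤ)*(m:ℤ)^10*(((2*m+7).choose k : ℤ))*((-1:ℤ)^k*3^(2*k)) + (-173560320:ℤ)*(m:ℤ)^9*(k:ℤ)^2*(((2*m+7).choose k : ℤ))*((-1:ℤ)^k*3^(2*k)) + (1181329920:ℤ)*(m:ℤ)^9*(k:ℤ)*(((2*m+7).choose k : ℤ))*((-1:ℤ)^k*3^(2*k)) + (1354890240:ℤ)*(m:ℤ)^9*(((2*m+7).choose k : ℤ))*((-1:ℤ)^k*3^(2*k)) + (221833728:ℤ)*(m:ℤ)^8*(k:ℤ)^3*(((2*m+7).choose k : ℤ))*((-1:ℤ)^k*3^(2*k)) + (-3526509312:ℤ)*(m:ℤ)^8*(k:ℤ)^2*(((2*m+7).choose k : ℤ))*((-1:ℤ)^k*3^(2*k)) + (10925528832:ℤ)*(m:ℤ)^8*(k:ℤ)*(((2*m+7).choose k : ℤ))*((-1:ℤ)^k*3^(2*k)) + (14673871872:ℤ)*(m:ℤ)^8*(((2*m+7).choose k : ℤ))*((-1:ℤ)^k*3^(2*k)) + (-149589504:ℤ)*(m:ℤ)^7*(k:ℤ)^4*(((2*m+7).choose k : ℤ))*((-1:ℤ)^k*3^(2*k))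 + (4069833984:ℤ)*(m:ℤ)^7*(k:ℤ)^3*(((2*m+7).choose k : ℤ))*((-1:ℤ)^k*3^(2*k)) + (-31572167040:ℤ)*(m:ℤ)^7*(k:ℤ)^2*(((2*m+7).choose k : ℤ))*((-1:ℤ)^k*3^(2*k)) + (57867032448:ℤ)*(m:ℤ)^7*(k:ℤ)*(((2*m+7).choose k : ℤ))*((-1:ℤ)^k*3^(2*k)) + (93658622976:ℤ)*(m:ℤ)^7*(((2*m+7).choose k : ℤ))*((-1:ℤ)^k*3^(2*k)) + (56111616:ℤ)*(m:ℤ)^6*(k:ℤ)^5*(((2*m+7).choose k : ℤ))*((-1:ℤ)^k*3^(2*k)) + (-2408237568:ℤ)*(m:ℤ)^6*(k:ℤ)^4*(((2*m+7).choose k : ℤ))*((-1:ℤ)^k*3^(2*k)) + (32483341440:ℤ)*(m:ℤ)^6*(k:ℤ)^3*(((2*m+7).choose k : ℤ))*((-1:ℤ)^k*3^(2*k)) + (-163378938816:ℤ)*(m:ℤ)^6*(k:ℤ)^2*(((2*m+7).choose k : ℤ))*((-1:ℤ)^k*3^(2*k)) + (191803263552:ℤ)*(m:ℤ)^6*(k:ℤ)*(((2*m+7).choose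 k : ℤ))*((-1:ℤ)^k*3^(2*k)) + (390129892992:ℤ)*(m:ℤ)^6*(((2*m+7).choose k : ℤ))*((-1:ℤ)^k*3^(2*k)) + (-11096064:ℤ)*(m:ℤ)^5*(k:ℤ)^6*(((2*m+7).choose k : ℤ))*((-1:ℤ)^k*3^(2*k)) + (772326144:ℤ)*(m:ℤ)^5*(k:ℤ)^5*(((2*m+7).choose k : ℤ))*((-1:ℤ)^k*3^(2*k)) + (-16547928192:ℤ)*(m:ℤ)^5*(k:ℤ)^4*(((2*m+7).choose k : ℤ))*((-1:ℤ)^k*3^(2*k)) + (147304643904:ℤ)*(m:ℤ)^5*(k:ℤ)^3*(((2*m+7).choose k : ℤ))*((-1:ℤ)^k*3^(2*k)) + (-538167682080:ℤ)*(m:ℤ)^5*(k:ℤ)^2*(((2*m+7).choose k : ℤ))*((-1:ℤ)^k*3^(2*k)) + (405287365536:ℤ)*(m:ℤ)^5*(k:ℤ)*(((2*m+7).choose k : ℤ))*((-1:ℤ)^k*3^(2*k)) + (1108091041920:ℤ)*(m:ℤ)^5*(((2*m+7).choose k : ℤ))*((-1:ℤ)^k*3^(2*k)) + (903168:ℤ)*(m:ℤ)^4*(k:ℤ)^7*(((2*m+7).choose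 k : ℤ))*((-1:ℤ)^k*3^(2*k)) + (-126602496:ℤ)*(m:ℤ)^4*(k:ℤ)^6*(((2*m+7).choose k : ℤ))*((-1:ℤ)^k*3^(2*k)) + (4416910848:ℤ)*(m:ℤ)^4*(k:ℤ)^5*(((2*m+7).choose k : ℤ))*((-1:ℤ)^k*3^(2*k)) + (-62911173888:ℤ)*(m:ℤ)^4*(k:ℤ)^4*(((2*m+7).choose k : ℤ))*((-1:ℤ)^k*3^(2*k)) + (415046797920:ℤ)*(m:ℤ)^4*(k:ℤ)^3*(((2*m+7).choose k : ℤ))*((-1:ℤ)^k*3^(2*k)) + (-1169163068688:ℤ)*(m:ℤ)^4*(k:ℤ)^2*(((2*m+7).choose k : ℤ))*((-1:ℤ)^k*3^(2*k)) + (521550115920:ℤ)*(m:ℤ)^4*(k:ℤ)*(((2*m+7).choose k : ℤ))*((-1:ℤ)^k*3^(2*k)) + (2173215572928:ℤ)*(m:ℤ)^4*(((2*m+7).choose k : ℤ))*((-1:ℤ)^k*3^(2*k)) + (8193024:ℤ)*(m:ℤ)^3*(k:ℤ)^7*(((2*m+7).choose k : ℤ))*((-1:ℤ)^k*3^(2*k))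 + (-576706176:ℤ)*(m:ℤ)^3*(k:ℤ)^6*(((2*m+7).choose k : ℤ))*((-1:ℤ)^k*3^(2*k)) + (13434179328:ℤ)*(m:ℤ)^3*(k:ℤ)^5*(((2*m+7).choose k : ℤ))*((-1:ℤ)^k*3^(2*k)) + (-142908820128:ℤ)*(m:ℤ)^3*(k:ℤ)^4*(((2*m+7).choose k : ℤ))*((-1:ℤ)^k*3^(2*k)) + (743906050416:ℤ)*(m:ℤ)^3*(k:ℤ)^3*(((2*m+7).choose k : ℤ))*((-1:ℤ)^k*3^(2*k)) + (-1673258256648:ℤ)*(m:ℤ)^3*(k:ℤ)^2*(((2*m+7).choose k : ℤ))*((-1:ℤ)^k*3^(2*k)) + (331593039144:ℤ)*(m:ℤ)^3*(k:ℤ)*(((2*m+7).choose k : ℤ))*((-1:ℤ)^k*3^(2*k)) + (2905685244864:ℤ)*(m:ℤ)^3*(((2*m+7).choose k : ℤ))*((-1:ℤ)^k*3^(2*k)) + (27781632:ℤ)*(m:ℤ)^2*(k:ℤ)^7*(((2*m+7).choose k : ℤ))*((-1:ℤ)^k*3^(2*k)) + (-1310970816:ℤ)*(m:ℤ)^2*(k:ℤ)^6*(((2*m+7).choose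 k : ℤ))*((-1:ℤ)^k*3^(2*k)) + (22919279328:ℤ)*(m:ℤ)^2*(k:ℤ)^5*(((2*m+7).choose k : ℤ))*((-1:ℤ)^k*3^(2*k)) + (-193961397600:ℤ)*(m:ℤ)^2*(k:ℤ)^4*(((2*m+7).choose k : ℤ))*((-1:ℤ)^k*3^(2*k)) + (828081143064:ℤ)*(m:ℤ)^2*(k:ℤ)^3*(((2*m+7).choose k : ℤ))*((-1:ℤ)^k*3^(2*k)) + (-1518866468244:ℤ)*(m:ℤ)^2*(k:ℤ)^2*(((2*m+7).choose k : ℤ))*((-1:ℤ)^k*3^(2*k)) + (-30741935616:ℤ)*(m:ℤ)^2*(k:ℤ)*(((2*m+7).choose k : ℤ))*((-1:ℤ)^k*3^(2*k)) + (2534425105068:ℤ)*(m:ℤ)^2*(((2*m+7).choose k : ℤ))*((-1:ℤ)^k*3^(2*k)) + (41732352:ℤ)*(m:ℤ)*(k:ℤ)^7*(((2*m+7).choose k : ℤ))*((-1:ℤ)^k*3^(2*k)) + (-1487087712:ℤ)*(m:ℤ)*(k:ℤ)^6*(((2*m+7).choose k : ℤ))*((-1:ℤ)^k*3^(2*k))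 + (20795421456:ℤ)*(m:ℤ)*(k:ℤ)^5*(((2*m+7).choose k : ℤ))*((-1:ℤ)^k*3^(2*k)) + (-145628236440:ℤ)*(m:ℤ)*(k:ℤ)^4*(((2*m+7).choose k : ℤ))*((-1:ℤ)^k*3^(2*k)) + (523251615708:ℤ)*(m:ℤ)*(k:ℤ)^3*(((2*m+7).choose k : ℤ))*((-1:ℤ)^k*3^(2*k)) + (-791858764548:ℤ)*(m:ℤ)*(k:ℤ)^2*(((2*m+7).choose k : ℤ))*((-1:ℤ)^k*3^(2*k)) + (-181061816076:ℤ)*(m:ℤ)*(k:ℤ)*(((2*m+7).choose k : ℤ))*((-1:ℤ)^k*3^(2*k)) + (1302001042140:ℤ)*(m:ℤ)*(((2*m+7).choose k : ℤ))*((-1:ℤ)^k*3^(2*k)) + (23431680:ℤ)*(k:ℤ)^7*(((2*m+7).choose k : ℤ))*((-1:ℤ)^k*3^(2*k)) + (-673375680:ℤ)*(k:ℤ)^6*(((2*m+7).choose k : ℤ))*((-1:ℤ)^k*3^(2*k)) + (7839879840:ℤ)*(k:ℤ)^5*(((2*m+7).choose k : ℤ))*((-1:ℤ)^k*3^(2*k))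 + (-46656615600:ℤ)*(k:ℤ)^4*(((2*m+7).choose k : ℤ))*((-1:ℤ)^k*3^(2*k)) + (143642364120:ℤ)*(k:ℤ)^3*(((2*m+7).choose k : ℤ))*((-1:ℤ)^k*3^(2*k)) + (-180136233720:ℤ)*(k:ℤ)^2*(((2*m+7).choose k : ℤ))*((-1:ℤ)^k*3^(2*k)) + (-79871802840:ℤ)*(k:ℤ)*(((2*m+7).choose k : ℤ))*((-1:ℤ)^k*3^(2*k)) + (299100097800:ℤ)*(((2*m+7).choose k : ℤ))*((-1:ℤ)^k*3^(2*k))) * hWs + ((8957952:ℤ)*(m:ℤ)^9*(k:ℤ)*(Wp (2*m+1) (6*(m:ℤ)+11-2*(k:ℤ)))*((-1:ℤ)^k*3^(2*k)) + (8957952:ℤ)*(m:ℤ)^9*(Wp (2*m+1) (6*(m:ℤ)+11-2*(k:ℤ)))*((-1:ℤ)^k*3^(2*k)) + (-20901888:ℤ)*(m:ℤ)^8*(k:ℤ)^2*(Wp (2*m+1) (6*(m:ℤ)+11-2*(k:ℤ)))*((-1:ℤ)^k*3^(2*k)) + (171694080:ℤ)*(m:ℤ)^8*(k:ℤ)*(Wp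 (2*m+1) (6*(m:ℤ)+11-2*(k:ℤ)))*((-1:ℤ)^k*3^(2*k)) + (192595968:ℤ)*(m:ℤ)^8*(Wp (2*m+1) (6*(m:ℤ)+11-2*(k:ℤ)))*((-1:ℤ)^k*3^(2*k)) + (17915904:ℤ)*(m:ℤ)^7*(k:ℤ)^3*(Wp (2*m+1) (6*(m:ℤ)+11-2*(k:ℤ)))*((-1:ℤ)^k*3^(2*k)) + (-376233984:ℤ)*(m:ℤ)^7*(k:ℤ)^2*(Wp (2*m+1) (6*(m:ℤ)+11-2*(k:ℤ)))*((-1:ℤ)^k*3^(2*k)) + (1434267648:ℤ)*(m:ℤ)^7*(k:ℤ)*(Wp (2*m+1) (6*(m:ℤ)+11-2*(k:ℤ)))*((-1:ℤ)^k*3^(2*k)) + (1828417536:ℤ)*(m:ℤ)^7*(Wp (2*m+1) (6*(m:ℤ)+11-2*(k:ℤ)))*((-1:ℤ)^k*3^(2*k)) + (-7299072:ℤ)*(m:ℤ)^6*(k:ℤ)^4*(Wp (2*m+1) (6*(m:ℤ)+11-2*(k:ℤ)))*((-1:ℤ)^k*3^(2*k)) + (288313344:ℤ)*(m:ℤ)^6*(k:ℤ)^3*(Wp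 (2*m+1) (6*(m:ℤ)+11-2*(k:ℤ)))*((-1:ℤ)^k*3^(2*k)) + (-2942189568:ℤ)*(m:ℤ)^6*(k:ℤ)^2*(Wp (2*m+1) (6*(m:ℤ)+11-2*(k:ℤ)))*((-1:ℤ)^k*3^(2*k)) + (6821853696:ℤ)*(m:ℤ)^6*(k:ℤ)*(Wp (2*m+1) (6*(m:ℤ)+11-2*(k:ℤ)))*((-1:ℤ)^k*3^(2*k)) + (10059655680:ℤ)*(m:ℤ)^6*(Wp (2*m+1) (6*(m:ℤ)+11-2*(k:ℤ)))*((-1:ℤ)^k*3^(2*k)) + (1437696:ℤ)*(m:ℤ)^5*(k:ℤ)^5*(Wp (2*m+1) (6*(m:ℤ)+11-2*(k:ℤ)))*((-1:ℤ)^k*3^(2*k)) + (-102739968:ℤ)*(m:ℤ)^5*(k:ℤ)^4*(Wp (2*m+1) (6*(m:ℤ)+11-2*(k:ℤ)))*((-1:ℤ)^k*3^(2*k)) + (1979099136:ℤ)*(m:ℤ)^5*(k:ℤ)^3*(Wp (2*m+1) (6*(m:ℤ)+11-2*(k:ℤ)))*((-1:ℤ)^k*3^(2*k)) + (-13046579712:ℤ)*(m:ℤ)^5*(k:ℤ)^2*(Wp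 (2*m+1) (6*(m:ℤ)+11-2*(k:ℤ)))*((-1:ℤ)^k*3^(2*k)) + (20216134656:ℤ)*(m:ℤ)^5*(k:ℤ)*(Wp (2*m+1) (6*(m:ℤ)+11-2*(k:ℤ)))*((-1:ℤ)^k*3^(2*k)) + (35345991168:ℤ)*(m:ℤ)^5*(Wp (2*m+1) (6*(m:ℤ)+11-2*(k:ℤ)))*((-1:ℤ)^k*3^(2*k)) + (-110592:ℤ)*(m:ℤ)^4*(k:ℤ)^6*(Wp (2*m+1) (6*(m:ℤ)+11-2*(k:ℤ)))*((-1:ℤ)^k*3^(2*k)) + (17307648:ℤ)*(m:ℤ)^4*(k:ℤ)^5*(Wp (2*m+1) (6*(m:ℤ)+11-2*(k:ℤ)))*((-1:ℤ)^k*3^(2*k)) + (-600256512:ℤ)*(m:ℤ)^4*(k:ℤ)^4*(Wp (2*m+1) (6*(m:ℤ)+11-2*(k:ℤ)))*((-1:ℤ)^k*3^(2*k)) + (7508680704:ℤ)*(m:ℤ)^4*(k:ℤ)^3*(Wp (2*m+1) (6*(m:ℤ)+11-2*(k:ℤ)))*((-1:ℤ)^k*3^(2*k)) + (-35850993408:ℤ)*(m:ℤ)^4*(k:ℤ)^2*(Wp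 (2*m+1) (6*(m:ℤ)+11-2*(k:ℤ)))*((-1:ℤ)^k*3^(2*k)) + (38265349248:ℤ)*(m:ℤ)^4*(k:ℤ)*(Wp (2*m+1) (6*(m:ℤ)+11-2*(k:ℤ)))*((-1:ℤ)^k*3^(2*k)) + (82242698112:ℤ)*(m:ℤ)^4*(Wp (2*m+1) (6*(m:ℤ)+11-2*(k:ℤ)))*((-1:ℤ)^k*3^(2*k)) + (-1105920:ℤ)*(m:ℤ)^3*(k:ℤ)^6*(Wp (2*m+1) (6*(m:ℤ)+11-2*(k:ℤ)))*((-1:ℤ)^k*3^(2*k)) + (83060736:ℤ)*(m:ℤ)^3*(k:ℤ)^5*(Wp (2*m+1) (6*(m:ℤ)+11-2*(k:ℤ)))*((-1:ℤ)^k*3^(2*k)) + (-1862519808:ℤ)*(m:ℤ)^3*(k:ℤ)^4*(Wp (2*m+1) (6*(m:ℤ)+11-2*(k:ℤ)))*((-1:ℤ)^k*3^(2*k)) + (16997509632:ℤ)*(m:ℤ)^3*(k:ℤ)^3*(Wp (2*m+1) (6*(m:ℤ)+11-2*(k:ℤ)))*((-1:ℤ)^k*3^(2*k)) + (-62456241408:ℤ)*(m:ℤ)^3*(k:ℤ)^2*(Wp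 (2*m+1) (6*(m:ℤ)+11-2*(k:ℤ)))*((-1:ℤ)^k*3^(2*k)) + (45305694720:ℤ)*(m:ℤ)^3*(k:ℤ)*(Wp (2*m+1) (6*(m:ℤ)+11-2*(k:ℤ)))*((-1:ℤ)^k*3^(2*k)) + (126706132224:ℤ)*(m:ℤ)^3*(Wp (2*m+1) (6*(m:ℤ)+11-2*(k:ℤ)))*((-1:ℤ)^k*3^(2*k)) + (-4134912:ℤ)*(m:ℤ)^2*(k:ℤ)^6*(Wp (2*m+1) (6*(m:ℤ)+11-2*(k:ℤ)))*((-1:ℤ)^k*3^(2*k)) + (198532608:ℤ)*(m:ℤ)^2*(k:ℤ)^5*(Wp (2*m+1) (6*(m:ℤ)+11-2*(k:ℤ)))*((-1:ℤ)^k*3^(2*k)) + (-3235944960:ℤ)*(m:ℤ)^2*(k:ℤ)^4*(Wp (2*m+1) (6*(m:ℤ)+11-2*(k:ℤ)))*((-1:ℤ)^k*3^(2*k)) + (22947490560:ℤ)*(m:ℤ)^2*(k:ℤ)^3*(Wp (2*m+1) (6*(m:ℤ)+11-2*(k:ℤ)))*((-1:ℤ)^k*3^(2*k)) + (-67288027008:ℤ)*(m:ℤ)^2*(k:ℤ)^2*(Wp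 (2*m+1) (6*(m:ℤ)+11-2*(k:ℤ)))*((-1:ℤ)^k*3^(2*k)) + (30942840672:ℤ)*(m:ℤ)^2*(k:ℤ)*(Wp (2*m+1) (6*(m:ℤ)+11-2*(k:ℤ)))*((-1:ℤ)^k*3^(2*k)) + (124616970720:ℤ)*(m:ℤ)^2*(Wp (2*m+1) (6*(m:ℤ)+11-2*(k:ℤ)))*((-1:ℤ)^k*3^(2*k)) + (-6842880:ℤ)*(m:ℤ)*(k:ℤ)^6*(Wp (2*m+1) (6*(m:ℤ)+11-2*(k:ℤ)))*((-1:ℤ)^k*3^(2*k)) + (236248320:ℤ)*(m:ℤ)*(k:ℤ)^5*(Wp (2*m+1) (6*(m:ℤ)+11-2*(k:ℤ)))*((-1:ℤ)^k*3^(2*k)) + (-2983833600:ℤ)*(m:ℤ)*(k:ℤ)^4*(Wp (2*m+1) (6*(m:ℤ)+11-2*(k:ℤ)))*((-1:ℤ)^k*3^(2*k)) + (17099491200:ℤ)*(m:ℤ)*(k:ℤ)^3*(Wp (2*m+1) (6*(m:ℤ)+11-2*(k:ℤ)))*((-1:ℤ)^k*3^(2*k)) + (-40933881120:ℤ)*(m:ℤ)*(k:ℤ)^2*(Wp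 (2*m+1) (6*(m:ℤ)+11-2*(k:ℤ)))*((-1:ℤ)^k*3^(2*k)) + (9723059280:ℤ)*(m:ℤ)*(k:ℤ)*(Wp (2*m+1) (6*(m:ℤ)+11-2*(k:ℤ)))*((-1:ℤ)^k*3^(2*k)) + (70983356400:ℤ)*(m:ℤ)*(Wp (2*m+1) (6*(m:ℤ)+11-2*(k:ℤ)))*((-1:ℤ)^k*3^(2*k)) + (-4224000:ℤ)*(k:ℤ)^6*(Wp (2*m+1) (6*(m:ℤ)+11-2*(k:ℤ)))*((-1:ℤ)^k*3^(2*k)) + (111936000:ℤ)*(k:ℤ)^5*(Wp (2*m+1) (6*(m:ℤ)+11-2*(k:ℤ)))*((-1:ℤ)^k*3^(2*k)) + (-1140480000:ℤ)*(k:ℤ)^4*(Wp (2*m+1) (6*(m:ℤ)+11-2*(k:ℤ)))*((-1:ℤ)^k*3^(2*k)) + (5422560000:ℤ)*(k:ℤ)^3*(Wp (2*m+1) (6*(m:ℤ)+11-2*(k:ℤ)))*((-1:ℤ)^k*3^(2*k)) + (-10747176000:ℤ)*(k:ℤ)^2*(Wp (2*m+1) (6*(m:ℤ)+11-2*(k:ℤ)))*((-1:ℤ)^k*3^(2*k))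 + (411444000:ℤ)*(k:ℤ)*(Wp (2*m+1) (6*(m:ℤ)+11-2*(k:ℤ)))*((-1:ℤ)^k*3^(2*k)) + (17837820000:ℤ)*(Wp (2*m+1) (6*(m:ℤ)+11-2*(k:ℤ)))*((-1:ℤ)^k*3^(2*k))) * hc5 + ((4478976:ℤ)*(m:ℤ)^7*(k:ℤ)*(Wp (2*m+1) (6*(m:ℤ)+11-2*(k:ℤ)))*((-1:ℤ)^k*3^(2*k)) + (4478976:ℤ)*(m:ℤ)^7*(Wp (2*m+1) (6*(m:ℤ)+11-2*(k:ℤ)))*((-1:ℤ)^k*3^(2*k)) + (-10450944:ℤ)*(m:ℤ)^6*(k:ℤ)^2*(Wp (2*m+1) (6*(m:ℤ)+11-2*(k:ℤ)))*((-1:ℤ)^k*3^(2*k)) + (63452160:ℤ)*(m:ℤ)^6*(k:ℤ)*(Wp (2*m+1) (6*(m:ℤ)+11-2*(k:ℤ)))*((-1:ℤ)^k*3^(2*k)) + (73903104:ℤ)*(m:ℤ)^6*(Wp (2*m+1) (6*(m:ℤ)+11-2*(k:ℤ)))*((-1:ℤ)^k*3^(2*k)) + (7464960:ℤ)*(m:ℤ)^5*(k:ℤ)^3*(Wp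 (2*m+1) (6*(m:ℤ)+11-2*(k:ℤ)))*((-1:ℤ)^k*3^(2*k)) + (-135862272:ℤ)*(m:ℤ)^5*(k:ℤ)^2*(Wp (2*m+1) (6*(m:ℤ)+11-2*(k:ℤ)))*((-1:ℤ)^k*3^(2*k)) + (373994496:ℤ)*(m:ℤ)^5*(k:ℤ)*(Wp (2*m+1) (6*(m:ℤ)+11-2*(k:ℤ)))*((-1:ℤ)^k*3^(2*k)) + (517321728:ℤ)*(m:ℤ)^5*(Wp (2*m+1) (6*(m:ℤ)+11-2*(k:ℤ)))*((-1:ℤ)^k*3^(2*k)) + (-1492992:ℤ)*(m:ℤ)^4*(k:ℤ)^4*(Wp (2*m+1) (6*(m:ℤ)+11-2*(k:ℤ)))*((-1:ℤ)^k*3^(2*k)) + (81368064:ℤ)*(m:ℤ)^4*(k:ℤ)^3*(Wp (2*m+1) (6*(m:ℤ)+11-2*(k:ℤ)))*((-1:ℤ)^k*3^(2*k)) + (-730073088:ℤ)*(m:ℤ)^4*(k:ℤ)^2*(Wp (2*m+1) (6*(m:ℤ)+11-2*(k:ℤ)))*((-1:ℤ)^k*3^(2*k)) + (1179090432:ℤ)*(m:ℤ)^4*(k:ℤ)*(Wp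 (2*m+1) (6*(m:ℤ)+11-2*(k:ℤ)))*((-1:ℤ)^k*3^(2*k)) + (1992024576:ℤ)*(m:ℤ)^4*(Wp (2*m+1) (6*(m:ℤ)+11-2*(k:ℤ)))*((-1:ℤ)^k*3^(2*k)) + (-13436928:ℤ)*(m:ℤ)^3*(k:ℤ)^4*(Wp (2*m+1) (6*(m:ℤ)+11-2*(k:ℤ)))*((-1:ℤ)^k*3^(2*k)) + (353465856:ℤ)*(m:ℤ)^3*(k:ℤ)^3*(Wp (2*m+1) (6*(m:ℤ)+11-2*(k:ℤ)))*((-1:ℤ)^k*3^(2*k)) + (-2074139136:ℤ)*(m:ℤ)^3*(k:ℤ)^2*(Wp (2*m+1) (6*(m:ℤ)+11-2*(k:ℤ)))*((-1:ℤ)^k*3^(2*k)) + (2116596096:ℤ)*(m:ℤ)^3*(k:ℤ)*(Wp (2*m+1) (6*(m:ℤ)+11-2*(k:ℤ)))*((-1:ℤ)^k*3^(2*k)) + (4557638016:ℤ)*(m:ℤ)^3*(Wp (2*m+1) (6*(m:ℤ)+11-2*(k:ℤ)))*((-1:ℤ)^k*3^(2*k)) + (-45163008:ℤ)*(m:ℤ)^2*(k:ℤ)^4*(Wp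 (2*m+1) (6*(m:ℤ)+11-2*(k:ℤ)))*((-1:ℤ)^k*3^(2*k)) + (764971776:ℤ)*(m:ℤ)^2*(k:ℤ)^3*(Wp (2*m+1) (6*(m:ℤ)+11-2*(k:ℤ)))*((-1:ℤ)^k*3^(2*k)) + (-3282809472:ℤ)*(m:ℤ)^2*(k:ℤ)^2*(Wp (2*m+1) (6*(m:ℤ)+11-2*(k:ℤ)))*((-1:ℤ)^k*3^(2*k)) + (2102739264:ℤ)*(m:ℤ)^2*(k:ℤ)*(Wp (2*m+1) (6*(m:ℤ)+11-2*(k:ℤ)))*((-1:ℤ)^k*3^(2*k)) + (6195683520:ℤ)*(m:ℤ)^2*(Wp (2*m+1) (6*(m:ℤ)+11-2*(k:ℤ)))*((-1:ℤ)^k*3^(2*k)) + (-67184640:ℤ)*(m:ℤ)*(k:ℤ)^4*(Wp (2*m+1) (6*(m:ℤ)+11-2*(k:ℤ)))*((-1:ℤ)^k*3^(2*k)) + (824878080:ℤ)*(m:ℤ)*(k:ℤ)^3*(Wp (2*m+1) (6*(m:ℤ)+11-2*(k:ℤ)))*((-1:ℤ)^k*3^(2*k)) + (-2741506560:ℤ)*(m:ℤ)*(k:ℤ)^2*(Wp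 (2*m+1) (6*(m:ℤ)+11-2*(k:ℤ)))*((-1:ℤ)^k*3^(2*k)) + (999371520:ℤ)*(m:ℤ)*(k:ℤ)*(Wp (2*m+1) (6*(m:ℤ)+11-2*(k:ℤ)))*((-1:ℤ)^k*3^(2*k)) + (4632940800:ℤ)*(m:ℤ)*(Wp (2*m+1) (6*(m:ℤ)+11-2*(k:ℤ)))*((-1:ℤ)^k*3^(2*k)) + (-37324800:ℤ)*(k:ℤ)^4*(Wp (2*m+1) (6*(m:ℤ)+11-2*(k:ℤ)))*((-1:ℤ)^k*3^(2*k)) + (354585600:ℤ)*(k:ℤ)^3*(Wp (2*m+1) (6*(m:ℤ)+11-2*(k:ℤ)))*((-1:ℤ)^k*3^(2*k)) + (-942451200:ℤ)*(k:ℤ)^2*(Wp (2*m+1) (6*(m:ℤ)+11-2*(k:ℤ)))*((-1:ℤ)^k*3^(2*k)) + (135302400:ℤ)*(k:ℤ)*(Wp (2*m+1) (6*(m:ℤ)+11-2*(k:ℤ)))*((-1:ℤ)^k*3^(2*k)) + (1469664000:ℤ)*(Wp (2*m+1) (6*(m:ℤ)+11-2*(k:ℤ)))*((-1:ℤ)^k*3^(2*k)))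 * hc3

def gm (m k : ℕ) : ℤ :=
  ((2*m+7).choose k : ℤ) * (-1)^k * 3^(2*k) * Yp m k * Wp (2*m+1) (6*(m:ℤ)+11-2*(k:ℤ))

lemma step2 (m k : ℕ) :
    (2*(m:ℤ)+4)*(2*(m:ℤ)+5)*(2*(m:ℤ)+6)*(2*(m:ℤ)+7) *
      ( ((2*m+7).choose k : ℤ) * Wp (2*m+7) (6*(m:ℤ)+23-2*(k:ℤ)) * (-1)^k * 3^(2*k)
      + 24*(36*((m:ℤ)+1)^2+126*((m:ℤ)+1)+113) *
          (((2*m+5).choose k : ℤ) * Wp (2*m+5) (6*(m:ℤ)+17-2*(k:ℤ)) * (-1)^k * 3^(2*k))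
      + 46656*((m:ℤ)+2)^2*(2*(m:ℤ)+5)^2 *
          (((2*m+3).choose k : ℤ) * Wp (2*m+3) (6*(m:ℤ)+11-2*(k:ℤ)) * (-1)^k * 3^(2*k)) )
    = gm m (k+1) - gm m k := by
  unfold gm
  rw [show 6*(m:ℤ)+11-2*((k+1 : ℕ):ℤ) = 6*(m:ℤ)+9-2*(k:ℤ) by push_cast; ring]
  exact step m k

lemma gm_zero (m : ℕ) : gm m 0 = 0 := by
  unfold gm Yp
  norm_num

lemma gm_top (m : ℕ) : gm m (2*m+8) = 0 := by
  unfold gm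
  rw [Nat.choose_eq_zero_of_lt (by omega)]
  simp

lemma S2_3 (m : ℕ) : S₂ (m+3) = ∑ k ∈ range (2*m+8),
    ((2*m+7).choose k : ℤ) * Wp (2*m+7) (6*(m:ℤ)+23-2*(k:ℤ)) * (-1)^k * 3^(2*k) := by
  unfold S₂ Wp
  rw [show 2*(m+3)+2 = 2*m+8 by omega]
  refine Finset.sum_congr rfl fun k _ => ?_
  rw [show 2*(m+3)+1 = 2*m+7 by omega]
  have : (∏ j ∈ Icc 1 (2*m+7), (6 * ((m+3 : ℕ) : ℤ) - 2 * (k : ℤ) + 5 - 2 * (j : ℤ)))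
      = ∏ j ∈ Icc 1 (2*m+7), (6*(m:ℤ)+23-2*(k:ℤ) - 2 * (j : ℤ)) := by
    refine Finset.prod_congr rfl fun j _ => ?_
    push_cast
    ring
  rw [this]

lemma S2_ext (m R : ℕ) (h : 2*m+2 ≤ R) : S₂ m = ∑ k ∈ range R,
    ((2*m+1).choose k : ℤ) * Wp (2*m+1) (6*(m:ℤ)+5-2*(k:ℤ)) * (-1)^k * 3^(2*k) := by
  have h1 : S₂ m = ∑ k ∈ range (2*m+2),
      ((2*m+1).choose k : ℤ) * Wp (2*m+1) (6*(m:ℤ)+5-2*(k:ℤ)) * (-1)^k * 3^(2*k) := by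
    unfold S₂ Wp
    refine Finset.sum_congr rfl fun k _ => ?_
    have : (∏ j ∈ Icc 1 (2*m+1), (6 * (m : ℤ) - 2 * (k : ℤ) + 5 - 2 * (j : ℤ)))
        = ∏ j ∈ Icc 1 (2*m+1), (6*(m:ℤ)+5-2*(k:ℤ) - 2 * (j : ℤ)) := by
      refine Finset.prod_congr rfl fun j _ => ?_
      ring
    rw [this]
  rw [h1]
  refine Finset.sum_subset (Finset.range_subset_range.mpr h) fun x hx hnx => ?_
  have : 2*m+1 < x := by
    simp only [Finset.mem_range] at hnx
    omega
  rw [Nat.choose_eq_zero_of_lt this]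
  simp

lemma S2_2 (m : ℕ) : S₂ (m+2) = ∑ k ∈ range (2*m+8),
    ((2*m+5).choose k : ℤ) * Wp (2*m+5) (6*(m:ℤ)+17-2*(k:ℤ)) * (-1)^k * 3^(2*k) := by
  rw [S2_ext (m+2) (2*m+8) (by omega)]
  refine Finset.sum_congr rfl fun k _ => ?_
  rw [show 2*(m+2)+1 = 2*m+5 by omega,
      show 6*((m+2 : ℕ):ℤ)+5-2*(k:ℤ) = 6*(m:ℤ)+17-2*(k:ℤ) by push_cast; ring]

lemma S2_1 (m : ℕ) : S₂ (m+1) = ∑ k ∈ range (2*m+8),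
    ((2*m+3).choose k : ℤ) * Wp (2*m+3) (6*(m:ℤ)+11-2*(k:ℤ)) * (-1)^k * 3^(2*k) := by
  rw [S2_ext (m+1) (2*m+8) (by omega)]
  refine Finset.sum_congr rfl fun k _ => ?_
  rw [show 2*(m+1)+1 = 2*m+3 by omega,
      show 6*((m+1 : ℕ):ℤ)+5-2*(k:ℤ) = 6*(m:ℤ)+11-2*(k:ℤ) by push_cast; ring]

lemma key_s7 (m : ℕ) :
    S₂ (m+3) + 24*(36*((m:ℤ)+1)^2+126*((m:ℤ)+1)+113) * S₂ (m+2)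
      + 46656*((m:ℤ)+2)^2*(2*(m:ℤ)+5)^2 * S₂ (m+1) = 0 := by
  have hM : (2*(m:ℤ)+4)*(2*(m:ℤ)+5)*(2*(m:ℤ)+6)*(2*(m:ℤ)+7) ≠ 0 := by positivity
  set A := 24*(36*((m:ℤ)+1)^2+126*((m:ℤ)+1)+113) with hA
  set B := 46656*((m:ℤ)+2)^2*(2*(m:ℤ)+5)^2 with hB
  set M := (2*(m:ℤ)+4)*(2*(m:ℤ)+5)*(2*(m:ℤ)+6)*(2*(m:ℤ)+7) with hMdef
  apply mul_left_cancel₀ hM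
  rw [mul_zero, S2_3 m, S2_2 m, S2_1 m]
  have key0 : ∑ k ∈ range (2*m+8), (M *
      ( ((2*m+7).choose k : ℤ) * Wp (2*m+7) (6*(m:ℤ)+23-2*(k:ℤ)) * (-1)^k * 3^(2*k)
      + A * (((2*m+5).choose k : ℤ) * Wp (2*m+5) (6*(m:ℤ)+17-2*(k:ℤ)) * (-1)^k * 3^(2*k))
      + B * (((2*m+3).choose k : ℤ) * Wp (2*m+3) (6*(m:ℤ)+11-2*(k:ℤ)) * (-1)^k * 3^(2*k)) )) = 0 := by
    calc ∑ k ∈ range (2*m+8), (M *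
        ( ((2*m+7).choose k : ℤ) * Wp (2*m+7) (6*(m:ℤ)+23-2*(k:ℤ)) * (-1)^k * 3^(2*k)
        + A * (((2*m+5).choose k : ℤ) * Wp (2*m+5) (6*(m:ℤ)+17-2*(k:ℤ)) * (-1)^k * 3^(2*k))
        + B * (((2*m+3).choose k : ℤ) * Wp (2*m+3) (6*(m:ℤ)+11-2*(k:ℤ)) * (-1)^k * 3^(2*k)) ))
        = ∑ k ∈ range (2*m+8), (gm m (k+1) - gm m k) :=
          Finset.sum_congr rfl fun k _ => step2 m k
      _ = gm m (2*m+8) - gm m 0 := Finset.sum_range_sub (gm m) (2*m+8)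
      _ = 0 := by rw [gm_top, gm_zero, sub_zero]
  calc M * ((∑ k ∈ range (2*m+8),
        ((2*m+7).choose k : ℤ) * Wp (2*m+7) (6*(m:ℤ)+23-2*(k:ℤ)) * (-1)^k * 3^(2*k))
      + A * (∑ k ∈ range (2*m+8),
        ((2*m+5).choose k : ℤ) * Wp (2*m+5) (6*(m:ℤ)+17-2*(k:ℤ)) * (-1)^k * 3^(2*k))
      + B * (∑ k ∈ range (2*m+8),
        ((2*m+3).choose k : ℤ) * Wp (2*m+3) (6*(m:ℤ)+11-2*(k:ℤ)) * (-1)^k * 3^(2*k)))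
      = ∑ k ∈ range (2*m+8), (M *
        ( ((2*m+7).choose k : ℤ) * Wp (2*m+7) (6*(m:ℤ)+23-2*(k:ℤ)) * (-1)^k * 3^(2*k)
        + A * (((2*m+5).choose k : ℤ) * Wp (2*m+5) (6*(m:ℤ)+17-2*(k:ℤ)) * (-1)^k * 3^(2*k))
        + B * (((2*m+3).choose k : ℤ) * Wp (2*m+3) (6*(m:ℤ)+11-2*(k:ℤ)) * (-1)^k * 3^(2*k)) )) := by
        rw [Finset.mul_sum, Finset.mul_sum, ← Finset.sum_add_distrib,
            ← Finset.sum_add_distrib, Finset.mul_sum]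
    _ = 0 := key0

/-- The second-order recurrence satisfied by `S₂`:
`S₂(n+2) + 24(36n²+126n+113)·S₂(n+1) + 46656(n+1)²(2n+3)²·S₂(n) = 0`. -/
theorem stmt_7 (n : ℕ) :
    S₂ (n + 2) + 24 * (36 * (n : ℤ) ^ 2 + 126 * (n : ℤ) + 113) * S₂ (n + 1)
      + 46656 * ((n : ℤ) + 1) ^ 2 * (2 * (n : ℤ) + 3) ^ 2 * S₂ n = 0 := by
  cases n with
  | zero =>
    have h0 : S₂ 0 = -6 := by decide
    have h1 : S₂ 1 = 3312 := by decide
    have h2 : S₂ 2 = -6462720 := by decide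
    norm_num [h0, h1, h2]
  | succ m =>
    have h := key_s7 m
    rw [show m+1+2 = m+3 by omega, show m+1+1 = m+2 by omega]
    push_cast
    push_cast at h
    linear_combination h
end

section
/- For every integer n ≥ 0, the following identity holds in ℚ: S₁(n) = (−1)^n · 2^{2n+1} · 3^{2n+1} · (n+1)_{n+1} · (n+2)_n · Σ_{k=0}^{n} [ (−n)_k · (2n+2)_k / ( (n+2)_k · k! ) ] · (1/9)^k. -/
open Finset

/-- The rising factorial `(a)_k = a(a+1)⋯(a+k-1)`, with `(a)_0 = 1`. -/
def risingFactorial (a : ℚ) (k : ℕ) : ℚ := ∏ i ∈ range k, (a + i)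

/-! Each factor of the product in `S₁(n)` is `2(3n + 2 - k - j)`, so the summands with `k > n`
vanish, and for `k = n - i` the product is `2^(2n+1) (i+1)_(2n+1)`. After reindexing by `i`, both
sides are sums over `i ≤ n` whose terms agree once the rising factorials at natural numbers are
written as quotients of factorials and `(-n)_i = (-1)^i n!/(n-i)!`. -/

open Nat

lemma risingFactorial_succ' (a : ℚ) (k : ℕ) :
    risingFactorial a (k + 1) = a * risingFactorial (a + 1) k := by
  simp only [risingFactorial, prod_range_succ', Nat.cast_add, Nat.cast_one, Nat.cast_zero, add_zero]
  ring_nf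

lemma risingFactorial_eq_ascPochhammer_eval (a : ℚ) (k : ℕ) :
    risingFactorial a k = (ascPochhammer ℚ k).eval a := by
  induction k with
  | zero => simp [risingFactorial]
  | succ k ih => rw [risingFactorial, prod_range_succ, ← risingFactorial, ih, ascPochhammer_succ_eval]

lemma risingFactorial_natCast_add_one (m k : ℕ) :
    risingFactorial ((m : ℚ) + 1) k = (m + k)! / m ! := by
  rw [eq_div_iff (mod_cast m.factorial_ne_zero), mul_comm, risingFactorial_eq_ascPochhammer_eval]
  exact factorial_mul_ascPochhammer ℚ m k

lemma risingFactorial_neg_natCast {n k : ℕ} (hk : k ≤ n) :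
    risingFactorial (-(n : ℚ)) k = (-1) ^ k * (n ! / (n - k)!) := by
  rw [risingFactorial_eq_ascPochhammer_eval, ascPochhammer_eval_neg_eq_descPochhammer,
    descPochhammer_eval_eq_descFactorial, ← Nat.factorial_mul_descFactorial hk, Nat.cast_mul,
    mul_div_cancel_left₀ _ (mod_cast (n - k).factorial_ne_zero)]

lemma prod_Icc_add_sub_eq_risingFactorial (a : ℚ) (N : ℕ) :
    ∏ j ∈ Icc 1 N, (a + N - j) = risingFactorial a N := by
  induction N generalizing a with
  | zero => simp [risingFactorial]
  | succ N ih =>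
    rw [prod_Icc_succ_top (by omega), risingFactorial_succ', ← ih]
    push_cast
    ring_nf

lemma prod_Icc_eq_two_pow_mul_risingFactorial {n k : ℕ} (hk : k ≤ n) :
    ∏ j ∈ Icc 1 (2 * n + 1), (6 * (n : ℚ) - 2 * ((n - k : ℕ) : ℚ) + 4 - 2 * j) =
      2 ^ (2 * n + 1) * risingFactorial ((k : ℚ) + 1) (2 * n + 1) := by
  calc ∏ j ∈ Icc 1 (2 * n + 1), (6 * (n : ℚ) - 2 * ((n - k : ℕ) : ℚ) + 4 - 2 * j)
      = ∏ j ∈ Icc 1 (2 * n + 1), 2 * ((k : ℚ) + 1 + (2 * n + 1 : ℕ) - j) :=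
        prod_congr rfl fun j _ => by push_cast [hk]; ring
    _ = _ := by
        rw [prod_mul_distrib, prod_const, Nat.card_Icc, Nat.add_sub_cancel,
          prod_Icc_add_sub_eq_risingFactorial]

lemma cast_S₁_eq_sum (n : ℕ) :
    (S₁ n : ℚ) = ∑ k ∈ range (n + 1), ((2 * n + 1).choose (n - k) : ℚ) *
      (2 ^ (2 * n + 1) * risingFactorial ((k : ℚ) + 1) (2 * n + 1)) *
      (-1) ^ (n - k) * 3 ^ (2 * (n - k) + 1) := by
  rw [S₁]
  push_cast
  rw [← sum_subset (range_subset_range.mpr (by omega : n + 1 ≤ 2 * n + 2)), ← sum_range_reflect]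
  · refine sum_congr rfl fun k hk => ?_
    rw [Nat.add_sub_cancel, prod_Icc_eq_two_pow_mul_risingFactorial (mem_range_succ_iff.mp hk)]
  · intro i hi hin
    rw [mem_range] at hi hin
    have hroot : 3 * n + 2 - i ∈ Icc 1 (2 * n + 1) := by rw [mem_Icc]; omega
    rw [prod_eq_zero hroot (by push_cast [show i ≤ 3 * n + 2 by omega]; ring), mul_zero, zero_mul,
      zero_mul]

lemma choose_mul_risingFactorial {n k : ℕ} (hk : k ≤ n) :
    ((2 * n + 1).choose (n - k) : ℚ) * risingFactorial ((k : ℚ) + 1) (2 * n + 1) =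
      risingFactorial ((n : ℚ) + 1) (n + 1) * risingFactorial ((n : ℚ) + 2) n *
        (n ! / (n - k)!) * risingFactorial (2 * (n : ℚ) + 2) k /
        (risingFactorial ((n : ℚ) + 2) k * k !) := by
  obtain ⟨m, rfl⟩ := exists_add_of_le hk
  have h2 : ((k + m : ℕ) : ℚ) + 2 = ((k + m + 1 : ℕ) : ℚ) + 1 := by push_cast; ring
  have h3 : 2 * ((k + m : ℕ) : ℚ) + 2 = ((2 * (k + m) + 1 : ℕ) : ℚ) + 1 := by push_cast; ring
  rw [h2, h3, Nat.add_sub_cancel_left, Nat.cast_choose ℚ (by omega : m ≤ 2 * (k + m) + 1),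
    show 2 * (k + m) + 1 - m = 2 * k + m + 1 by omega]
  simp only [risingFactorial_natCast_add_one]
  rw [show k + m + 1 + (k + m) = 2 * (k + m) + 1 by ring,
    show k + m + (k + m + 1) = 2 * (k + m) + 1 by ring,
    show k + (2 * (k + m) + 1) = 2 * (k + m) + 1 + k by ring,
    show k + m + 1 + k = 2 * k + m + 1 by ring]
  field_simp

/-- The hypergeometric expression of `S₁`:
`S₁(n) = (-1)^n·2^(2n+1)·3^(2n+1)·(n+1)_{n+1}·(n+2)_n ·
  Σ_{k=0}^{n} ((-n)_k (2n+2)_k / ((n+2)_k k!)) (1/9)^k`. -/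
theorem stmt_8 (n : ℕ) :
    (S₁ n : ℚ) = (-1) ^ n * 2 ^ (2 * n + 1) * 3 ^ (2 * n + 1)
      * risingFactorial ((n : ℚ) + 1) (n + 1) * risingFactorial ((n : ℚ) + 2) n
      * ∑ k ∈ range (n + 1),
          risingFactorial (-(n : ℚ)) k * risingFactorial (2 * (n : ℚ) + 2) k
            / (risingFactorial ((n : ℚ) + 2) k * (Nat.factorial k : ℚ))
            * (1 / 9 : ℚ) ^ k := by
  rw [cast_S₁_eq_sum, mul_sum]
  refine sum_congr rfl fun k hk => ?_
  have hkn : k ≤ n := mem_range_succ_iff.mp hk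
  have hsign : (-1 : ℚ) ^ (n - k) = (-1) ^ n * (-1) ^ k := by
    rw [pow_sub₀ _ (by norm_num) hkn, ← inv_pow, inv_neg_one]
  have hthree : (3 : ℚ) ^ (2 * (n - k) + 1) = 3 ^ (2 * n + 1) * (1 / 9) ^ k := by
    rw [pow_succ, pow_succ, Nat.mul_sub, pow_sub₀ _ (by norm_num) (by omega), pow_mul 3 2 k,
      one_div, inv_pow]
    norm_num [mul_right_comm]
  rw [hsign, hthree, risingFactorial_neg_natCast hkn]
  linear_combination (2 ^ (2 * n + 1) * (-1) ^ n * (-1) ^ k * 3 ^ (2 * n + 1) * (1 / 9 : ℚ) ^ k) *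
    choose_mul_risingFactorial hkn
end

section
/- Let p be a prime, q a power of p, and a an integer with 0 ≤ a ≤ q − 1. Let z₁, z₂ ∈ ℤ with z₁ ≡ z₂ (mod q). Then the generalized binomial coefficients satisfy C(z₁, a) ≡ C(z₂, a) (mod p). -/
/-!
Reduced mod `p`, `z ↦ C(z, a)` is periodic with period `q`: by Chu–Vandermonde,
`C(z + q, a) = ∑_{i + j = a} C(z, i) C(q, j)`, and every term with `0 < j ≤ a < q` vanishes
mod `p` because `p ∣ C(q, j)`.
-/

open Finset Nat

/-- The generalized binomial coefficient `C(z, a) = z(z-1)⋯(z-a+1)/a!` for `z : ℤ`;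
the division is exact, so this is the usual integer value. -/
def intChoose (z : ℤ) (a : ℕ) : ℤ := (∏ i ∈ range a, (z - i)) / (a.factorial : ℤ)

lemma intChoose_eq_ringChoose (z : ℤ) (a : ℕ) : intChoose z a = Ring.choose z a := by
  have hprod : ∏ i ∈ range a, (z - i) = (a ! : ℤ) * Ring.choose z a := by
    rw [← nsmul_eq_mul, ← Ring.descPochhammer_eq_factorial_smul_choose,
      ← Polynomial.eval_eq_smeval, descPochhammer_eval_eq_prod_range]
  rw [intChoose, hprod, Int.mul_ediv_cancel_left _ (mod_cast a.factorial_ne_zero)]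

lemma Nat.Prime.natCast_choose_pow_eq_zero {p : ℕ} (hp : p.Prime) {m j : ℕ}
    (hj₀ : j ≠ 0) (hj : j ≠ p ^ m) : ((p ^ m).choose j : ZMod p) = 0 :=
  (ZMod.natCast_eq_zero_iff _ _).2 (hp.dvd_choose_pow hj₀ hj)

lemma periodic_ringChoose_intCast_zmod {p : ℕ} (hp : p.Prime) {m a : ℕ} (ha : a < p ^ m) :
    Function.Periodic (fun z : ℤ ↦ ((Ring.choose z a : ℤ) : ZMod p)) ((p ^ m : ℕ) : ℤ) := by
  intro z
  simp only [Ring.add_choose_eq a (Commute.all z _), Int.cast_sum, Int.cast_mul]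
  rw [sum_eq_single (a, 0)]
  · simp
  · rintro ⟨i, j⟩ hij hne
    have hsum : i + j = a := mem_antidiagonal.1 hij
    have hj₀ : j ≠ 0 := by rintro rfl; exact hne (by simp_all)
    rw [Ring.choose_natCast, Int.cast_natCast,
      hp.natCast_choose_pow_eq_zero hj₀ (by omega), mul_zero]
  · simp

/-- Lemma 3.0: if `q` is a power of the prime `p`, `0 ≤ a ≤ q - 1`, and
`z₁ ≡ z₂ (mod q)`, then `C(z₁, a) ≡ C(z₂, a) (mod p)`. -/
theorem stmt_11 (p : ℕ) (hp : p.Prime) (m q : ℕ) (hq : q = p ^ m)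
    (a : ℕ) (ha : a ≤ q - 1) (z₁ z₂ : ℤ) (h : z₁ ≡ z₂ [ZMOD (q : ℤ)]) :
    intChoose z₁ a ≡ intChoose z₂ a [ZMOD (p : ℤ)] := by
  subst hq
  have ha' : a < p ^ m := by have := pow_pos hp.pos m; omega
  obtain ⟨k, hk⟩ := Int.modEq_iff_dvd.1 h
  have hz₂ : z₂ = z₁ + k * ((p ^ m : ℕ) : ℤ) := by linarith
  rw [← ZMod.intCast_eq_intCast_iff, intChoose_eq_ringChoose, intChoose_eq_ringChoose, hz₂]
  exact ((periodic_ringChoose_intCast_zmod hp ha').int_mul k z₁).symm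
end

section
/- Let p be a prime, q a power of p, and let α, j be integers with 0 ≤ α ≤ q − 1 and 0 ≤ j ≤ q − 1 − α. Then C(q − 1 − α, j) ≡ (−1)^j · C(α + j, α) (mod p), where C denotes the ordinary binomial coefficient. -/
/-!
Modulo `p` every binomial coefficient `C(q, k)` with `0 < k < q` vanishes, so Pascal's rule
`C(q, k + 1) = C(q - 1, k) + C(q - 1, k + 1)` forces `C(q - 1, k) ≡ (-1)^k`. Feeding this into
the trinomial identity `C(n, α + j) C(α + j, α) = C(n, α) C(n - α, j)` with `n = q - 1` and
cancelling the unit `(-1)^α` gives the congruence.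
-/

namespace Nat

variable {R : Type*} [CommRing R]

theorem cast_choose_eq_neg_one_pow_of_cast_succ_choose_eq_zero {n : ℕ}
    (h : ∀ k, 0 < k → k ≤ n → ((n + 1).choose k : R) = 0) :
    ∀ k ≤ n, (n.choose k : R) = (-1) ^ k := by
  intro k hk
  induction k with
  | zero => simp
  | succ k ih =>
    have pascal : ((n + 1).choose (k + 1) : R) = n.choose k + n.choose (k + 1) := by
      rw [choose_succ_succ, cast_add]
    rw [h (k + 1) k.succ_pos hk, ih (by omega)] at pascal
    rw [pow_succ]
    linear_combination -pascal

theorem cast_choose_pow_sub_one (p : ℕ) [CharP R p] (hp : p.Prime) (m : ℕ) :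
    ∀ k ≤ p ^ m - 1, ((p ^ m - 1).choose k : R) = (-1) ^ k := by
  have hq : p ^ m - 1 + 1 = p ^ m := Nat.sub_add_cancel (Nat.one_le_pow _ _ hp.pos)
  refine cast_choose_eq_neg_one_pow_of_cast_succ_choose_eq_zero fun k hk hkq => ?_
  rw [hq, CharP.cast_eq_zero_iff R p]
  exact hp.dvd_choose_pow hk.ne' (by omega)

theorem cast_choose_sub_eq_neg_one_pow_mul_choose {n : ℕ}
    (h : ∀ k ≤ n, (n.choose k : R) = (-1) ^ k) {α j : ℕ} (hαj : α + j ≤ n) :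
    ((n - α).choose j : R) = (-1) ^ j * (α + j).choose α := by
  have trinomial : (n.choose (α + j) : R) * (α + j).choose α = n.choose α * (n - α).choose j := by
    have := choose_mul (n := n) (Nat.le_add_right α j)
    rw [add_tsub_cancel_left] at this
    rw [← cast_mul, ← cast_mul, this]
  rw [h _ hαj, h _ (by omega), pow_add] at trinomial
  have hα : ((-1 : R) ^ α) * (-1) ^ α = 1 := by rw [← mul_pow]; simp
  calc ((n - α).choose j : R)
      = (-1) ^ α * ((-1) ^ α * (n - α).choose j) := by rw [← mul_assoc, hα, one_mul]
    _ = (-1) ^ α * ((-1) ^ α * (-1) ^ j * (α + j).choose α) := by rw [trinomial]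
    _ = (-1) ^ j * (α + j).choose α := by linear_combination ((-1) ^ j * ((α + j).choose α : R)) * hα

end Nat

/-- If `q` is a power of the prime `p`, `0 ≤ α ≤ q - 1` and `0 ≤ j ≤ q - 1 - α`,
then `C(q-1-α, j) ≡ (-1)^j · C(α+j, α) (mod p)`. -/
theorem stmt_12 (p : ℕ) (hp : p.Prime) (m q : ℕ) (hq : q = p ^ m)
    (α j : ℕ) (hα : α ≤ q - 1) (hj : j ≤ q - 1 - α) :
    ((q - 1 - α).choose j : ℤ) ≡ (-1) ^ j * ((α + j).choose α : ℤ) [ZMOD (p : ℤ)] := by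
  subst hq
  rw [← ZMod.intCast_eq_intCast_iff]
  push_cast
  exact Nat.cast_choose_sub_eq_neg_one_pow_mul_choose
    (Nat.cast_choose_pow_sub_one p hp m) (by omega)
end

section
/- Let q > 2 be a prime power, t ∈ 𝔽_q^*, and f(x) = x^{q−2} + t·x^{q²−q−1}. Let α, β be integers with 0 ≤ α, β ≤ q − 1 and 0 < α + βq < q² − 1. If α + β ≠ q − 1, then Σ_{x ∈ 𝔽_{q²}^*} f(x)^{α+βq} = 0 in 𝔽_{q²}. -/
/-- First part of Lemma 3.1: let `q > 2` be a prime power, `t ∈ 𝔽_q^*`,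
`f(x) = x^(q-2) + t·x^(q²-q-1)`, and `α, β` integers with `0 ≤ α, β ≤ q-1` and
`0 < α + βq < q² - 1`. If `α + β ≠ q - 1`, then `Σ_{x ∈ 𝔽_{q²}^*} f(x)^(α+βq) = 0`. -/
theorem stmt_13 (p m q : ℕ) (hp : p.Prime) (hq : q = p ^ m) (hq2 : 2 < q)
    (K : Type) [Field K] [Fintype K] [DecidableEq K] (hK : Fintype.card K = q ^ 2)
    (t : K) (ht0 : t ≠ 0) (htq : t ^ q = t)
    (α β : ℕ) (hα : α ≤ q - 1) (hβ : β ≤ q - 1)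
    (hs1 : 0 < α + β * q) (hs2 : α + β * q < q ^ 2 - 1)
    (hne : α + β ≠ q - 1) :
    ∑ x : Kˣ, ((x : K) ^ (q - 2) + t * (x : K) ^ (q ^ 2 - q - 1)) ^ (α + β * q) = 0 := by
  obtain ⟨d, rfl⟩ : ∃ d, q = d + 3 := ⟨q - 3, by omega⟩
  set q : ℕ := d + 3 with hqdef
  set s : ℕ := α + β * q with hsdef
  -- (q-1) does not divide s
  have hndvd : ¬ (q - 1) ∣ s := by
    rintro hdvd
    have h1 : s = (α + β) + β * (q - 1) := by
      have hbq : β * q = β + β * (q - 1) := by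
        have : q - 1 = d + 2 := by omega
        rw [this, hqdef]; ring
      omega
    have hdab : (q - 1) ∣ (α + β) := by
      have h2 : (q - 1) ∣ (s - β * (q - 1)) := Nat.dvd_sub hdvd (dvd_mul_left _ _)
      have h3 : s - β * (q - 1) = α + β := by omega
      rwa [h3] at h2
    obtain ⟨e, he⟩ := hdab
    have hq1 : 0 < q - 1 := by omega
    have he2 : e ≤ 2 := by
      by_contra h
      have : (q - 1) * 3 ≤ (q - 1) * e := Nat.mul_le_mul_left _ (by omega)
      omega
    interval_cases e
    · -- α + β = 0
      have hα0 : α = 0 := by omega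
      have hβ0 : β = 0 := by omega
      rw [hsdef, hα0, hβ0] at hs1; simp at hs1
    · exact hne (by omega)
    · -- α = β = q - 1
      have hα' : α = q - 1 := by omega
      have hβ' : β = q - 1 := by omega
      have hkey : α + β * q = q ^ 2 - 1 := by
        rw [hα', hβ']
        have h4 : q - 1 = d + 2 := by omega
        have h5 : q ^ 2 = ((d + 2) + (d + 2) * (d + 3)) + 1 := by rw [hqdef]; ring
        rw [h4, h5, Nat.add_sub_cancel]
      omega
  -- hence (q^2 - 1) does not divide the relevant exponents
  have hq2dvd : (q - 1) ∣ (q ^ 2 - 1) := by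
    have : q ^ 2 - 1 = (q - 1) * (q + 1) := by
      have : q ^ 2 = (q - 1) * (q + 1) + 1 := by
        have h4 : q - 1 = d + 2 := by omega
        rw [h4, hqdef]; ring
      omega
    rw [this]; exact dvd_mul_right _ _
  -- expand binomially
  have hexp : ∀ x : Kˣ, ((x : K) ^ (q - 2) + t * (x : K) ^ (q ^ 2 - q - 1)) ^ s
      = ∑ k ∈ Finset.range (s + 1),
          (t ^ (s - k) * (s.choose k : K)) * (x : K) ^ ((q - 2) * k + (q ^ 2 - q - 1) * (s - k)) := by
    intro x
    rw [add_pow]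
    apply Finset.sum_congr rfl
    intro k hk
    rw [mul_pow, ← pow_mul, ← pow_mul, pow_add]
    ring
  calc ∑ x : Kˣ, ((x : K) ^ (q - 2) + t * (x : K) ^ (q ^ 2 - q - 1)) ^ s
      = ∑ x : Kˣ, ∑ k ∈ Finset.range (s + 1),
          (t ^ (s - k) * (s.choose k : K)) * (x : K) ^ ((q - 2) * k + (q ^ 2 - q - 1) * (s - k)) := by
        exact Finset.sum_congr rfl fun x _ => hexp x
    _ = ∑ k ∈ Finset.range (s + 1), ∑ x : Kˣ,
          (t ^ (s - k) * (s.choose k : K)) * (x : K) ^ ((q - 2) * k + (q ^ 2 - q - 1) * (s - k)) :=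
        Finset.sum_comm
    _ = 0 := by
        apply Finset.sum_eq_zero
        intro k hk
        rw [← Finset.mul_sum]
        have hkle : k ≤ s := by simpa using Nat.lt_succ_iff.mp (Finset.mem_range.mp hk)
        set e : ℕ := (q - 2) * k + (q ^ 2 - q - 1) * (s - k) with hedef
        have hes : e + s = (q - 1) * (k + q * (s - k)) := by
          have h4 : q - 2 = d + 1 := by omega
          have h9 : q ^ 2 = d * d + 6 * d + 9 := by rw [hqdef]; ring
          have h6 : q ^ 2 - q - 1 = d * d + 5 * d + 5 := by omega
          have h7 : q - 1 = d + 2 := by omega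
          have h8 : s = k + (s - k) := by omega
          rw [hedef, h4, h6, h7, hqdef]
          nlinarith [Nat.sub_le s k, hkle]
        have hnde : ¬ (q ^ 2 - 1) ∣ e := by
          intro hdvd
          apply hndvd
          have hd1 : (q - 1) ∣ e := dvd_trans hq2dvd hdvd
          have hd2 : (q - 1) ∣ (e + s) := ⟨k + q * (s - k), hes⟩
          have := Nat.dvd_sub hd2 hd1
          simpa using this
        have hsum : (∑ x : Kˣ, ((x : K)) ^ e) = 0 := by
          have h := FiniteField.sum_pow_units K e
          rw [hK, if_neg hnde] at h
          simpa using h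
        rw [hsum, mul_zero]
end

section
/- Let q > 2 be a power of a prime p, t ∈ 𝔽_q^*, and f(x) = x^{q−2} + t·x^{q²−q−1}. Let α, β be integers with 0 ≤ α, β ≤ q − 1, α + β = q − 1, and 0 < α + βq < q² − 1. Then, in 𝔽_{q²}, Σ_{x ∈ 𝔽_{q²}^*} f(x)^{α+βq} = − Σ_{(i,j)} C(α, i) · C(q−1−α, j) · t^{−(i+j)}, where the sum on the right is over all pairs of integers (i, j) with 0 ≤ i ≤ α, 0 ≤ j ≤ q − 1 − α, and 2(i − j) ≡ α + 1 (mod q + 1), and the binomial coefficients C(α, i), C(q−1−α, j) are reduced modulo p into 𝔽_q. -/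
open Finset

/-- Second part of Lemma 3.1 (intermediate form): with `q > 2` a power of the prime
`p`, `t ∈ 𝔽_q^*`, `f(x) = x^(q-2) + t·x^(q²-q-1)`, and `α + β = q - 1`
(`0 ≤ α, β ≤ q-1`, `0 < α + βq < q² - 1`), one has
`Σ_{x ∈ 𝔽_{q²}^*} f(x)^(α+βq)
  = - Σ_{(i,j), 2(i-j) ≡ α+1 (mod q+1)} C(α,i)·C(q-1-α,j)·t^{-(i+j)}`,
the sum being over `0 ≤ i ≤ α`, `0 ≤ j ≤ q-1-α`, with binomial coefficients
reduced mod `p` into the field. -/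
theorem stmt_14 (p m q : ℕ) (hp : p.Prime) (hq : q = p ^ m) (hq2 : 2 < q)
    (K : Type) [Field K] [Fintype K] [DecidableEq K] (hK : Fintype.card K = q ^ 2)
    (t : K) (ht0 : t ≠ 0) (htq : t ^ q = t)
    (α β : ℕ) (hα : α ≤ q - 1) (hβ : β ≤ q - 1) (hαβ : α + β = q - 1)
    (hs1 : 0 < α + β * q) (hs2 : α + β * q < q ^ 2 - 1) :
    ∑ x : Kˣ, ((x : K) ^ (q - 2) + t * (x : K) ^ (q ^ 2 - q - 1)) ^ (α + β * q)
      = - ∑ ij ∈ (range (α + 1) ×ˢ range (q - α)).filter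
            (fun ij => 2 * ((ij.1 : ℤ) - (ij.2 : ℤ)) ≡ (α : ℤ) + 1 [ZMOD ((q : ℤ) + 1)]),
          (α.choose ij.1 : K) * ((q - 1 - α).choose ij.2 : K) * t⁻¹ ^ (ij.1 + ij.2) := by
  classical
  have hqq : q ≤ q ^ 2 := Nat.le_self_pow two_ne_zero q
  have h2q : 2 * q ≤ q ^ 2 := by nlinarith
  have hqq1 : 1 ≤ q ^ 2 - q := by omega
  -- characteristic
  have hpfact : Fact p.Prime := ⟨hp⟩
  have hchar : CharP K p := by
    obtain ⟨n, hrp, hcard⟩ := FiniteField.card K (ringChar K)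
    have hm : 1 ≤ m := by
      rcases Nat.eq_zero_or_pos m with h | h
      · subst h; simp at hq; omega
      · exact h
    have hd : p ∣ ringChar K := by
      have h1 : p ∣ (ringChar K) ^ (n : ℕ) := by
        rw [← hcard, hK, hq, ← pow_mul]
        exact dvd_pow_self p (by positivity)
      exact hp.dvd_of_dvd_pow h1
    have : p = ringChar K := (Nat.prime_dvd_prime_iff_eq hp hrp).mp hd
    rw [this]; exact ringChar.charP K
  -- the exponent function
  set M : ℕ → ℕ → ℕ := fun i j =>
    (q - 2) * i + (q ^ 2 - q - 1) * (α - i) +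
      ((q - 2) * q * j + (q ^ 2 - q - 1) * q * (β - j)) with hM
  -- power sum over units
  have key : ∀ N : ℕ, ∑ x : Kˣ, (x : K) ^ N = if (q ^ 2 - 1) ∣ N then -1 else 0 := by
    intro N
    have := FiniteField.sum_pow_units K N
    rw [hK] at this
    simpa using this
  -- t facts
  have ht1 : t ^ (q - 1) = 1 := by
    have : t ^ (q - 1) * t = t := by
      rw [← pow_succ]
      have : q - 1 + 1 = q := by omega
      rw [this, htq]
    field_simp at this
    exact this
  have htpow : ∀ i j : ℕ, i ≤ α → j ≤ β → t ^ (α - i + (β - j)) = t⁻¹ ^ (i + j) := by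
    intro i j hi hj
    have hsum : (α - i + (β - j)) + (i + j) = q - 1 := by omega
    have h1 : t ^ (α - i + (β - j)) * t ^ (i + j) = 1 := by
      rw [← pow_add, hsum, ht1]
    rw [inv_pow]
    exact eq_inv_of_mul_eq_one_left h1
  -- binomial expansion of each summand
  have hfrob : ∀ a b : K, (a + b) ^ q = a ^ q + b ^ q := by
    intro a b
    rw [hq]
    exact add_pow_char_pow a b p m
  have hexp : ∀ x : K,
      (x ^ (q - 2) + t * x ^ (q ^ 2 - q - 1)) ^ (α + β * q)
        = ∑ i ∈ range (α + 1), ∑ j ∈ range (β + 1),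
            (α.choose i : K) * (β.choose j : K) * t ^ (α - i + (β - j)) * x ^ M i j := by
    intro x
    have h1 : (x ^ (q - 2) + t * x ^ (q ^ 2 - q - 1)) ^ (α + β * q)
        = (x ^ (q - 2) + t * x ^ (q ^ 2 - q - 1)) ^ α *
          ((x ^ (q - 2) + t * x ^ (q ^ 2 - q - 1)) ^ q) ^ β := by
      rw [pow_add, mul_comm β q, pow_mul]
    have h2 : (x ^ (q - 2) + t * x ^ (q ^ 2 - q - 1)) ^ q
        = x ^ ((q - 2) * q) + t * x ^ ((q ^ 2 - q - 1) * q) := by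
      rw [hfrob, mul_pow, htq, ← pow_mul, ← pow_mul]
    rw [h1, h2, add_pow, add_pow, sum_mul_sum]
    refine sum_congr rfl fun i hi => sum_congr rfl fun j hj => ?_
    rw [hM]
    simp only [mul_pow, ← pow_mul, ← pow_add]
    ring_nf
  -- divisibility criterion
  have hdvd : ∀ i j : ℕ, i ≤ α → j ≤ β →
      ((q ^ 2 - 1) ∣ M i j ↔
        2 * ((i : ℤ) - (j : ℤ)) ≡ (α : ℤ) + 1 [ZMOD ((q : ℤ) + 1)]) := by
    intro i j hi hj
    have hc1 : ((α - i : ℕ) : ℤ) = (α : ℤ) - i := by omega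
    have hc2 : ((β - j : ℕ) : ℤ) = (β : ℤ) - j := by omega
    have hc3 : ((q - 2 : ℕ) : ℤ) = (q : ℤ) - 2 := by omega
    have hc4 : ((q ^ 2 - q - 1 : ℕ) : ℤ) = (q : ℤ) ^ 2 - q - 1 := by
      have : ((q ^ 2 : ℕ) : ℤ) = (q : ℤ) ^ 2 := by push_cast; ring
      omega
    have hβ' : (β : ℤ) = (q : ℤ) - 1 - α := by omega
    have hfac : (M i j : ℤ)
        = ((q : ℤ) ^ 2 - 1) * (((q : ℤ) - 1) ^ 2 - i - ((q : ℤ) - 2) * (j + α))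
          + ((q : ℤ) - 1) * (2 * ((i : ℤ) - j) - ((α : ℤ) + 1)) := by
      rw [hM]
      push_cast [hc1, hc2, hc3, hc4]
      rw [hβ']; ring
    rw [← Int.natCast_dvd_natCast]
    have hcast : ((q ^ 2 - 1 : ℕ) : ℤ) = (q : ℤ) ^ 2 - 1 := by
      have : ((q ^ 2 : ℕ) : ℤ) = (q : ℤ) ^ 2 := by push_cast; ring
      omega
    rw [hcast, hfac, dvd_add_right (dvd_mul_right _ _)]
    have hfac2 : (q : ℤ) ^ 2 - 1 = ((q : ℤ) - 1) * ((q : ℤ) + 1) := by ring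
    rw [hfac2, mul_dvd_mul_iff_left (by omega : (q : ℤ) - 1 ≠ 0)]
    rw [Int.modEq_iff_dvd, dvd_sub_comm]
  -- final assembly
  have hqα : q - α = β + 1 := by omega
  have hq1α : q - 1 - α = β := by omega
  rw [hqα, hq1α]
  calc ∑ x : Kˣ, ((x : K) ^ (q - 2) + t * (x : K) ^ (q ^ 2 - q - 1)) ^ (α + β * q)
      = ∑ x : Kˣ, ∑ i ∈ range (α + 1), ∑ j ∈ range (β + 1),
          (α.choose i : K) * (β.choose j : K) * t ^ (α - i + (β - j)) * (x : K) ^ M i j :=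
        sum_congr rfl fun x _ => hexp x
    _ = ∑ i ∈ range (α + 1), ∑ j ∈ range (β + 1),
          (α.choose i : K) * (β.choose j : K) * t ^ (α - i + (β - j)) *
            ∑ x : Kˣ, (x : K) ^ M i j := by
        rw [Finset.sum_comm]
        refine sum_congr rfl fun i _ => ?_
        rw [Finset.sum_comm]
        exact sum_congr rfl fun j _ => (mul_sum _ _ _).symm
    _ = ∑ ij ∈ range (α + 1) ×ˢ range (β + 1),
          (if (2 * ((ij.1 : ℤ) - (ij.2 : ℤ)) ≡ (α : ℤ) + 1 [ZMOD ((q : ℤ) + 1)])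
            then -((α.choose ij.1 : K) * (β.choose ij.2 : K) * t⁻¹ ^ (ij.1 + ij.2)) else 0) := by
        rw [sum_product]
        refine sum_congr rfl fun i hi => sum_congr rfl fun j hj => ?_
        have hi' : i ≤ α := Nat.lt_succ_iff.mp (mem_range.mp hi)
        have hj' : j ≤ β := Nat.lt_succ_iff.mp (mem_range.mp hj)
        rw [key, htpow i j hi' hj']
        by_cases h : 2 * ((i : ℤ) - (j : ℤ)) ≡ (α : ℤ) + 1 [ZMOD ((q : ℤ) + 1)]
        · rw [if_pos h, if_pos ((hdvd i j hi' hj').mpr h)]; ring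
        · rw [if_neg h, if_neg (fun hc => h ((hdvd i j hi' hj').mp hc)), mul_zero]
    _ = - ∑ ij ∈ (range (α + 1) ×ˢ range (β + 1)).filter
            (fun ij => 2 * ((ij.1 : ℤ) - (ij.2 : ℤ)) ≡ (α : ℤ) + 1 [ZMOD ((q : ℤ) + 1)]),
          (α.choose ij.1 : K) * (β.choose ij.2 : K) * t⁻¹ ^ (ij.1 + ij.2) := by
        rw [sum_filter, ← Finset.sum_neg_distrib]
        refine sum_congr rfl fun ij _ => ?_
        split_ifs <;> simp
end

section
/- Let q be an odd prime power, let t ∈ 𝔽_q^*, and suppose one of the following holds: (i) t = 1 and q ≡ 1 (mod 4); (ii) t = −3 and q ≡ ±1 (mod 12); (iii) t = 3 and q ≡ −1 (mod 6). Then the polynomial f(x) = x^{q−2} + t·x^{q²−q−1} has no root in 𝔽_{q²}^*; equivalently, there is no x ∈ 𝔽_{q²}^* with x^{2q−2} = −t. -/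
/-- In each of the three cases of Theorem 1.1 (with `q` an odd prime power),
`f(x) = x^(q-2) + t·x^(q²-q-1)` has no root in `𝔽_{q²}^*`; equivalently,
no `x ∈ 𝔽_{q²}^*` satisfies `x^(2q-2) = -t`. -/
theorem stmt_16 (p m q : ℕ) (hp : p.Prime) (hq : q = p ^ m) (hq2 : 2 < q) (hqodd : Odd q)
    (K : Type) [Field K] [Fintype K] (hK : Fintype.card K = q ^ 2)
    (t : K) (ht0 : t ≠ 0) (htq : t ^ q = t)
    (h : (t = 1 ∧ q % 4 = 1) ∨
         (t = -3 ∧ (q % 12 = 1 ∨ q % 12 = 11)) ∨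
         (t = 3 ∧ q % 6 = 5)) :
    (∀ x : K, x ≠ 0 → x ^ (q - 2) + t * x ^ (q ^ 2 - q - 1) ≠ 0) ∧
    (∀ x : K, x ≠ 0 → x ^ (2 * q - 2) ≠ -t) := by
  obtain ⟨k, hk⟩ := hqodd
  -- characteristic facts
  have hcard0 : ((q ^ 2 : ℕ) : K) = 0 := by
    rw [← hK]; exact Nat.cast_card_eq_zero K
  have hqK : (q : K) = 0 := by
    have h' : ((q : K)) ^ 2 = 0 := by push_cast at hcard0; exact hcard0
    exact pow_eq_zero_iff (two_ne_zero) |>.mp h'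
  have hqcast : (q : K) = 2 * (k : K) + 1 := by rw [hk]; push_cast; ring
  have h2 : (2 : K) ≠ 0 := by
    intro h2'
    have : (0 : K) = 1 := by rw [← hqK, hqcast, h2']; ring
    exact one_ne_zero this.symm
  have hneg : (-1 : K) ≠ 1 := by
    intro h'
    exact h2 (by linear_combination -h')
  -- the key second statement
  have H2 : ∀ x : K, x ≠ 0 → x ^ (2 * q - 2) ≠ -t := by
    intro x hx heq
    have hpow : x ^ (q ^ 2 - 1) = 1 := by
      rw [← hK]; exact FiniteField.pow_card_sub_one_eq_one x hx
    have hq2' : q ^ 2 = 4 * k ^ 2 + 4 * k + 1 := by rw [hk]; ring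
    have harith : (2 * q - 2) * (k + 1) = q ^ 2 - 1 := by
      have h1 : 2 * q - 2 = 4 * k := by omega
      rw [h1, hq2']; ring_nf; omega
    have key : (-t) ^ (k + 1) = 1 := by
      calc (-t) ^ (k + 1) = (x ^ (2 * q - 2)) ^ (k + 1) := by rw [heq]
        _ = x ^ ((2 * q - 2) * (k + 1)) := (pow_mul x _ _).symm
        _ = x ^ (q ^ 2 - 1) := by rw [harith]
        _ = 1 := hpow
    have hnq : (-t) ^ q = -t := by
      rw [Odd.neg_pow ⟨k, hk⟩, htq]
    have ht2 : t ^ 2 = 1 := by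
      calc t ^ 2 = (-t) * (-t) := by ring
        _ = (-t) ^ q * (-t) ^ 1 := by rw [hnq, pow_one]
        _ = (-t) ^ (q + 1) := (pow_add _ _ _).symm
        _ = (-t) ^ (2 * (k + 1)) := by congr 1; omega
        _ = ((-t) ^ (k + 1)) ^ 2 := by rw [← pow_mul, mul_comm]
        _ = 1 := by rw [key, one_pow]
    rcases h with ⟨ht, hq4⟩ | ⟨ht, _⟩ | ⟨ht, _⟩
    · -- t = 1, q ≡ 1 mod 4, so k+1 is odd
      have hkodd : Odd (k + 1) := ⟨k / 2, by omega⟩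
      rw [ht] at key
      rw [Odd.neg_one_pow hkodd] at key
      exact hneg key
    · -- t = -3 : t^2 = 9 = 1 forces 8 = 0
      rw [ht] at ht2
      have h8 : (2 : K) ^ 3 = 0 := by linear_combination ht2
      exact h2 (pow_eq_zero_iff (by norm_num) |>.mp h8)
    · rw [ht] at ht2
      have h8 : (2 : K) ^ 3 = 0 := by linear_combination ht2
      exact h2 (pow_eq_zero_iff (by norm_num) |>.mp h8)
  refine ⟨?_, H2⟩
  intro x hx heq
  apply H2 x hx
  have hpow : x ^ (q ^ 2 - 1) = 1 := by
    rw [← hK]; exact FiniteField.pow_card_sub_one_eq_one x hx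
  have hge : q + 1 ≤ q ^ 2 := by nlinarith
  have e1 : x ^ q * x ^ (q - 2) = x ^ (2 * q - 2) := by
    rw [← pow_add]; congr 1; omega
  have e2 : x ^ q * x ^ (q ^ 2 - q - 1) = x ^ (q ^ 2 - 1) := by
    rw [← pow_add]; congr 1
    generalize q ^ 2 = Q at hge ⊢
    omega
  have : x ^ q * (x ^ (q - 2) + t * x ^ (q ^ 2 - q - 1)) = 0 := by rw [heq, mul_zero]
  rw [mul_add, e1, ← mul_assoc, mul_comm (x ^ q) t, mul_assoc, e2, hpow, mul_one] at this
  linear_combination this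
end
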